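/- arXiv:2505.19826 — 13 statements merged into one kernel-verified Lean document; each statement's English description precedes it below -/
import Mathlib

section
/- Under the quantum entropy axioms and the decoding condition, for every subset I of the coded-qudit indices with |I| = n − (d−1), the mutual information between the reference system and the complementary coded qudits vanishes: H({R}) + H(Q_{I^c}) − H({R} ∪ Q_{I^c}) = 0. -/
/-- Under the quantum entropy axioms and the decoding condition,
for every subset `I` of the coded-qudit indices with `|I| = n − (d−1)`,
the mutual information between the reference system `R` (index `0`) and the
complementary coded qudits vanishes. -/
theorem stmt_0 (n k d : ℕ) (hn : 1 ≤ n) (hk : 1 ≤ k) (hd : 1 ≤ d) (hdn : d - 1 ≤ n)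
    (H : Finset (Fin (n + 1)) → ℝ)
    (hempty : H ∅ = 0)
    (hsubadd : ∀ A B : Finset (Fin (n + 1)), Disjoint A B → H (A ∪ B) ≤ H A + H B)
    (hwm : ∀ A B : Finset (Fin (n + 1)), H (A \ B) + H (B \ A) ≤ H A + H B)
    (hR : H {0} = (k : ℝ))
    (hdec : ∀ I : Finset (Fin (n + 1)), (0 : Fin (n + 1)) ∉ I → I.card = n - (d - 1) →
      H {0} + H I - H (insert 0 I) = 2 * (k : ℝ)) :
    ∀ I : Finset (Fin (n + 1)), (0 : Fin (n + 1)) ∉ I → I.card = n - (d - 1) →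
      H {0} + H ((Finset.univ \ {0}) \ I) - H (insert 0 ((Finset.univ \ {0}) \ I)) = 0 := by
  intro I h0I hcard
  set J := (Finset.univ \ {0}) \ I with hJ
  have h0J : (0 : Fin (n + 1)) ∉ J := by simp [hJ]
  have hdI := hdec I h0I hcard
  have h1 : H (insert 0 J) ≤ H {0} + H J := by
    have hdisj : Disjoint ({0} : Finset (Fin (n + 1))) J := by
      simpa using h0J
    have := hsubadd {0} J hdisj
    rwa [← Finset.insert_eq] at this
  have e1 : (insert 0 I) \ (insert 0 J) = I := by
    ext x
    simp only [Finset.mem_sdiff, Finset.mem_insert, hJ, Finset.mem_univ,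
      Finset.mem_singleton, true_and, not_or]
    constructor
    · rintro ⟨hx | hx, hne, hni⟩
      · exact absurd hx hne
      · exact hx
    · intro hx
      refine ⟨Or.inr hx, fun h => h0I (h ▸ hx), fun h => h.2 hx⟩
  have e2 : (insert 0 J) \ (insert 0 I) = J := by
    ext x
    simp only [Finset.mem_sdiff, Finset.mem_insert, not_or]
    constructor
    · rintro ⟨hx | hx, hne, hni⟩
      · exact absurd hx hne
      · exact hx
    · intro hx
      have hxI : x ∉ I := by
        rw [hJ] at hx
        exact (Finset.mem_sdiff.mp hx).2
      refine ⟨Or.inr hx, fun h => h0J (h ▸ hx), hxI⟩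
  have h2 : H I + H J ≤ H (insert 0 I) + H (insert 0 J) := by
    have := hwm (insert 0 I) (insert 0 J)
    rwa [e1, e2] at this
  linarith
end

section
/- For a quantum MDS code (n = k + 2(d−1)), any collection of at most k coded qudits and any disjoint collection of at most d−1 coded qudits are in a product state: for disjoint K_1, K_2 ⊆ {1,…,n} with |K_1| ≤ k and |K_2| ≤ d−1, one has H(Q_{K_1}) + H(Q_{K_2}) = H(Q_{K_1} ∪ Q_{K_2}). -/
/-- for an MDS code, any ≤ k coded qudits and any disjoint ≤ d−1 coded qudits are in a product state. -/
theorem stmt_2 (k d n : ℕ) (hk : 1 ≤ k) (hd : 2 ≤ d) (hn : n = k + 2 * (d - 1))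
    (H : Finset (Fin (n + 1)) → ℝ)
    (hempty : H ∅ = 0)
    (hsubadd : ∀ A B : Finset (Fin (n + 1)), Disjoint A B → H (A ∪ B) ≤ H A + H B)
    (hssa : ∀ A B : Finset (Fin (n + 1)), H (A ∪ B) + H (A ∩ B) ≤ H A + H B)
    (hwm : ∀ A B : Finset (Fin (n + 1)), H (A \ B) + H (B \ A) ≤ H A + H B)
    (hdim : ∀ i : Fin (n + 1), i ≠ 0 → H {i} ≤ 1)
    (hR : H {0} = (k : ℝ))
    (hdec : ∀ I : Finset (Fin (n + 1)), (0 : Fin (n + 1)) ∉ I → I.card = n - (d - 1) →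
      H {0} + H I - H (insert 0 I) = 2 * (k : ℝ)) :
    ∀ K₁ K₂ : Finset (Fin (n + 1)), (0 : Fin (n + 1)) ∉ K₁ → (0 : Fin (n + 1)) ∉ K₂ →
      Disjoint K₁ K₂ → K₁.card ≤ k → K₂.card ≤ d - 1 →
      H K₁ + H K₂ = H (K₁ ∪ K₂) := by
  intro K₁ K₂ hK₁0 hK₂0 hK12 hcard1 hcard2
  set m := d - 1 with hm_def
  have hm : 1 ≤ m := by omega
  have hnm : n = k + 2 * m := hn
  -- card bound : H X ≤ |X| for sets of qudits
  have hcb : ∀ X : Finset (Fin (n + 1)), (0 : Fin (n + 1)) ∉ X → H X ≤ (X.card : ℝ) := by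
    intro X
    induction X using Finset.induction_on with
    | empty => intro _; simp [hempty]
    | @insert a s ha ih =>
      intro h0
      have ha0 : a ≠ 0 := fun h => h0 (by simp [h])
      have hs0 : (0 : Fin (n + 1)) ∉ s := fun h => h0 (Finset.mem_insert_of_mem h)
      have hd1 : Disjoint ({a} : Finset (Fin (n + 1))) s := by simp [ha]
      have h1 : H (insert a s) ≤ H {a} + H s := by
        rw [Finset.insert_eq]; exact hsubadd _ _ hd1
      have h2 := hdim a ha0
      have h3 := ih hs0
      have h4 : ((insert a s).card : ℝ) = s.card + 1 := by
        rw [Finset.card_insert_of_notMem ha]; push_cast; ring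
      rw [h4]; linarith
  -- correctable sets
  have hcor : ∀ I : Finset (Fin (n + 1)), (0 : Fin (n + 1)) ∉ I → I.card = k + m →
      H (insert 0 I) = H I - k := by
    intro I h0 hc
    have := hdec I h0 (by omega)
    linarith [this, hR]
  -- mutual information monotonicity from SSA
  have hmono : ∀ X Y Z : Finset (Fin (n + 1)), Disjoint Z Y →
      H ((X ∪ Z) ∪ Y) + H X ≤ H (X ∪ Z) + H (X ∪ Y) := by
    intro X Y Z hZY
    have hZY' : ∀ a : Fin (n + 1), a ∈ Z → a ∈ Y → False :=
      fun a ha hb => (Finset.disjoint_left.mp hZY ha) hb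
    have h := hssa (X ∪ Z) (X ∪ Y)
    have h1 : (X ∪ Z) ∪ (X ∪ Y) = (X ∪ Z) ∪ Y := by
      ext a; simp only [Finset.mem_union]; tauto
    have h2 : (X ∪ Z) ∩ (X ∪ Y) = X := by
      ext a
      simp only [Finset.mem_inter, Finset.mem_union]
      constructor
      · rintro ⟨h | h, h' | h'⟩ <;> first | exact h | exact h' | exact absurd (hZY' a h h') id
      · tauto
    rw [h1, h2] at h
    exact h
  -- the product statement for full-size blocks
  have hprod : ∀ A B : Finset (Fin (n + 1)), (0 : Fin (n + 1)) ∉ A → (0 : Fin (n + 1)) ∉ B →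
      Disjoint A B → A.card = k → B.card = m → H (A ∪ B) = H A + H B := by
    intro A B hA0 hB0 hAB hAc hBc
    set Ω : Finset (Fin (n + 1)) := Finset.univ \ {0} with hΩ_def
    have hΩcard : Ω.card = n := by
      rw [hΩ_def, Finset.card_sdiff_of_subset (Finset.singleton_subset_iff.mpr (Finset.mem_univ _))]
      simp
    have hAΩ : A ⊆ Ω := fun a haA => by
      simp only [hΩ_def, Finset.mem_sdiff, Finset.mem_univ, Finset.mem_singleton, true_and]
      exact fun h => hA0 (h ▸ haA)
    have hBΩ : B ⊆ Ω := fun a haB => by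
      simp only [hΩ_def, Finset.mem_sdiff, Finset.mem_univ, Finset.mem_singleton, true_and]
      exact fun h => hB0 (h ▸ haB)
    set C : Finset (Fin (n + 1)) := Ω \ (A ∪ B) with hC_def
    have hABsub : A ∪ B ⊆ Ω := Finset.union_subset hAΩ hBΩ
    have hABcard : (A ∪ B).card = k + m := by
      rw [Finset.card_union_of_disjoint hAB, hAc, hBc]
    have hCcard : C.card = m := by
      rw [hC_def, Finset.card_sdiff_of_subset hABsub, hΩcard, hABcard]; omega
    have hC0 : (0 : Fin (n + 1)) ∉ C := fun h => by
      have := Finset.mem_sdiff.mp h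
      simp [hΩ_def] at this
    have hAC : Disjoint A C := by
      rw [hC_def]
      exact Finset.disjoint_sdiff.mono_left Finset.subset_union_left
    have hBC : Disjoint B C := by
      rw [hC_def]
      exact Finset.disjoint_sdiff.mono_left Finset.subset_union_right
    have hACcard : (A ∪ C).card = k + m := by
      rw [Finset.card_union_of_disjoint hAC, hAc, hCcard]
    have hAC0 : (0 : Fin (n + 1)) ∉ A ∪ C := by
      simp only [Finset.mem_union]; rintro (h | h); exacts [hA0 h, hC0 h]
    have hAB0 : (0 : Fin (n + 1)) ∉ A ∪ B := by
      simp only [Finset.mem_union]; rintro (h | h); exacts [hA0 h, hB0 h]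
    have h2 := hcor (A ∪ C) hAC0 hACcard
    have h1 := hcor (A ∪ B) hAB0 hABcard
    -- weak monotonicity: H(A∪C) + H(B) ≤ H({0}∪A∪C) + H({0}∪B)
    have h4 := hwm (insert 0 (A ∪ C)) (insert 0 B)
    have hdisjACB : ∀ a : Fin (n + 1), a ∈ A ∪ C → a ∈ B → False := by
      intro a ha hb
      rcases Finset.mem_union.mp ha with h | h
      · exact Finset.disjoint_left.mp hAB h hb
      · exact Finset.disjoint_left.mp hBC hb h
    have e1 : insert 0 (A ∪ C) \ insert 0 B = A ∪ C := by
      ext a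
      simp only [Finset.mem_sdiff, Finset.mem_insert, Finset.mem_union]
      constructor
      · rintro ⟨h | h, h'⟩
        · exact absurd (Or.inl h) h'
        · exact h
      · rintro h
        refine ⟨Or.inr h, ?_⟩
        rintro (h' | h')
        · exact hAC0 (h' ▸ Finset.mem_union.mpr h)
        · exact hdisjACB a (Finset.mem_union.mpr h) h'
    have e2 : insert 0 B \ insert 0 (A ∪ C) = B := by
      ext a
      simp only [Finset.mem_sdiff, Finset.mem_insert, Finset.mem_union]
      constructor
      · rintro ⟨h | h, h'⟩
        · exact absurd (Or.inl h) h'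
        · exact h
      · rintro h
        refine ⟨Or.inr h, ?_⟩
        rintro (h' | h' | h')
        · exact hB0 (h' ▸ h)
        · exact Finset.disjoint_left.mp hAB h' h
        · exact Finset.disjoint_left.mp hBC h h'
    rw [e1, e2, h2] at h4
    -- weak monotonicity: H({0}∪B) ≤ H({0}∪A∪B) + H(A)
    have h6 := hwm (insert 0 (A ∪ B)) A
    have e3 : insert 0 (A ∪ B) \ A = insert 0 B := by
      ext a
      simp only [Finset.mem_sdiff, Finset.mem_insert, Finset.mem_union]
      constructor
      · rintro ⟨h | ⟨h | h⟩, h'⟩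
        · exact Or.inl h
        · exact absurd h h'
        · exact Or.inr h
      · rintro (h | h)
        · exact ⟨Or.inl h, fun h' => hA0 (h ▸ h')⟩
        · exact ⟨Or.inr (Or.inr h), fun h' => Finset.disjoint_left.mp hAB h' h⟩
    have e4 : A \ insert 0 (A ∪ B) = ∅ := by
      ext a
      simp only [Finset.mem_sdiff, Finset.mem_insert, Finset.mem_union, Finset.notMem_empty,
        iff_false, not_and, not_not]
      intro h
      exact Or.inr (Or.inl h)
    rw [e3, e4, hempty, h1] at h6
    have h5 := hsubadd A B hAB
    have hAk : H A ≤ (k : ℝ) := by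
      have := hcb A hA0
      rwa [hAc] at this
    linarith
  -- extend K₁ to A and K₂ to B
  set Ω : Finset (Fin (n + 1)) := Finset.univ \ {0} with hΩ_def
  have hΩcard : Ω.card = n := by
    rw [hΩ_def, Finset.card_sdiff_of_subset (Finset.singleton_subset_iff.mpr (Finset.mem_univ _))]
    simp
  have hK₁Ω : K₁ ⊆ Ω := fun a haA => by
    simp only [hΩ_def, Finset.mem_sdiff, Finset.mem_univ, Finset.mem_singleton, true_and]
    exact fun h => hK₁0 (h ▸ haA)
  have hK₂Ω : K₂ ⊆ Ω := fun a haB => by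
    simp only [hΩ_def, Finset.mem_sdiff, Finset.mem_univ, Finset.mem_singleton, true_and]
    exact fun h => hK₂0 (h ▸ haB)
  have hK₁sub : K₁ ⊆ Ω \ K₂ := by
    intro a ha
    exact Finset.mem_sdiff.mpr ⟨hK₁Ω ha, fun h => Finset.disjoint_left.mp hK12 ha h⟩
  have hcard1' : k ≤ (Ω \ K₂).card := by
    rw [Finset.card_sdiff_of_subset hK₂Ω, hΩcard]; omega
  obtain ⟨A, hK₁A, hAsub, hAcard⟩ := Finset.exists_subsuperset_card_eq hK₁sub hcard1 hcard1'
  have hA0 : (0 : Fin (n + 1)) ∉ A := fun h => by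
    have := Finset.mem_sdiff.mp (hAsub h)
    simp [hΩ_def] at this
  have hAΩ : A ⊆ Ω := fun a ha => (Finset.mem_sdiff.mp (hAsub ha)).1
  have hAK₂ : Disjoint A K₂ := by
    rw [Finset.disjoint_left]
    exact fun a ha hb => (Finset.mem_sdiff.mp (hAsub ha)).2 hb
  have hK₂sub : K₂ ⊆ Ω \ A := by
    intro a ha
    exact Finset.mem_sdiff.mpr ⟨hK₂Ω ha, fun h => Finset.disjoint_left.mp hAK₂ h ha⟩
  have hcard2' : m ≤ (Ω \ A).card := by
    rw [Finset.card_sdiff_of_subset hAΩ, hΩcard, hAcard]; omega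
  obtain ⟨B, hK₂B, hBsub, hBcard⟩ := Finset.exists_subsuperset_card_eq hK₂sub hcard2 hcard2'
  have hB0 : (0 : Fin (n + 1)) ∉ B := fun h => by
    have := Finset.mem_sdiff.mp (hBsub h)
    simp [hΩ_def] at this
  have hABd : Disjoint A B := by
    rw [Finset.disjoint_right]
    exact fun a hb ha => (Finset.mem_sdiff.mp (hBsub hb)).2 ha
  have hP := hprod A B hA0 hB0 hABd hAcard hBcard
  -- monotonicity steps
  have s1 := hmono K₁ K₂ (A \ K₁) (hAK₂.mono_left (Finset.sdiff_subset))
  rw [Finset.union_sdiff_of_subset hK₁A] at s1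
  -- s1 : H (A ∪ K₂) + H K₁ ≤ H A + H (K₁ ∪ K₂)
  have s2 := hmono K₂ A (B \ K₂) ((hABd.symm).mono_left (Finset.sdiff_subset))
  rw [Finset.union_sdiff_of_subset hK₂B] at s2
  -- s2 : H (B ∪ A) + H K₂ ≤ H B + H (K₂ ∪ A)
  rw [Finset.union_comm B A, Finset.union_comm K₂ A] at s2
  have s3 := hsubadd K₁ K₂ hK12
  linarith
end

section
/- For a quantum MDS code (n = k + 2(d−1)), any collection of at most k coded qudits is in a full product state: for every K ⊆ {1,…,n} with |K| ≤ k, H(Q_K) = Σ_{i ∈ K} H({Q_i}). -/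
private lemma subadd_sum {m : ℕ} (H : Finset (Fin m) → ℝ)
    (hempty : H ∅ = 0)
    (hsubadd : ∀ A B : Finset (Fin m), Disjoint A B → H (A ∪ B) ≤ H A + H B) :
    ∀ X : Finset (Fin m), H X ≤ ∑ i ∈ X, H {i} := by
  intro X
  induction X using Finset.induction_on with
  | empty => simp [hempty]
  | @insert a s has ih =>
    have hd : Disjoint {a} s := Finset.disjoint_singleton_left.mpr has
    calc H (insert a s) = H ({a} ∪ s) := by rw [Finset.insert_eq]
      _ ≤ H {a} + H s := hsubadd _ _ hd
      _ ≤ H {a} + ∑ i ∈ s, H {i} := by linarith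
      _ = ∑ i ∈ insert a s, H {i} := by rw [Finset.sum_insert has]

/-- any ≤ k coded qudits are in a full product state. -/
theorem stmt_3 (k d n : ℕ) (hk : 1 ≤ k) (hd : 2 ≤ d) (hn : n = k + 2 * (d - 1))
    (H : Finset (Fin (n + 1)) → ℝ)
    (hempty : H ∅ = 0)
    (hsubadd : ∀ A B : Finset (Fin (n + 1)), Disjoint A B → H (A ∪ B) ≤ H A + H B)
    (hssa : ∀ A B : Finset (Fin (n + 1)), H (A ∪ B) + H (A ∩ B) ≤ H A + H B)
    (hwm : ∀ A B : Finset (Fin (n + 1)), H (A \ B) + H (B \ A) ≤ H A + H B)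
    (hdim : ∀ i : Fin (n + 1), i ≠ 0 → H {i} ≤ 1)
    (hR : H {0} = (k : ℝ))
    (hdec : ∀ I : Finset (Fin (n + 1)), (0 : Fin (n + 1)) ∉ I → I.card = n - (d - 1) →
      H {0} + H I - H (insert 0 I) = 2 * (k : ℝ)) :
    ∀ K : Finset (Fin (n + 1)), (0 : Fin (n + 1)) ∉ K → K.card ≤ k →
      H K = ∑ i ∈ K, H {i} := by
  have core : ∀ E A B : Finset (Fin (n + 1)),
      (0 : Fin (n + 1)) ∉ E → (0 : Fin (n + 1)) ∉ A → (0 : Fin (n + 1)) ∉ B →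
      Disjoint A E → Disjoint B E → Disjoint A B →
      E.card = k → A.card = d - 1 → B.card = d - 1 → (k : ℝ) ≤ H E := by
    intro E A B h0E h0A h0B hAE hBE hAB hEc hAc hBc
    have hAE' : ∀ x, x ∈ A → x ∉ E := fun x hx => Finset.disjoint_left.mp hAE hx
    have hBE' : ∀ x, x ∈ B → x ∉ E := fun x hx => Finset.disjoint_left.mp hBE hx
    have hAB' : ∀ x, x ∈ A → x ∉ B := fun x hx => Finset.disjoint_left.mp hAB hx
    have h0AE : (0 : Fin (n + 1)) ∉ A ∪ E := by simp [h0A, h0E]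
    have hAEc : (A ∪ E).card = n - (d - 1) := by
      rw [Finset.card_union_of_disjoint hAE]; omega
    have F1 := hdec (A ∪ E) h0AE hAEc
    have h0BE : (0 : Fin (n + 1)) ∉ B ∪ E := by simp [h0B, h0E]
    have hBEc : (B ∪ E).card = n - (d - 1) := by
      rw [Finset.card_union_of_disjoint hBE]; omega
    have F2 := hdec (B ∪ E) h0BE hBEc
    have e1 : (insert 0 (B ∪ E)) \ (insert 0 A) = B ∪ E := by
      ext x
      simp only [Finset.mem_sdiff, Finset.mem_insert, Finset.mem_union]
      constructor
      · rintro ⟨h1 | h1, h2⟩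
        · exact absurd (Or.inl h1) h2
        · exact h1
      · rintro (h1 | h1)
        · exact ⟨Or.inr (Or.inl h1), by
            rintro (rfl | hx)
            · exact h0B h1
            · exact hAB' x hx h1⟩
        · exact ⟨Or.inr (Or.inr h1), by
            rintro (rfl | hx)
            · exact h0E h1
            · exact hAE' x hx h1⟩
    have e2 : (insert 0 A) \ (insert 0 (B ∪ E)) = A := by
      ext x
      simp only [Finset.mem_sdiff, Finset.mem_insert, Finset.mem_union]
      constructor
      · rintro ⟨h1 | h1, h2⟩
        · exact absurd (Or.inl h1) h2
        · exact h1
      · intro h1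
        exact ⟨Or.inr h1, by
          rintro (rfl | hx | hx)
          · exact h0A h1
          · exact hAB' x h1 hx
          · exact hAE' x h1 hx⟩
    have F3 := hwm (insert 0 (B ∪ E)) (insert 0 A)
    rw [e1, e2] at F3
    have F4 := hsubadd {0} A (Finset.disjoint_singleton_left.mpr h0A)
    rw [← Finset.insert_eq] at F4
    have e3 : (insert 0 (A ∪ E)) \ E = insert 0 A := by
      ext x
      simp only [Finset.mem_sdiff, Finset.mem_insert, Finset.mem_union]
      constructor
      · rintro ⟨h1 | h1 | h1, h2⟩
        · exact Or.inl h1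
        · exact Or.inr h1
        · exact absurd h1 h2
      · rintro (rfl | h1)
        · exact ⟨Or.inl rfl, h0E⟩
        · exact ⟨Or.inr (Or.inl h1), hAE' x h1⟩
    have e4 : E \ (insert 0 (A ∪ E)) = (∅ : Finset (Fin (n + 1))) := by
      ext x
      simp only [Finset.mem_sdiff, Finset.mem_insert, Finset.mem_union,
        Finset.notMem_empty, iff_false, not_and, not_not]
      intro hx
      exact Or.inr (Or.inr hx)
    have F5 := hwm (insert 0 (A ∪ E)) E
    rw [e3, e4, hempty] at F5
    have F6 := hsubadd A E hAE
    linarith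
  -- main argument
  intro K h0K hKk
  classical
  set U : Finset (Fin (n + 1)) := Finset.univ.erase 0 with hU
  have hUc : U.card = n := by
    rw [hU, Finset.card_erase_of_mem (Finset.mem_univ _), Finset.card_univ,
      Fintype.card_fin]
    omega
  have hKU : K ⊆ U := by
    intro x hx
    refine Finset.mem_erase.mpr ⟨?_, Finset.mem_univ x⟩
    rintro rfl; exact h0K hx
  obtain ⟨E, hKE, hEU, hEc⟩ :=
    Finset.exists_subsuperset_card_eq hKU hKk (by omega)
  have hUEc : (U \ E).card = 2 * (d - 1) := by
    rw [Finset.card_sdiff_of_subset hEU]; omega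
  obtain ⟨A, hAsub, hAc⟩ :=
    Finset.exists_subset_card_eq (show d - 1 ≤ (U \ E).card by omega)
  set B : Finset (Fin (n + 1)) := (U \ E) \ A with hB
  have hBsub : B ⊆ U \ E := Finset.sdiff_subset
  have hBc : B.card = d - 1 := by
    rw [hB, Finset.card_sdiff_of_subset hAsub]; omega
  have hAE : Disjoint A E :=
    Finset.disjoint_left.mpr fun _ hx => (Finset.mem_sdiff.mp (hAsub hx)).2
  have hBE : Disjoint B E :=
    Finset.disjoint_left.mpr fun _ hx => (Finset.mem_sdiff.mp (hBsub hx)).2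
  have hAB : Disjoint A B := disjoint_sdiff_self_right
  have h0U : ∀ x : Fin (n + 1), x ∈ U → x ≠ 0 := fun x hx => (Finset.mem_erase.mp hx).1
  have h0E : (0 : Fin (n + 1)) ∉ E := fun h => h0U 0 (hEU h) rfl
  have h0A : (0 : Fin (n + 1)) ∉ A := fun h =>
    h0U 0 (Finset.mem_sdiff.mp (hAsub h)).1 rfl
  have h0B : (0 : Fin (n + 1)) ∉ B := fun h =>
    h0U 0 (Finset.mem_sdiff.mp (hBsub h)).1 rfl
  have hkE : (k : ℝ) ≤ H E := core E A B h0E h0A h0B hAE hBE hAB hEc hAc hBc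
  have hE_le : H E ≤ ∑ i ∈ E, H {i} := subadd_sum H hempty hsubadd E
  have hdimE : ∀ i ∈ E, H {i} ≤ 1 := fun i hi => hdim i (h0U i (hEU hi))
  have hsum_le : ∑ i ∈ E, H {i} ≤ (k : ℝ) := by
    calc ∑ i ∈ E, H {i} ≤ ∑ _i ∈ E, (1 : ℝ) := Finset.sum_le_sum hdimE
      _ = (E.card : ℝ) := by simp
      _ = (k : ℝ) := by rw [hEc]
  have hsumk : ∑ i ∈ E, H {i} = (k : ℝ) :=
    le_antisymm hsum_le (hkE.trans hE_le)
  have hone : ∀ i ∈ E, H {i} = 1 := by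
    intro i hi
    by_contra hne
    have hlt : H {i} < 1 := lt_of_le_of_ne (hdimE i hi) hne
    have : ∑ j ∈ E, H {j} < ∑ _j ∈ E, (1 : ℝ) :=
      Finset.sum_lt_sum hdimE ⟨i, hi, hlt⟩
    rw [hsumk] at this
    simp [hEc] at this
  -- conclude
  have hsplit := hsubadd K (E \ K) disjoint_sdiff_self_right
  rw [Finset.union_sdiff_of_subset hKE] at hsplit
  have h1 : H (E \ K) ≤ ∑ i ∈ E \ K, H {i} := subadd_sum H hempty hsubadd _
  have h2 : ∑ i ∈ E \ K, H {i} = ((E \ K).card : ℝ) := by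
    rw [Finset.sum_congr rfl fun i hi => hone i (Finset.mem_sdiff.mp hi).1]
    simp
  have h3 : ∑ i ∈ K, H {i} = (K.card : ℝ) := by
    rw [Finset.sum_congr rfl fun i hi => hone i (hKE hi)]
    simp
  have h4 : ((E \ K).card : ℝ) = (k : ℝ) - (K.card : ℝ) := by
    rw [Finset.card_sdiff_of_subset hKE, hEc, Nat.cast_sub hKk]
  have hK_le : H K ≤ ∑ i ∈ K, H {i} := subadd_sum H hempty hsubadd K
  linarith [hkE, hsplit, h1]
end

section
/- For a quantum MDS code (n = k + 2(d−1)), every single coded qudit is maximally mixed: H({Q_i}) = 1 for all i ∈ {1,…,n}. -/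
/-- every single coded qudit is maximally mixed. -/
theorem stmt_4 (k d n : ℕ) (hk : 1 ≤ k) (hd : 2 ≤ d) (hn : n = k + 2 * (d - 1))
    (H : Finset (Fin (n + 1)) → ℝ)
    (hempty : H ∅ = 0)
    (hsubadd : ∀ A B : Finset (Fin (n + 1)), Disjoint A B → H (A ∪ B) ≤ H A + H B)
    (hssa : ∀ A B : Finset (Fin (n + 1)), H (A ∪ B) + H (A ∩ B) ≤ H A + H B)
    (hwm : ∀ A B : Finset (Fin (n + 1)), H (A \ B) + H (B \ A) ≤ H A + H B)
    (hdim : ∀ i : Fin (n + 1), i ≠ 0 → H {i} ≤ 1)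
    (hR : H {0} = (k : ℝ))
    (hdec : ∀ I : Finset (Fin (n + 1)), (0 : Fin (n + 1)) ∉ I → I.card = n - (d - 1) →
      H {0} + H I - H (insert 0 I) = 2 * (k : ℝ)) :
    ∀ i : Fin (n + 1), i ≠ 0 → H {i} = 1 := by
  intro i hi
  have he1 : 1 ≤ d - 1 := by omega
  set e := d - 1 with he
  -- Araki-Lieb type inequality from weak monotonicity
  have hAL : ∀ A B : Finset (Fin (n+1)), Disjoint A B → H A ≤ H (A ∪ B) + H B := by
    intro A B hAB
    have h := hwm (A ∪ B) B
    have h1 : (A ∪ B) \ B = A := by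
      rw [Finset.union_sdiff_right]
      exact hAB.sdiff_eq_left
    have h2 : B \ (A ∪ B) = ∅ := Finset.sdiff_eq_empty_iff_subset.mpr Finset.subset_union_right
    rw [h1, h2, hempty] at h
    linarith
  -- removing one qudit changes the "conditional" quantity by at most 2 H {j}
  have hstep : ∀ (X : Finset (Fin (n+1))) (j : Fin (n+1)), j ∈ X → (0:Fin (n+1)) ∉ X →
      H X - H (insert 0 X) ≤ H (X.erase j) - H (insert 0 (X.erase j)) + 2 * H {j} := by
    intro X j hj h0
    have hj0 : j ≠ 0 := by rintro rfl; exact h0 hj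
    have hdisj : Disjoint (X.erase j) ({j} : Finset (Fin (n+1))) := by
      simp [Finset.disjoint_singleton_right]
    have hu : X.erase j ∪ {j} = X := by
      rw [Finset.union_comm, ← Finset.insert_eq, Finset.insert_erase hj]
    have sub1 : H X ≤ H (X.erase j) + H {j} := by
      have h := hsubadd (X.erase j) {j} hdisj
      rwa [hu] at h
    have hdisj2 : Disjoint (insert 0 (X.erase j)) ({j} : Finset (Fin (n+1))) := by
      simp [Finset.disjoint_singleton_right, hj0]
    have hu2 : insert 0 (X.erase j) ∪ {j} = insert 0 X := by
      rw [Finset.union_comm, ← Finset.insert_eq, Finset.insert_comm,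
        Finset.insert_erase hj]
    have sub2 : H (insert 0 (X.erase j)) ≤ H (insert 0 X) + H {j} := by
      have h := hAL (insert 0 (X.erase j)) {j} hdisj2
      rwa [hu2] at h
    linarith
  -- small sets (≤ d-1 qudits) are decoupled from R
  have hsmall : ∀ X : Finset (Fin (n+1)), (0:Fin (n+1)) ∉ X → X.card ≤ e →
      (k:ℝ) + H X - H (insert 0 X) ≤ 0 := by
    intro X h0 hcard
    have hins : (insert 0 X).card = X.card + 1 := Finset.card_insert_of_notMem h0
    have hTcard : n - e ≤ ((Finset.univ : Finset (Fin (n+1))) \ insert 0 X).card := by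
      rw [Finset.card_sdiff_of_subset (Finset.subset_univ _), Finset.card_univ, Fintype.card_fin, hins]
      omega
    obtain ⟨J, hJsub, hJcard⟩ := Finset.exists_subset_card_eq hTcard
    have hJ0 : (0:Fin (n+1)) ∉ J := by
      intro h
      have h' := hJsub h
      simp [Finset.mem_sdiff] at h'
    have hJX : ∀ a ∈ J, a ∉ X := by
      intro a ha
      have h' := hJsub ha
      simp [Finset.mem_sdiff] at h'
      exact h'.2
    have hdecJ := hdec J hJ0 hJcard
    have hwmJ := hwm (insert 0 X) (insert 0 J)
    have e1 : insert 0 X \ insert 0 J = X := by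
      ext a
      simp only [Finset.mem_sdiff, Finset.mem_insert, not_or]
      constructor
      · rintro ⟨h1 | h1, h2⟩
        · exact absurd h1 h2.1
        · exact h1
      · intro ha
        refine ⟨Or.inr ha, ?_, fun hJ => hJX a hJ ha⟩
        rintro rfl
        exact h0 ha
    have e2 : insert 0 J \ insert 0 X = J := by
      ext a
      simp only [Finset.mem_sdiff, Finset.mem_insert, not_or]
      constructor
      · rintro ⟨h1 | h1, h2⟩
        · exact absurd h1 h2.1
        · exact h1
      · intro ha
        refine ⟨Or.inr ha, ?_, fun hX => hJX a ha hX⟩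
        rintro rfl
        exact hJ0 ha
    rw [e1, e2] at hwmJ
    rw [hR] at hdecJ
    linarith
  -- induction: f(X) ≤ 2 s for |X| = (d-1) + s
  have key : ∀ s : ℕ, ∀ X : Finset (Fin (n+1)), (0:Fin (n+1)) ∉ X → X.card = e + s →
      (k:ℝ) + H X - H (insert 0 X) ≤ 2 * s := by
    intro s
    induction s with
    | zero =>
      intro X h0 hc
      simpa using hsmall X h0 (le_of_eq hc)
    | succ s ih =>
      intro X h0 hc
      have hX : X.Nonempty := by rw [← Finset.card_pos]; omega
      obtain ⟨j, hj⟩ := hX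
      have hj0 : j ≠ 0 := by rintro rfl; exact h0 hj
      have h1 := hstep X j hj h0
      have h2 := ih (X.erase j) (fun h => h0 (Finset.mem_of_mem_erase h))
        (by rw [Finset.card_erase_of_mem hj]; omega)
      have h3 : H {j} ≤ 1 := hdim j hj0
      push_cast
      push_cast at h2
      linarith
  -- choose a decoding set J containing i
  have hTcard2 : k + e - 1 ≤ (((Finset.univ : Finset (Fin (n+1))).erase 0).erase i).card := by
    rw [Finset.card_erase_of_mem (Finset.mem_erase.mpr ⟨hi, Finset.mem_univ i⟩),
      Finset.card_erase_of_mem (Finset.mem_univ 0), Finset.card_univ, Fintype.card_fin]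
    omega
  obtain ⟨J', hJ'sub, hJ'card⟩ := Finset.exists_subset_card_eq hTcard2
  have hiJ' : i ∉ J' := by
    intro h
    exact (Finset.mem_erase.mp (hJ'sub h)).1 rfl
  have h0J' : (0:Fin (n+1)) ∉ J' := by
    intro h
    exact (Finset.mem_erase.mp (Finset.mem_of_mem_erase (hJ'sub h))).1 rfl
  have h0J : (0:Fin (n+1)) ∉ insert i J' := by
    simp only [Finset.mem_insert, not_or]
    exact ⟨fun h => hi h.symm, h0J'⟩
  have hJcard : (insert i J').card = n - (d - 1) := by
    rw [Finset.card_insert_of_notMem hiJ']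
    omega
  have hdecJ := hdec (insert i J') h0J hJcard
  rw [hR] at hdecJ
  have hiJ : i ∈ insert i J' := Finset.mem_insert_self i J'
  have h1 := hstep (insert i J') i hiJ h0J
  have h2 := key (k - 1) ((insert i J').erase i) (fun h => h0J (Finset.mem_of_mem_erase h))
    (by rw [Finset.card_erase_of_mem hiJ, hJcard]; omega)
  have h3 : H {i} ≤ 1 := hdim i hi
  have hcast : ((k - 1 : ℕ) : ℝ) = (k:ℝ) - 1 := by
    have : (1:ℕ) ≤ k := hk
    push_cast [this]
    ring
  rw [hcast] at h2
  linarith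
end

section
/- For a quantum MDS code (n = k + 2(d−1)), every subset of coded qudits of size at most k + d − 1 is maximally mixed: for all I ⊆ {1,…,n} with |I| ≤ k + d − 1, H(Q_I) = |I|. -/
/-- every subset of coded qudits of size at most k + d − 1 is maximally mixed. -/
theorem stmt_5 (k d n : ℕ) (hk : 1 ≤ k) (hd : 2 ≤ d) (hn : n = k + 2 * (d - 1))
    (H : Finset (Fin (n + 1)) → ℝ)
    (hempty : H ∅ = 0)
    (hsubadd : ∀ A B : Finset (Fin (n + 1)), Disjoint A B → H (A ∪ B) ≤ H A + H B)
    (hssa : ∀ A B : Finset (Fin (n + 1)), H (A ∪ B) + H (A ∩ B) ≤ H A + H B)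
    (hwm : ∀ A B : Finset (Fin (n + 1)), H (A \ B) + H (B \ A) ≤ H A + H B)
    (hdim : ∀ i : Fin (n + 1), i ≠ 0 → H {i} ≤ 1)
    (hR : H {0} = (k : ℝ))
    (hdec : ∀ I : Finset (Fin (n + 1)), (0 : Fin (n + 1)) ∉ I → I.card = n - (d - 1) →
      H {0} + H I - H (insert 0 I) = 2 * (k : ℝ)) :
    ∀ I : Finset (Fin (n + 1)), (0 : Fin (n + 1)) ∉ I → I.card ≤ k + d - 1 →
      H I = (I.card : ℝ) := by
  classical
  -- abbreviation
  set e := d - 1 with he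
  have he1 : 1 ≤ e := by omega
  have hne : n = k + 2 * e := hn
  -- the set of qudit labels
  set U : Finset (Fin (n + 1)) := Finset.univ.erase 0 with hUdef
  have hUcard : U.card = n := by
    rw [hUdef, Finset.card_erase_of_mem (Finset.mem_univ 0), Finset.card_univ]
    simp
  have hsubU : ∀ X : Finset (Fin (n + 1)), 0 ∉ X → X ⊆ U := by
    intro X h0 x hx
    rw [hUdef, Finset.mem_erase]
    exact ⟨fun hx0 => h0 (hx0 ▸ hx), Finset.mem_univ x⟩
  have hUn0 : ∀ x : Fin (n + 1), x ∈ U → x ≠ 0 := by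
    intro x hx
    rw [hUdef, Finset.mem_erase] at hx
    exact hx.1
  -- extension lemma
  have hext : ∀ (X : Finset (Fin (n + 1))) (c : ℕ), 0 ∉ X → X.card ≤ c → c ≤ n →
      ∃ J, X ⊆ J ∧ 0 ∉ J ∧ J.card = c := by
    intro X c h0 h1 h2
    obtain ⟨J, hXJ, hJU, hJc⟩ :=
      Finset.exists_subsuperset_card_eq (hsubU X h0) h1 (by rw [hUcard]; exact h2)
    exact ⟨J, hXJ, fun hc => (hUn0 0 (hJU hc)) rfl, hJc⟩
  -- basic set identities
  have ins_sdiff : ∀ X Y : Finset (Fin (n + 1)), 0 ∉ X →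
      insert 0 X \ insert 0 Y = X \ Y := by
    intro X Y h0
    ext x
    simp only [Finset.mem_sdiff, Finset.mem_insert, not_or]
    constructor
    · rintro ⟨hx0 | hxX, hne0, hnY⟩
      · exact absurd hx0 hne0
      · exact ⟨hxX, hnY⟩
    · rintro ⟨hxX, hnY⟩
      exact ⟨Or.inr hxX, fun hx0 => h0 (hx0 ▸ hxX), hnY⟩
  have ins_union : ∀ X Y : Finset (Fin (n + 1)),
      insert 0 X ∪ insert 0 Y = insert 0 (X ∪ Y) := by
    intro X Y; ext x
    simp only [Finset.mem_union, Finset.mem_insert]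
    tauto
  have ins_inter : ∀ X Y : Finset (Fin (n + 1)),
      insert 0 X ∩ insert 0 Y = insert 0 (X ∩ Y) := by
    intro X Y; ext x
    simp only [Finset.mem_inter, Finset.mem_insert]
    tauto
  -- upper bound : H X ≤ |X|
  have hub : ∀ X : Finset (Fin (n + 1)), 0 ∉ X → H X ≤ (X.card : ℝ) := by
    intro X
    induction X using Finset.induction_on with
    | empty => intro _; simp [hempty]
    | @insert a s ha ih =>
      intro h0
      have ha0 : a ≠ 0 := fun h => h0 (h ▸ Finset.mem_insert_self a s)
      have hs0 : 0 ∉ s := fun h => h0 (Finset.mem_insert_of_mem h)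
      have hdisj : Disjoint ({a} : Finset (Fin (n + 1))) s :=
        Finset.disjoint_singleton_left.mpr ha
      have h1 : H (insert a s) ≤ H {a} + H s := by
        have := hsubadd {a} s hdisj
        rwa [← Finset.insert_eq] at this
      have h2 : H {a} ≤ 1 := hdim a ha0
      have h3 := ih hs0
      rw [Finset.card_insert_of_notMem ha]
      push_cast
      linarith
  -- Araki-Lieb with 0 : H X ≤ H (insert 0 X) + k
  have hAL0 : ∀ X : Finset (Fin (n + 1)), 0 ∉ X → H X ≤ H (insert 0 X) + (k : ℝ) := by
    intro X h0
    have h := hwm (insert 0 X) {0}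
    have h1 : insert 0 X \ {0} = X := by
      rw [Finset.sdiff_singleton_eq_erase, Finset.erase_insert h0]
    have h2 : ({0} : Finset (Fin (n + 1))) \ insert 0 X = ∅ := by
      rw [Finset.sdiff_eq_empty_iff_subset]
      exact Finset.singleton_subset_iff.mpr (Finset.mem_insert_self 0 X)
    rw [h1, h2, hempty, hR] at h
    linarith
  -- Araki-Lieb : H A ≤ H (A ∪ K) + H K for disjoint A K
  have hALK : ∀ A K : Finset (Fin (n + 1)), Disjoint A K → H A ≤ H (A ∪ K) + H K := by
    intro A K hdisj
    have h := hwm (A ∪ K) K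
    have h1 : (A ∪ K) \ K = A := by
      rw [Finset.union_sdiff_right, Finset.sdiff_eq_self_iff_disjoint]
      exact hdisj
    have h2 : K \ (A ∪ K) = ∅ := by
      rw [Finset.sdiff_eq_empty_iff_subset]
      exact Finset.subset_union_right
    rw [h1, h2, hempty] at h
    linarith
  -- decoding identity
  have hdecH : ∀ J : Finset (Fin (n + 1)), 0 ∉ J → J.card = k + e →
      H (insert 0 J) = H J - (k : ℝ) := by
    intro J h0 hc
    have h := hdec J h0 (by omega)
    rw [hR] at h
    linarith
  -- E5 : H C ≥ k for |C| = k
  have hE5 : ∀ C : Finset (Fin (n + 1)), 0 ∉ C → C.card = k → (k : ℝ) ≤ H C := by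
    intro C h0 hc
    have hCU : C ⊆ U := hsubU C h0
    have hWcard : (U \ C).card = 2 * e := by
      rw [Finset.card_sdiff_of_subset hCU, hUcard]; omega
    obtain ⟨A, hAW, hAcard⟩ := Finset.exists_subset_card_eq
      (s := U \ C) (n := e) (by omega)
    set B := (U \ C) \ A with hBdef
    have hBcard : B.card = e := by
      rw [hBdef, Finset.card_sdiff_of_subset hAW, hWcard, hAcard]; omega
    have hAmem : ∀ x, x ∈ A → x ∉ C ∧ x ≠ 0 ∧ x ∉ B := by
      intro x hx
      have hxW := hAW hx
      rw [Finset.mem_sdiff] at hxW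
      refine ⟨hxW.2, hUn0 x hxW.1, ?_⟩
      rw [hBdef, Finset.mem_sdiff]
      tauto
    have hBmem : ∀ x, x ∈ B → x ∉ C ∧ x ≠ 0 ∧ x ∉ A := by
      intro x hx
      rw [hBdef, Finset.mem_sdiff, Finset.mem_sdiff] at hx
      exact ⟨hx.1.2, hUn0 x hx.1.1, hx.2⟩
    have h0A : 0 ∉ A := fun h => (hAmem 0 h).2.1 rfl
    have h0B : 0 ∉ B := fun h => (hBmem 0 h).2.1 rfl
    have hdCA : Disjoint C A := Finset.disjoint_right.mpr fun x hx => (hAmem x hx).1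
    have hdCB : Disjoint C B := Finset.disjoint_right.mpr fun x hx => (hBmem x hx).1
    have h0J1 : 0 ∉ C ∪ A := by
      rw [Finset.mem_union]; tauto
    have h0J2 : 0 ∉ C ∪ B := by
      rw [Finset.mem_union]; tauto
    have hJ1card : (C ∪ A).card = k + e := by
      rw [Finset.card_union_of_disjoint hdCA, hc, hAcard]
    have hJ2card : (C ∪ B).card = k + e := by
      rw [Finset.card_union_of_disjoint hdCB, hc, hBcard]
    have idA : insert 0 (C ∪ A) \ insert 0 (C ∪ B) = A := by
      rw [ins_sdiff _ _ h0J1]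
      ext x
      simp only [Finset.mem_sdiff, Finset.mem_union, not_or]
      constructor
      · rintro ⟨hC | hA, hnC, hnB⟩
        · exact absurd hC hnC
        · exact hA
      · intro hx
        exact ⟨Or.inr hx, (hAmem x hx).1, (hAmem x hx).2.2⟩
    have idB : insert 0 (C ∪ B) \ insert 0 (C ∪ A) = B := by
      rw [ins_sdiff _ _ h0J2]
      ext x
      simp only [Finset.mem_sdiff, Finset.mem_union, not_or]
      constructor
      · rintro ⟨hC | hB, hnC, hnA⟩
        · exact absurd hC hnC
        · exact hB
      · intro hx
        exact ⟨Or.inr hx, (hBmem x hx).1, (hBmem x hx).2.2⟩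
    have hw := hwm (insert 0 (C ∪ A)) (insert 0 (C ∪ B))
    rw [idA, idB, hdecH _ h0J1 hJ1card, hdecH _ h0J2 hJ2card] at hw
    have hs1 := hsubadd C A hdCA
    have hs2 := hsubadd C B hdCB
    linarith
  -- E6 : H D ≥ |D| for |D| ≤ k
  have hE6 : ∀ D : Finset (Fin (n + 1)), 0 ∉ D → D.card ≤ k → (D.card : ℝ) ≤ H D := by
    intro D h0 hDk
    obtain ⟨C, hDC, h0C, hCcard⟩ := hext D k h0 hDk (by omega)
    have hdisj : Disjoint D (C \ D) := Finset.disjoint_sdiff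
    have hunion : D ∪ (C \ D) = C := Finset.union_sdiff_of_subset hDC
    have h0CD : 0 ∉ C \ D := fun h => h0C (Finset.mem_sdiff.mp h).1
    have h1 := hsubadd D (C \ D) hdisj
    rw [hunion] at h1
    have h2 : H (C \ D) ≤ ((C \ D).card : ℝ) := hub _ h0CD
    have h3 : (C \ D).card = k - D.card := by
      rw [Finset.card_sdiff_of_subset hDC, hCcard]
    have h4 : (k : ℝ) ≤ H C := hE5 C h0C hCcard
    have h5 : ((C \ D).card : ℝ) = (k : ℝ) - (D.card : ℝ) := by
      rw [h3]
      push_cast [Nat.cast_sub hDk]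
      ring
    linarith
  -- E8' : H (insert 0 T) ≥ H T + k for |T| ≤ e
  have hE8 : ∀ T : Finset (Fin (n + 1)), 0 ∉ T → T.card ≤ e →
      H T + (k : ℝ) ≤ H (insert 0 T) := by
    intro T h0 hTc
    have hTU : T ⊆ U := hsubU T h0
    have hcompl : k + e ≤ (U \ T).card := by
      rw [Finset.card_sdiff_of_subset hTU, hUcard]; omega
    obtain ⟨F, hFW, hFcard⟩ := Finset.exists_subset_card_eq hcompl
    have hFmem : ∀ x, x ∈ F → x ∉ T ∧ x ≠ 0 := by
      intro x hx
      have := hFW hx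
      rw [Finset.mem_sdiff] at this
      exact ⟨this.2, hUn0 x this.1⟩
    have h0F : 0 ∉ F := fun h => (hFmem 0 h).2 rfl
    have idT : insert 0 T \ insert 0 F = T := by
      rw [ins_sdiff _ _ h0]
      rw [Finset.sdiff_eq_self_iff_disjoint]
      exact Finset.disjoint_right.mpr fun x hx => (hFmem x hx).1
    have idF : insert 0 F \ insert 0 T = F := by
      rw [ins_sdiff _ _ h0F]
      rw [Finset.sdiff_eq_self_iff_disjoint]
      exact Finset.disjoint_left.mpr fun x hx => (hFmem x hx).1
    have hw := hwm (insert 0 T) (insert 0 F)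
    rw [idT, idF, hdecH _ h0F hFcard] at hw
    linarith
  -- Lemma 5 (case k ≤ e) : H (T ∪ K) ≥ H T + k for |T| = e, |K| = k disjoint
  have hL5 : k ≤ e → ∀ T K : Finset (Fin (n + 1)), 0 ∉ T → 0 ∉ K → Disjoint T K →
      T.card = e → K.card = k → H T + (k : ℝ) ≤ H (T ∪ K) := by
    intro hke T K h0T h0K hTK hTc hKc
    have h0B : 0 ∉ T ∪ K := by rw [Finset.mem_union]; tauto
    have hBU : T ∪ K ⊆ U := hsubU _ h0B
    have hBcard : (T ∪ K).card = k + e := by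
      rw [Finset.card_union_of_disjoint hTK, hTc, hKc]; omega
    have hcompl : k ≤ (U \ (T ∪ K)).card := by
      rw [Finset.card_sdiff_of_subset hBU, hUcard, hBcard]; omega
    obtain ⟨K', hK'W, hK'card⟩ := Finset.exists_subset_card_eq hcompl
    have hK'mem : ∀ x, x ∈ K' → x ∉ T ∧ x ∉ K ∧ x ≠ 0 := by
      intro x hx
      have := hK'W hx
      rw [Finset.mem_sdiff, Finset.mem_union, not_or] at this
      exact ⟨this.2.1, this.2.2, hUn0 x this.1⟩
    have h0K' : 0 ∉ K' := fun h => (hK'mem 0 h).2.2 rfl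
    have hTK' : Disjoint T K' := Finset.disjoint_right.mpr fun x hx => (hK'mem x hx).1
    have hKK' : Disjoint K K' := Finset.disjoint_right.mpr fun x hx => (hK'mem x hx).2.1
    set A := T ∪ K' with hAdef
    set B := T ∪ K with hBdef
    have h0A : 0 ∉ A := by rw [hAdef, Finset.mem_union]; tauto
    have hAcard : A.card = k + e := by
      rw [hAdef, Finset.card_union_of_disjoint hTK', hTc, hK'card]; omega
    -- G = A ∪ K
    set G := A ∪ K with hGdef
    have h0G : 0 ∉ G := by rw [hGdef, Finset.mem_union]; tauto
    have hdAK : Disjoint A K := by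
      rw [hAdef, Finset.disjoint_union_left]
      exact ⟨hTK, hKK'.symm⟩
    have hABG : A ∪ B = G := by
      rw [hGdef, hAdef, hBdef]
      ext x
      simp only [Finset.mem_union]
      tauto
    have hABT : A ∩ B = T := by
      rw [hAdef, hBdef]
      ext x
      simp only [Finset.mem_inter, Finset.mem_union]
      constructor
      · rintro ⟨hT | hK', hT' | hK⟩
        · exact hT
        · exact hT
        · exact hT'
        · exact absurd hK ((hK'mem x hK').2.1)
      · intro hx; exact ⟨Or.inl hx, Or.inl hx⟩
    -- SSA on insert 0 A, insert 0 B
    have hs := hssa (insert 0 A) (insert 0 B)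
    rw [ins_union, ins_inter, hABG, hABT, hdecH _ h0A hAcard, hdecH _ h0B hBcard] at hs
    have h1 : H G ≤ H (insert 0 G) + (k : ℝ) := hAL0 G h0G
    have h2 : H A ≤ H G + H K := by
      have := hALK A K hdAK
      rw [← hGdef] at this
      exact this
    have h3 : H K ≤ (k : ℝ) := by
      have := hub K h0K
      rw [hKc] at this
      exact this
    have h4 : H T + (k : ℝ) ≤ H (insert 0 T) := hE8 T h0T (by omega)
    linarith
  -- lower bound, case k ≤ e
  have mainA : k ≤ e → ∀ m : ℕ, m ≤ k + e → ∀ P : Finset (Fin (n + 1)), 0 ∉ P →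
      P.card = m → (m : ℝ) ≤ H P := by
    intro hke m
    induction m using Nat.strong_induction_on with
    | _ m ih =>
      intro hm P h0P hPc
      by_cases hmk : m ≤ k
      · have := hE6 P h0P (by omega)
        rw [hPc] at this
        exact this
      · push_neg at hmk
        -- choose W ⊆ P with |W| = m - k
        obtain ⟨W, hWP, hWcard⟩ := Finset.exists_subset_card_eq
          (s := P) (n := m - k) (by omega)
        have hPU : P ⊆ U := hsubU P h0P
        have hcompl : k + e - m ≤ (U \ P).card := by
          rw [Finset.card_sdiff_of_subset hPU, hUcard, hPc]; omega
        obtain ⟨E, hEW, hEcard⟩ := Finset.exists_subset_card_eq hcompl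
        have hEmem : ∀ x, x ∈ E → x ∉ P ∧ x ≠ 0 := by
          intro x hx
          have := hEW hx
          rw [Finset.mem_sdiff] at this
          exact ⟨this.2, hUn0 x this.1⟩
        have h0E : 0 ∉ E := fun h => (hEmem 0 h).2 rfl
        have h0W : 0 ∉ W := fun h => h0P (hWP h)
        have hdEW : Disjoint E W := Finset.disjoint_left.mpr
          fun x hx hxW => (hEmem x hx).1 (hWP hxW)
        set T := E ∪ W with hTdef
        set K := P \ W with hKdef
        have h0T : 0 ∉ T := by rw [hTdef, Finset.mem_union]; tauto
        have h0K : 0 ∉ K := fun h => h0P (Finset.mem_sdiff.mp h).1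
        have hTc : T.card = e := by
          rw [hTdef, Finset.card_union_of_disjoint hdEW, hEcard, hWcard]; omega
        have hKc : K.card = k := by
          rw [hKdef, Finset.card_sdiff_of_subset hWP, hPc, hWcard]; omega
        have hdTK : Disjoint T K := by
          rw [hTdef, Finset.disjoint_union_left]
          constructor
          · exact Finset.disjoint_left.mpr
              fun x hx hxK => (hEmem x hx).1 (Finset.mem_sdiff.mp hxK).1
          · exact Finset.disjoint_left.mpr
              fun x hx hxK => (Finset.mem_sdiff.mp hxK).2 hx
        have hPT_union : P ∪ T = T ∪ K := by
          rw [hTdef, hKdef]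
          ext x
          simp only [Finset.mem_union, Finset.mem_sdiff]
          constructor
          · rintro (hP | hE | hW)
            · by_cases hxW : x ∈ W
              · exact Or.inl (Or.inr hxW)
              · exact Or.inr ⟨hP, hxW⟩
            · exact Or.inl (Or.inl hE)
            · exact Or.inl (Or.inr hW)
          · rintro ((hE | hW) | ⟨hP, _⟩)
            · exact Or.inr (Or.inl hE)
            · exact Or.inl (hWP hW)
            · exact Or.inl hP
        have hPT_inter : P ∩ T = W := by
          rw [hTdef]
          ext x
          simp only [Finset.mem_inter, Finset.mem_union]
          constructor
          · rintro ⟨hP, hE | hW⟩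
            · exact absurd hP (hEmem x hE).1
            · exact hW
          · intro hx; exact ⟨hWP hx, Or.inr hx⟩
        have hs := hssa P T
        rw [hPT_union, hPT_inter] at hs
        have h5 := hL5 hke T K h0T h0K hdTK hTc hKc
        have hIH : ((m - k : ℕ) : ℝ) ≤ H W := ih (m - k) (by omega) (by omega) W h0W hWcard
        have hcast : ((m - k : ℕ) : ℝ) = (m : ℝ) - (k : ℝ) := by
          push_cast [Nat.cast_sub (le_of_lt hmk)]
          ring
        rw [hcast] at hIH
        linarith
  -- lower bound for decoding sets, case e ≤ k
  have mainB : e ≤ k → ∀ J : Finset (Fin (n + 1)), 0 ∉ J → J.card = k + e →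
      ((k + e : ℕ) : ℝ) ≤ H J := by
    intro hek J h0J hJc
    have hJU : J ⊆ U := hsubU J h0J
    set M := U \ J with hMdef
    have hMcard : M.card = e := by
      rw [hMdef, Finset.card_sdiff_of_subset hJU, hUcard, hJc]; omega
    have hMmem : ∀ x, x ∈ M → x ∉ J ∧ x ≠ 0 := by
      intro x hx
      rw [hMdef, Finset.mem_sdiff] at hx
      exact ⟨hx.2, hUn0 x hx.1⟩
    have h0M : 0 ∉ M := fun h => (hMmem 0 h).2 rfl
    obtain ⟨D, hDJ, hDcard⟩ := Finset.exists_subset_card_eq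
      (s := J) (n := e) (by omega)
    have h0D : 0 ∉ D := fun h => h0J (hDJ h)
    set J' := (J \ D) ∪ M with hJ'def
    have h0J' : 0 ∉ J' := by
      rw [hJ'def, Finset.mem_union, Finset.mem_sdiff]
      tauto
    have hdisj' : Disjoint (J \ D) M := Finset.disjoint_left.mpr
      fun x hx hxM => (hMmem x hxM).1 (Finset.mem_sdiff.mp hx).1
    have hJ'card : J'.card = k + e := by
      rw [hJ'def, Finset.card_union_of_disjoint hdisj', Finset.card_sdiff_of_subset hDJ,
        hJc, hDcard, hMcard]
      omega
    have idD : insert 0 J \ insert 0 J' = D := by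
      rw [ins_sdiff _ _ h0J, hJ'def]
      ext x
      simp only [Finset.mem_sdiff, Finset.mem_union, not_or, Finset.mem_sdiff]
      constructor
      · rintro ⟨hJx, hnJD, _⟩
        by_cases hxD : x ∈ D
        · exact hxD
        · exact absurd ⟨hJx, hxD⟩ hnJD
      · intro hx
        refine ⟨hDJ hx, fun h => h.2 hx, fun h => (hMmem x h).1 (hDJ hx)⟩
    have idM : insert 0 J' \ insert 0 J = M := by
      rw [ins_sdiff _ _ h0J', hJ'def]
      ext x
      simp only [Finset.mem_sdiff, Finset.mem_union, Finset.mem_sdiff]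
      constructor
      · rintro ⟨hJD | hM, hnJ⟩
        · exact absurd hJD.1 hnJ
        · exact hM
      · intro hx
        exact ⟨Or.inr hx, (hMmem x hx).1⟩
    have hw := hwm (insert 0 J) (insert 0 J')
    rw [idD, idM, hdecH _ h0J hJc, hdecH _ h0J' hJ'card] at hw
    have h1 : (D.card : ℝ) ≤ H D := hE6 D h0D (by omega)
    have h2 : (M.card : ℝ) ≤ H M := hE6 M h0M (by omega)
    have h3 : H J' ≤ (J'.card : ℝ) := hub J' h0J'
    rw [hDcard] at h1
    rw [hMcard] at h2
    rw [hJ'card] at h3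
    push_cast at h1 h2 h3 ⊢
    linarith
  -- conclusion
  intro I hI0 hIcard
  have hIce : I.card ≤ k + e := by omega
  have hup : H I ≤ (I.card : ℝ) := hub I hI0
  have hlow : (I.card : ℝ) ≤ H I := by
    by_cases hke : k ≤ e
    · exact mainA hke I.card hIce I hI0 rfl
    · push_neg at hke
      obtain ⟨J, hIJ, h0J, hJc⟩ := hext I (k + e) hI0 hIce (by omega)
      have hJlow := mainB (by omega) J h0J hJc
      have hdisj : Disjoint I (J \ I) := Finset.disjoint_sdiff
      have hunion : I ∪ (J \ I) = J := Finset.union_sdiff_of_subset hIJ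
      have h1 := hsubadd I (J \ I) hdisj
      rw [hunion] at h1
      have h0JI : 0 ∉ J \ I := fun h => h0J (Finset.mem_sdiff.mp h).1
      have h2 : H (J \ I) ≤ ((J \ I).card : ℝ) := hub _ h0JI
      have h3 : (J \ I).card = k + e - I.card := by
        rw [Finset.card_sdiff_of_subset hIJ, hJc]
      have h4 : ((J \ I).card : ℝ) = ((k + e : ℕ) : ℝ) - (I.card : ℝ) := by
        rw [h3]
        push_cast [Nat.cast_sub hIce]
        ring
      linarith
  linarith
end

section
/- For a quantum MDS code (n = k + 2(d−1)), for every I ⊆ {1,…,n} with |I| ≤ d − 1, the reference system together with Q_I is maximally mixed: H({R} ∪ Q_I) = k + |I|. -/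
/-- for |I| ≤ d − 1, the reference system together with Q_I is maximally mixed. -/
theorem stmt_6 (k d n : ℕ) (hk : 1 ≤ k) (hd : 2 ≤ d) (hn : n = k + 2 * (d - 1))
    (H : Finset (Fin (n + 1)) → ℝ)
    (hempty : H ∅ = 0)
    (hsubadd : ∀ A B : Finset (Fin (n + 1)), Disjoint A B → H (A ∪ B) ≤ H A + H B)
    (hssa : ∀ A B : Finset (Fin (n + 1)), H (A ∪ B) + H (A ∩ B) ≤ H A + H B)
    (hwm : ∀ A B : Finset (Fin (n + 1)), H (A \ B) + H (B \ A) ≤ H A + H B)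
    (hdim : ∀ i : Fin (n + 1), i ≠ 0 → H {i} ≤ 1)
    (hR : H {0} = (k : ℝ))
    (hdec : ∀ I : Finset (Fin (n + 1)), (0 : Fin (n + 1)) ∉ I → I.card = n - (d - 1) →
      H {0} + H I - H (insert 0 I) = 2 * (k : ℝ)) :
    ∀ I : Finset (Fin (n + 1)), (0 : Fin (n + 1)) ∉ I → I.card ≤ d - 1 →
      H (insert 0 I) = (k : ℝ) + (I.card : ℝ) := by
  set e := d - 1 with he
  have he1 : 1 ≤ e := by omega
  have hne : n - e = k + e := by omega
  have hken : k + e ≤ n := by omega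
  -- the set of qudits
  set Q : Finset (Fin (n + 1)) := Finset.univ.erase 0 with hQ
  have hQcard : Q.card = n := by
    rw [hQ, Finset.card_erase_of_mem (Finset.mem_univ _), Finset.card_univ]
    simp
  have hmemQ : ∀ {x : Fin (n + 1)}, x ∈ Q ↔ x ≠ 0 := by
    intro x; rw [hQ]; simp
  have hsubQ : ∀ {A : Finset (Fin (n + 1))}, (0 : Fin (n+1)) ∉ A → A ⊆ Q := by
    intro A h0 x hx
    rw [hmemQ]; rintro rfl; exact h0 hx
  -- L1: triangle
  have hL1 : ∀ A B : Finset (Fin (n + 1)), Disjoint A B → H A ≤ H (A ∪ B) + H B := by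
    intro A B hAB
    have h := hwm (A ∪ B) B
    have h1 : (A ∪ B) \ B = A := by
      rw [Finset.union_sdiff_right]
      exact Finset.sdiff_eq_self_of_disjoint hAB
    have h2 : B \ (A ∪ B) = ∅ := by
      simp [Finset.sdiff_eq_empty_iff_subset]
    rw [h1, h2, hempty] at h
    linarith
  -- SB: subadd+dim bound
  have hSB : ∀ A : Finset (Fin (n + 1)), (0 : Fin (n+1)) ∉ A → H A ≤ (A.card : ℝ) := by
    intro A
    induction A using Finset.induction_on with
    | empty => intro _; simp [hempty]
    | @insert a A ha ih =>
      intro h0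
      have ha0 : a ≠ 0 := by rintro rfl; exact h0 (Finset.mem_insert_self _ _)
      have h0A : (0 : Fin (n+1)) ∉ A := fun h => h0 (Finset.mem_insert_of_mem h)
      have hd1 : Disjoint ({a} : Finset (Fin (n+1))) A := by
        simp [Finset.disjoint_left, ha]
      have hs := hsubadd {a} A hd1
      have hins : ({a} : Finset (Fin (n+1))) ∪ A = insert a A := by
        rw [Finset.insert_eq]
      rw [hins] at hs
      have hcard : ((insert a A).card : ℝ) = (A.card : ℝ) + 1 := by
        rw [Finset.card_insert_of_notMem ha]; push_cast; ring
      have := hdim a ha0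
      have := ih h0A
      rw [hcard]
      linarith
  -- decoding equality rephrased
  have hdec' : ∀ J : Finset (Fin (n + 1)), (0 : Fin (n+1)) ∉ J → J.card = n - e →
      H (insert 0 J) = H J - (k : ℝ) := by
    intro J h0 hc
    have := hdec J h0 hc
    rw [hR] at this
    linarith
  -- L2
  have hL2 : ∀ X : Finset (Fin (n + 1)), (0 : Fin (n+1)) ∉ X → X.card ≤ e →
      H (insert 0 X) = H X + (k : ℝ) := by
    intro X h0 hXe
    have hXQ : X ⊆ Q := hsubQ h0
    -- find decoding J disjoint from X
    have hcards : n - e ≤ (Q \ X).card := by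
      rw [Finset.card_sdiff_of_subset hXQ, hQcard]; omega
    obtain ⟨J, hJsub, hJcard⟩ := Finset.exists_subset_card_eq (s := Q \ X) (n := n - e) hcards
    have hJ0 : (0 : Fin (n+1)) ∉ J := by
      intro h; have := hJsub h
      rw [Finset.mem_sdiff, hmemQ] at this
      exact this.1 rfl
    have hJX : ∀ {x}, x ∈ J → x ∉ X := by
      intro x hx; have := hJsub hx
      rw [Finset.mem_sdiff] at this; exact this.2
    have hdJ := hdec' J hJ0 hJcard
    -- upper bound
    have hup : H (insert 0 X) ≤ H X + (k : ℝ) := by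
      have hdisj : Disjoint ({0} : Finset (Fin (n+1))) X := by
        simp [Finset.disjoint_left, h0]
      have := hsubadd {0} X hdisj
      rw [Finset.insert_eq, ← hR]; linarith
    -- lower bound via wm
    have hw := hwm (insert 0 X) (insert 0 J)
    have hs1 : (insert 0 X) \ (insert 0 J) = X := by
      ext x
      simp only [Finset.mem_sdiff, Finset.mem_insert]
      constructor
      · rintro ⟨h1 | h1, h2⟩
        · exact absurd (Or.inl h1) h2
        · exact h1
      · intro hx
        refine ⟨Or.inr hx, ?_⟩
        rintro (rfl | hxJ)
        · exact h0 hx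
        · exact hJX hxJ hx
    have hs2 : (insert 0 J) \ (insert 0 X) = J := by
      ext x
      simp only [Finset.mem_sdiff, Finset.mem_insert]
      constructor
      · rintro ⟨h1 | h1, h2⟩
        · exact absurd (Or.inl h1) h2
        · exact h1
      · intro hx
        refine ⟨Or.inr hx, ?_⟩
        rintro (rfl | hxX)
        · exact hJ0 hx
        · exact hJX hx hxX
    rw [hs1, hs2, hdJ] at hw
    linarith
  -- L3
  have hL3 : ∀ X : Finset (Fin (n + 1)), (0 : Fin (n+1)) ∉ X → n - e ≤ X.card →
      H (insert 0 X) = H X - (k : ℝ) := by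
    intro X h0 hXc
    obtain ⟨J, hJsub, hJcard⟩ := Finset.exists_subset_card_eq (s := X) (n := n - e) hXc
    have hJ0 : (0 : Fin (n+1)) ∉ J := fun h => h0 (hJsub h)
    have hdJ := hdec' J hJ0 hJcard
    -- lower bound: triangle
    have hlow : H X - (k : ℝ) ≤ H (insert 0 X) := by
      have hdisj : Disjoint X ({0} : Finset (Fin (n+1))) := by
        simp [Finset.disjoint_right, h0]
      have h1 := hL1 X {0} hdisj
      have hins : X ∪ ({0} : Finset (Fin (n+1))) = insert 0 X := by
        rw [Finset.union_comm, ← Finset.insert_eq]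
      rw [hins, hR] at h1
      linarith
    -- upper bound: ssa
    have hs := hssa (insert 0 J) X
    have hu : (insert 0 J) ∪ X = insert 0 X := by
      ext x
      simp only [Finset.mem_union, Finset.mem_insert]
      constructor
      · rintro (⟨rfl | hx⟩ | hx)
        · exact Or.inl rfl
        · exact Or.inr (hJsub hx)
        · exact Or.inr hx
      · rintro (rfl | hx)
        · exact Or.inl (Or.inl rfl)
        · exact Or.inr hx
    have hi : (insert 0 J) ∩ X = J := by
      ext x
      simp only [Finset.mem_inter, Finset.mem_insert]
      constructor
      · rintro ⟨rfl | hx, hx2⟩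
        · exact absurd hx2 h0
        · exact hx
      · intro hx
        exact ⟨Or.inr hx, hJsub hx⟩
    rw [hu, hi, hdJ] at hs
    linarith
  -- L4
  have hL4 : ∀ Y : Finset (Fin (n + 1)), (0 : Fin (n+1)) ∉ Y → e ≤ Y.card →
      H Y + (k : ℝ) - 2 * ((Y.card : ℝ) - (e : ℝ)) ≤ H (insert 0 Y) := by
    intro Y h0 hYe
    obtain ⟨Y', hY'sub, hY'card⟩ := Finset.exists_subset_card_eq (s := Y) (n := e) hYe
    have hY'0 : (0 : Fin (n+1)) ∉ Y' := fun h => h0 (hY'sub h)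
    have h2 := hL2 Y' hY'0 (le_of_eq hY'card)
    have hsd0 : (0 : Fin (n+1)) ∉ Y \ Y' := fun h => h0 (Finset.mem_sdiff.mp h).1
    have hsdcard : ((Y \ Y').card : ℝ) = (Y.card : ℝ) - (e : ℝ) := by
      rw [Finset.card_sdiff_of_subset hY'sub, hY'card]
      have : e ≤ Y.card := hYe
      push_cast [Nat.cast_sub this]
      ring
    have hsb : H (Y \ Y') ≤ (Y.card : ℝ) - (e : ℝ) := by
      have := hSB (Y \ Y') hsd0
      rw [hsdcard] at this; exact this
    -- a: H (insert 0 Y') ≤ H (insert 0 Y) + H (Y \ Y')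
    have hdisj : Disjoint (insert 0 Y') (Y \ Y') := by
      rw [Finset.disjoint_left]
      intro x hx hx2
      rw [Finset.mem_insert] at hx
      rw [Finset.mem_sdiff] at hx2
      rcases hx with rfl | hx
      · exact h0 hx2.1
      · exact hx2.2 hx
    have hun : (insert 0 Y') ∪ (Y \ Y') = insert 0 Y := by
      ext x
      simp only [Finset.mem_union, Finset.mem_insert, Finset.mem_sdiff]
      constructor
      · rintro (⟨rfl | hx⟩ | ⟨hx, _⟩)
        · exact Or.inl rfl
        · exact Or.inr (hY'sub hx)
        · exact Or.inr hx
      · rintro (rfl | hx)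
        · exact Or.inl (Or.inl rfl)
        · by_cases hxY' : x ∈ Y'
          · exact Or.inl (Or.inr hxY')
          · exact Or.inr ⟨hx, hxY'⟩
    have ha := hL1 (insert 0 Y') (Y \ Y') hdisj
    rw [hun] at ha
    -- d: H Y ≤ H Y' + H (Y \ Y')
    have hdisj2 : Disjoint Y' (Y \ Y') := by
      rw [Finset.disjoint_left]
      intro x hx hx2
      exact (Finset.mem_sdiff.mp hx2).2 hx
    have hun2 : Y' ∪ (Y \ Y') = Y := Finset.union_sdiff_of_subset hY'sub
    have hdd := hsubadd Y' (Y \ Y') hdisj2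
    rw [hun2] at hdd
    linarith
  -- L5
  have hL5 : ∀ X Y : Finset (Fin (n + 1)), (0 : Fin (n+1)) ∉ X → Y ⊆ X → e ≤ Y.card →
      X.card = k + e → H Y + ((X.card : ℝ) - (Y.card : ℝ)) ≤ H X := by
    intro X Y h0X hYX hYe hXc
    have h0Y : (0 : Fin (n+1)) ∉ Y := fun h => h0X (hYX h)
    have h4 := hL4 Y h0Y hYe
    have h3 := hL3 X h0X (by omega)
    have hsd0 : (0 : Fin (n+1)) ∉ X \ Y := fun h => h0X (Finset.mem_sdiff.mp h).1
    have hYle : Y.card ≤ X.card := Finset.card_le_card hYX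
    have hsdcard : ((X \ Y).card : ℝ) = (X.card : ℝ) - (Y.card : ℝ) := by
      rw [Finset.card_sdiff_of_subset hYX]
      push_cast [Nat.cast_sub hYle]
      ring
    have hsb : H (X \ Y) ≤ (X.card : ℝ) - (Y.card : ℝ) := by
      have := hSB (X \ Y) hsd0
      rw [hsdcard] at this; exact this
    have hdisj : Disjoint (insert 0 Y) (X \ Y) := by
      rw [Finset.disjoint_left]
      intro x hx hx2
      rw [Finset.mem_insert] at hx
      rw [Finset.mem_sdiff] at hx2
      rcases hx with rfl | hx
      · exact h0X hx2.1
      · exact hx2.2 hx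
    have hun : (insert 0 Y) ∪ (X \ Y) = insert 0 X := by
      ext x
      simp only [Finset.mem_union, Finset.mem_insert, Finset.mem_sdiff]
      constructor
      · rintro (⟨rfl | hx⟩ | ⟨hx, _⟩)
        · exact Or.inl rfl
        · exact Or.inr (hYX hx)
        · exact Or.inr hx
      · rintro (rfl | hx)
        · exact Or.inl (Or.inl rfl)
        · by_cases hxY : x ∈ Y
          · exact Or.inl (Or.inr hxY)
          · exact Or.inr ⟨hx, hxY⟩
    have hb := hL1 (insert 0 Y) (X \ Y) hdisj
    rw [hun] at hb
    -- combine: H Y ≤ H(insert 0 Y) - k + 2(|Y|-e) ≤ H(insert 0 X) + H(X\Y) - k + 2(|Y|-e)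
    --        ≤ H X - 2k + (|X|-|Y|) + 2(|Y|-e)
    have hYcr : (Y.card : ℝ) ≥ (e : ℝ) := by exact_mod_cast hYe
    have hXcr : (X.card : ℝ) = (k : ℝ) + (e : ℝ) := by exact_mod_cast hXc
    rw [h3] at hb
    -- H Y + k - 2(|Y|-e) ≤ H X - k + H(X\Y)
    have : H Y + (k:ℝ) - 2 * ((Y.card:ℝ) - (e:ℝ)) ≤ H X - (k:ℝ) + ((X.card : ℝ) - (Y.card : ℝ)) := by
      linarith
    linarith [this, hXcr]
  -- L6: crux, strong induction
  have hL6 : ∀ m : ℕ, ∀ B : Finset (Fin (n + 1)), (0 : Fin (n+1)) ∉ B → B.card ≤ e →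
      B.card = m → (B.card : ℝ) ≤ H B := by
    intro m
    induction m using Nat.strong_induction_on with
    | _ m ih =>
      intro B h0B hBe hBm
      rcases Nat.eq_zero_or_pos B.card with h0 | hpos
      · rw [Finset.card_eq_zero.mp h0] at *
        simp [hempty]
      · set t := min k B.card with ht
        have ht1 : 1 ≤ t := le_min hk hpos
        have htB : t ≤ B.card := min_le_right _ _
        have htk : t ≤ k := min_le_left _ _
        obtain ⟨D, hDB, hDcard⟩ := Finset.exists_subset_card_eq (s := B) (n := B.card - t) (by omega)
        have h0D : (0 : Fin (n+1)) ∉ D := fun h => h0B (hDB h)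
        -- Z
        have hBQ : B ⊆ Q := hsubQ h0B
        have hcards : k + e - B.card ≤ (Q \ B).card := by
          rw [Finset.card_sdiff_of_subset hBQ, hQcard]; omega
        obtain ⟨Z, hZsub, hZcard⟩ := Finset.exists_subset_card_eq (s := Q \ B) (n := k + e - B.card) hcards
        have hZ0 : (0 : Fin (n+1)) ∉ Z := by
          intro h; have := hZsub h
          rw [Finset.mem_sdiff, hmemQ] at this
          exact this.1 rfl
        have hZB : Disjoint Z B := by
          rw [Finset.disjoint_left]
          intro x hx
          exact (Finset.mem_sdiff.mp (hZsub hx)).2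
        set X := B ∪ Z with hX
        set Y := D ∪ Z with hY
        have h0X : (0 : Fin (n+1)) ∉ X := by
          rw [hX, Finset.mem_union]; rintro (h | h)
          exacts [h0B h, hZ0 h]
        have hXcard : X.card = k + e := by
          rw [hX, Finset.card_union_of_disjoint hZB.symm, hZcard]; omega
        have hDZ : Disjoint D Z := by
          rw [Finset.disjoint_left]
          intro x hx
          exact Finset.disjoint_right.mp hZB (hDB hx)
        have hYcard : Y.card = k + e - t := by
          rw [hY, Finset.card_union_of_disjoint hDZ, hDcard, hZcard]; omega
        have hYX : Y ⊆ X := by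
          rw [hY, hX]
          exact Finset.union_subset_union hDB (le_refl Z)
        have hYe : e ≤ Y.card := by omega
        -- ssa
        have hssaBY := hssa B Y
        have hBuY : B ∪ Y = X := by
          rw [hY, hX, ← Finset.union_assoc, Finset.union_eq_left.mpr hDB]
        have hBiY : B ∩ Y = D := by
          rw [hY, Finset.inter_union_distrib_left]
          rw [Finset.inter_eq_right.mpr hDB, (Finset.disjoint_iff_inter_eq_empty.mp hZB.symm)]
          simp
        rw [hBuY, hBiY] at hssaBY
        -- L5
        have h5 := hL5 X Y h0X hYX hYe hXcard
        -- ih on D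
        have hDlt : D.card < m := by omega
        have ihD := ih D.card (by omega) D h0D (by omega) rfl
        -- cast arithmetic
        have hXYr : (X.card : ℝ) - (Y.card : ℝ) = (t : ℝ) := by
          rw [hXcard, hYcard]
          push_cast [Nat.cast_sub (by omega : t ≤ k + e)]
          ring
        have hDr : (D.card : ℝ) = (B.card : ℝ) - (t : ℝ) := by
          rw [hDcard]
          push_cast [Nat.cast_sub htB]
          ring
        rw [hXYr] at h5
        rw [hDr] at ihD
        -- H X + H D ≤ H B + H Y ;  H Y + t ≤ H X  ⟹  H B ≥ H D + t ≥ B.card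
        linarith
  -- conclude
  intro I hI0 hIcard
  have h2 := hL2 I hI0 (by omega)
  have hub := hSB I hI0
  have hlb := hL6 I.card I hI0 (by omega) rfl
  rw [h2]
  linarith
end

section
/- For a quantum MDS code (n = k + 2(d−1)), for every I ⊆ {1,…,n} with |I| = n − (d−1) = k + d − 1, one has H({R} ∪ Q_I) = d − 1. -/
/-- for |I| = n − (d−1) = k + d − 1, H(R ∪ Q_I) = d − 1. -/
theorem stmt_7 (k d n : ℕ) (hk : 1 ≤ k) (hd : 2 ≤ d) (hn : n = k + 2 * (d - 1))
    (H : Finset (Fin (n + 1)) → ℝ)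
    (hempty : H ∅ = 0)
    (hsubadd : ∀ A B : Finset (Fin (n + 1)), Disjoint A B → H (A ∪ B) ≤ H A + H B)
    (hssa : ∀ A B : Finset (Fin (n + 1)), H (A ∪ B) + H (A ∩ B) ≤ H A + H B)
    (hwm : ∀ A B : Finset (Fin (n + 1)), H (A \ B) + H (B \ A) ≤ H A + H B)
    (hdim : ∀ i : Fin (n + 1), i ≠ 0 → H {i} ≤ 1)
    (hR : H {0} = (k : ℝ))
    (hdec : ∀ I : Finset (Fin (n + 1)), (0 : Fin (n + 1)) ∉ I → I.card = n - (d - 1) →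
      H {0} + H I - H (insert 0 I) = 2 * (k : ℝ)) :
    ∀ I : Finset (Fin (n + 1)), (0 : Fin (n + 1)) ∉ I → I.card = n - (d - 1) →
      H (insert 0 I) = (d : ℝ) - 1 := by
  classical
  set e := d - 1 with he_def
  have he : 1 ≤ e := by omega
  have hn' : n = k + 2 * e := hn
  have hcard_dec : n - (d - 1) = k + e := by omega
  -- the set of "qudits"
  set Q : Finset (Fin (n + 1)) := Finset.univ.erase 0 with hQ_def
  have hQcard : Q.card = n := by
    rw [hQ_def, Finset.card_erase_of_mem (Finset.mem_univ _), Finset.card_univ,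
      Fintype.card_fin]
    omega
  have hmemQ : ∀ a : Fin (n + 1), a ∈ Q ↔ a ≠ 0 := by
    intro a; rw [hQ_def]; simp
  have hsubQ : ∀ X : Finset (Fin (n + 1)), (0 : Fin (n + 1)) ∉ X → X ⊆ Q := by
    intro X h0 a ha
    rw [hmemQ]
    rintro rfl; exact h0 ha
  -- decoding rearranged
  have hdec' : ∀ I : Finset (Fin (n + 1)), (0 : Fin (n + 1)) ∉ I → I.card = k + e →
      H (insert 0 I) = H I - (k : ℝ) := by
    intro I h0 hc
    have := hdec I h0 (by omega)
    rw [hR] at this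
    linarith
  -- upper bound by cardinality
  have hupper : ∀ X : Finset (Fin (n + 1)), (0 : Fin (n + 1)) ∉ X →
      H X ≤ (X.card : ℝ) := by
    intro X
    induction X using Finset.induction_on with
    | empty => intro _; simp [hempty]
    | @insert a s ha ih =>
      intro h0
      have ha0 : a ≠ 0 := by rintro rfl; exact h0 (Finset.mem_insert_self _ _)
      have h0s : (0 : Fin (n + 1)) ∉ s := fun h => h0 (Finset.mem_insert_of_mem h)
      have hins : insert a s = {a} ∪ s := by rw [Finset.insert_eq]
      have hdisj : Disjoint ({a} : Finset (Fin (n + 1))) s := by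
        simpa [Finset.disjoint_singleton_left] using ha
      have h1 := hsubadd {a} s hdisj
      rw [← hins] at h1
      have h2 := hdim a ha0
      have h3 := ih h0s
      rw [Finset.card_insert_of_notMem ha]
      push_cast
      linarith
  -- nonnegativity
  have hnonneg : ∀ A : Finset (Fin (n + 1)), 0 ≤ H A := by
    intro A
    have := hwm A A
    simp only [Finset.sdiff_self, hempty] at this
    linarith
  -- Lemma B : every k-set of qudits has entropy ≥ k
  have hB : ∀ M : Finset (Fin (n + 1)), (0 : Fin (n + 1)) ∉ M → M.card = k →
      (k : ℝ) ≤ H M := by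
    intro M h0M hMc
    have hMQ : M ⊆ Q := hsubQ M h0M
    have hQMcard : (Q \ M).card = 2 * e := by
      rw [Finset.card_sdiff_of_subset hMQ, hQcard, hMc]; omega
    obtain ⟨X, hXsub, hXcard⟩ := Finset.exists_subset_card_eq
      (show e ≤ (Q \ M).card by omega)
    set Y : Finset (Fin (n + 1)) := (Q \ M) \ X with hY_def
    have hYcard : Y.card = e := by
      rw [hY_def, Finset.card_sdiff_of_subset hXsub, hQMcard, hXcard]; omega
    have hXfact : ∀ a, a ∈ X → a ≠ 0 ∧ a ∉ M := by
      intro a ha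
      have := hXsub ha
      rw [Finset.mem_sdiff, hmemQ] at this
      exact this
    have hYfact : ∀ a, a ∈ Y → a ≠ 0 ∧ a ∉ M ∧ a ∉ X := by
      intro a ha
      rw [hY_def, Finset.mem_sdiff, Finset.mem_sdiff, hmemQ] at ha
      tauto
    have hdMX : Disjoint M X := Finset.disjoint_right.mpr (fun a ha => (hXfact a ha).2)
    have hdMY : Disjoint M Y := Finset.disjoint_right.mpr (fun a ha => (hYfact a ha).2.1)
    have h0MX : (0 : Fin (n + 1)) ∉ M ∪ X := by
      rw [Finset.mem_union]
      rintro (h | h)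
      · exact h0M h
      · exact (hXfact 0 h).1 rfl
    have h0MY : (0 : Fin (n + 1)) ∉ M ∪ Y := by
      rw [Finset.mem_union]
      rintro (h | h)
      · exact h0M h
      · exact (hYfact 0 h).1 rfl
    have hMXc : (M ∪ X).card = k + e := by
      rw [Finset.card_union_of_disjoint hdMX, hMc, hXcard]
    have hMYc : (M ∪ Y).card = k + e := by
      rw [Finset.card_union_of_disjoint hdMY, hMc, hYcard]
    have hd1 : (insert 0 (M ∪ X)) \ (insert 0 (M ∪ Y)) = X := by
      ext a
      simp only [Finset.mem_sdiff, Finset.mem_insert, Finset.mem_union]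
      constructor
      · rintro ⟨h1, h2⟩
        push_neg at h2
        tauto
      · intro ha
        obtain ⟨ha0, haM⟩ := hXfact a ha
        have haY : a ∉ Y := by
          rw [hY_def, Finset.mem_sdiff]; tauto
        push_neg
        tauto
    have hd2 : (insert 0 (M ∪ Y)) \ (insert 0 (M ∪ X)) = Y := by
      ext a
      simp only [Finset.mem_sdiff, Finset.mem_insert, Finset.mem_union]
      constructor
      · rintro ⟨h1, h2⟩
        push_neg at h2
        tauto
      · intro ha
        obtain ⟨ha0, haM, haX⟩ := hYfact a ha
        push_neg
        tauto
    have hwm1 := hwm (insert 0 (M ∪ X)) (insert 0 (M ∪ Y))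
    rw [hd1, hd2] at hwm1
    have he1 : H (insert 0 (M ∪ X)) = H (M ∪ X) - (k : ℝ) := hdec' _ h0MX hMXc
    have he2 : H (insert 0 (M ∪ Y)) = H (M ∪ Y) - (k : ℝ) := hdec' _ h0MY hMYc
    have hs1 := hsubadd M X hdMX
    have hs2 := hsubadd M Y hdMY
    linarith
  -- Lemma C : sets of qudits of size ≤ k have entropy ≥ card
  have hC : ∀ Z : Finset (Fin (n + 1)), (0 : Fin (n + 1)) ∉ Z → Z.card ≤ k →
      (Z.card : ℝ) ≤ H Z := by
    intro Z h0Z hZc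
    have hZQ : Z ⊆ Q := hsubQ Z h0Z
    obtain ⟨M, hZM, hMQ, hMc⟩ := Finset.exists_subsuperset_card_eq hZQ hZc
      (by rw [hQcard]; omega)
    have h0M : (0 : Fin (n + 1)) ∉ M := by
      intro h
      exact absurd ((hmemQ 0).mp (hMQ h)) (by simp)
    have hMsplit : Z ∪ (M \ Z) = M := Finset.union_sdiff_of_subset hZM
    have hs := hsubadd Z (M \ Z) Finset.disjoint_sdiff
    rw [hMsplit] at hs
    have h0MZ : (0 : Fin (n + 1)) ∉ M \ Z := fun h => h0M (Finset.mem_sdiff.mp h).1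
    have hu := hupper (M \ Z) h0MZ
    have hcMZ : (M \ Z).card = k - Z.card := by
      rw [Finset.card_sdiff_of_subset hZM, hMc]
    rw [hcMZ] at hu
    have hcast : ((k - Z.card : ℕ) : ℝ) = (k : ℝ) - (Z.card : ℝ) := by
      rw [Nat.cast_sub hZc]
    rw [hcast] at hu
    have hbk := hB M h0M hMc
    linarith
  -- Lemma D : (d-1)-sets Z of qudits: H(R ∪ Z) ≥ k + H Z
  have hD : ∀ Z : Finset (Fin (n + 1)), (0 : Fin (n + 1)) ∉ Z → Z.card = e →
      (k : ℝ) + H Z ≤ H (insert 0 Z) := by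
    intro Z h0Z hZc
    have hZQ : Z ⊆ Q := hsubQ Z h0Z
    set I' : Finset (Fin (n + 1)) := Q \ Z with hI'_def
    have h0I' : (0 : Fin (n + 1)) ∉ I' := by
      rw [hI'_def, Finset.mem_sdiff, hmemQ]
      simp
    have hI'c : I'.card = k + e := by
      rw [hI'_def, Finset.card_sdiff_of_subset hZQ, hQcard, hZc]; omega
    have hI'fact : ∀ a, a ∈ I' → a ≠ 0 ∧ a ∉ Z := by
      intro a ha
      rw [hI'_def, Finset.mem_sdiff, hmemQ] at ha
      exact ha
    have hZfact : ∀ a, a ∈ Z → a ≠ 0 ∧ a ∉ I' := by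
      intro a ha
      constructor
      · intro h; rw [h] at ha; exact h0Z ha
      · intro h; exact (hI'fact a h).2 ha
    have hd1 : (insert 0 Z) \ (insert 0 I') = Z := by
      ext a
      simp only [Finset.mem_sdiff, Finset.mem_insert]
      constructor
      · rintro ⟨h1, h2⟩
        push_neg at h2
        tauto
      · intro ha
        obtain ⟨ha0, haI'⟩ := hZfact a ha
        push_neg
        tauto
    have hd2 : (insert 0 I') \ (insert 0 Z) = I' := by
      ext a
      simp only [Finset.mem_sdiff, Finset.mem_insert]
      constructor
      · rintro ⟨h1, h2⟩
        push_neg at h2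
        tauto
      · intro ha
        obtain ⟨ha0, haZ⟩ := hI'fact a ha
        push_neg
        tauto
    have hwm1 := hwm (insert 0 Z) (insert 0 I')
    rw [hd1, hd2] at hwm1
    have he1 : H (insert 0 I') = H I' - (k : ℝ) := hdec' _ h0I' hI'c
    linarith
  -- Lemma E : for k ≤ |X| ≤ k + e and S ⊆ X with |S| = k : H X ≥ k + H (X \ S)
  have hE : ∀ X S : Finset (Fin (n + 1)), (0 : Fin (n + 1)) ∉ X → S ⊆ X →
      S.card = k → X.card ≤ k + e → (k : ℝ) + H (X \ S) ≤ H X := by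
    intro X S h0X hSX hSc hXc
    have hXQ : X ⊆ Q := hsubQ X h0X
    have hQXcard : e ≤ (Q \ X).card := by
      rw [Finset.card_sdiff_of_subset hXQ, hQcard]; omega
    obtain ⟨Z, hZsub, hZcard⟩ := Finset.exists_subset_card_eq hQXcard
    have hZfact : ∀ a, a ∈ Z → a ≠ 0 ∧ a ∉ X := by
      intro a ha
      have := hZsub ha
      rw [Finset.mem_sdiff, hmemQ] at this
      exact this
    have h0Z : (0 : Fin (n + 1)) ∉ Z := fun h => (hZfact 0 h).1 rfl
    have hdSZ : Disjoint S Z :=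
      Finset.disjoint_right.mpr (fun a ha => fun haS => (hZfact a ha).2 (hSX haS))
    have h0I : (0 : Fin (n + 1)) ∉ S ∪ Z := by
      rw [Finset.mem_union]
      rintro (h | h)
      · exact h0X (hSX h)
      · exact h0Z h
    have hIc : (S ∪ Z).card = k + e := by
      rw [Finset.card_union_of_disjoint hdSZ, hSc, hZcard]
    have hXfact : ∀ a, a ∈ X → a ≠ 0 ∧ a ∉ Z := by
      intro a ha
      constructor
      · intro h; rw [h] at ha; exact h0X ha
      · intro h; exact (hZfact a h).2 ha
    have hd1 : X \ (insert 0 (S ∪ Z)) = X \ S := by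
      ext a
      simp only [Finset.mem_sdiff, Finset.mem_insert, Finset.mem_union]
      constructor
      · rintro ⟨h1, h2⟩
        push_neg at h2
        tauto
      · rintro ⟨haX, haS⟩
        obtain ⟨ha0, haZ⟩ := hXfact a haX
        push_neg
        tauto
    have hd2 : (insert 0 (S ∪ Z)) \ X = insert 0 Z := by
      ext a
      simp only [Finset.mem_sdiff, Finset.mem_insert, Finset.mem_union]
      constructor
      · rintro ⟨h1, h2⟩
        rcases h1 with h | h | h
        · tauto
        · exact absurd (hSX h) h2
        · tauto
      · rintro (rfl | h)
        · exact ⟨Or.inl rfl, h0X⟩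
        · exact ⟨Or.inr (Or.inr h), (hZfact a h).2⟩
    have hwm1 := hwm X (insert 0 (S ∪ Z))
    rw [hd1, hd2] at hwm1
    have he1 : H (insert 0 (S ∪ Z)) = H (S ∪ Z) - (k : ℝ) := hdec' _ h0I hIc
    have hs1 := hsubadd S Z hdSZ
    have h0S : (0 : Fin (n + 1)) ∉ S := fun h => h0X (hSX h)
    have huS := hupper S h0S
    rw [hSc] at huS
    have hDZ := hD Z h0Z hZcard
    linarith
  -- Lemma F : all sets of qudits of size ≤ k + e have entropy ≥ card
  have hF : ∀ m : ℕ, ∀ X : Finset (Fin (n + 1)), X.card = m →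
      (0 : Fin (n + 1)) ∉ X → X.card ≤ k + e → (X.card : ℝ) ≤ H X := by
    intro m
    induction m using Nat.strong_induction_on with
    | _ m ih =>
      intro X hXm h0X hXc
      by_cases hsmall : X.card ≤ k
      · exact hC X h0X hsmall
      · push_neg at hsmall
        obtain ⟨S, hSX, hSc⟩ := Finset.exists_subset_card_eq
          (show k ≤ X.card by omega)
        have hXS : (X \ S).card = X.card - k := by
          rw [Finset.card_sdiff_of_subset hSX, hSc]
        have h0XS : (0 : Fin (n + 1)) ∉ X \ S := fun h => h0X (Finset.mem_sdiff.mp h).1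
        have hlt : (X \ S).card < m := by omega
        have hih := ih (X \ S).card hlt (X \ S) rfl h0XS (by omega)
        have hEX := hE X S h0X hSX hSc hXc
        have hcast : (((X \ S).card : ℕ) : ℝ) = (X.card : ℝ) - (k : ℝ) := by
          rw [hXS, Nat.cast_sub (by omega)]
        rw [hcast] at hih
        linarith
  -- conclusion
  intro I h0I hIc
  have hIc' : I.card = k + e := by omega
  have hIH : H I = ((k : ℝ) + (e : ℝ)) := by
    have h1 := hupper I h0I
    have h2 := hF I.card I rfl h0I (by omega)
    rw [hIc'] at h1 h2
    push_cast at h1 h2 ⊢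
    linarith
  have hdecI := hdec' I h0I hIc'
  rw [hIH] at hdecI
  rw [hdecI]
  have : ((e : ℕ) : ℝ) = (d : ℝ) - 1 := by
    rw [he_def]
    have : ((d - 1 : ℕ) : ℝ) = (d : ℝ) - 1 := by
      rw [Nat.cast_sub (by omega)]
      norm_num
    exact this
  linarith
end

section
/- For a quantum MDS code (n = k + 2(d−1)), for every J ⊆ {1,…,n} with d − 1 < |J| ≤ k + d − 1, one has H({R} ∪ Q_J) = k + 2(d−1) − |J|. -/
namespace Stmt8Aux


variable {N : ℕ}

lemma ins_sdiff_zero (M : Finset (Fin (N+1))) (h0 : (0:Fin (N+1)) ∉ M) :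
    (insert 0 M) \ {(0 : Fin (N+1))} = M := by
  ext x
  simp only [Finset.mem_sdiff, Finset.mem_insert, Finset.mem_singleton]
  constructor
  · rintro ⟨h1 | h1, h2⟩ <;> tauto
  · intro hx; exact ⟨Or.inr hx, fun h => h0 (h ▸ hx)⟩

lemma ins_sdiff_ins (A B : Finset (Fin (N+1))) (h0 : (0:Fin (N+1)) ∉ A) :
    (insert 0 A) \ (insert 0 B) = A \ B := by
  ext x
  simp only [Finset.mem_sdiff, Finset.mem_insert]
  constructor
  · rintro ⟨h1 | h1, h2⟩
    · exact absurd (Or.inl h1) h2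
    · exact ⟨h1, fun hb => h2 (Or.inr hb)⟩
  · rintro ⟨h1, h2⟩
    refine ⟨Or.inr h1, ?_⟩
    rintro (rfl | hb)
    · exact h0 h1
    · exact h2 hb

lemma ins_union_ins (A B : Finset (Fin (N+1))) :
    (insert 0 A) ∪ (insert 0 B) = insert (0:Fin (N+1)) (A ∪ B) := by
  ext x; simp only [Finset.mem_union, Finset.mem_insert]; tauto

lemma ins_inter_ins (A B : Finset (Fin (N+1))) :
    (insert 0 A) ∩ (insert 0 B) = insert (0:Fin (N+1)) (A ∩ B) := by
  ext x; simp only [Finset.mem_inter, Finset.mem_insert]; tauto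

lemma ins_union_of_subset (I M : Finset (Fin (N+1))) (h : I ⊆ M) :
    (insert 0 I) ∪ M = insert (0:Fin (N+1)) M := by
  ext x
  simp only [Finset.mem_union, Finset.mem_insert]
  constructor
  · rintro ((rfl | hI) | hM) <;> first | exact Or.inl rfl | exact Or.inr (h hI) | exact Or.inr hM
  · rintro (rfl | hM) <;> tauto

lemma ins_inter_of_subset (I M : Finset (Fin (N+1))) (h : I ⊆ M) (h0 : (0:Fin (N+1)) ∉ M) :
    (insert 0 I) ∩ M = I := by
  ext x
  simp only [Finset.mem_inter, Finset.mem_insert]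
  constructor
  · rintro ⟨rfl | hI, hM⟩
    · exact absurd hM h0
    · exact hI
  · intro hI; exact ⟨Or.inr hI, h hI⟩

lemma ins_sdiff_sdiff (M W : Finset (Fin (N+1))) (hWM : W ⊆ M) (h0 : (0:Fin (N+1)) ∉ M) :
    (insert 0 M) \ (M \ W) = insert (0:Fin (N+1)) W := by
  ext x
  simp only [Finset.mem_sdiff, Finset.mem_insert]
  constructor
  · rintro ⟨rfl | hM, h2⟩
    · exact Or.inl rfl
    · by_cases hw : x ∈ W
      · exact Or.inr hw
      · exact absurd ⟨hM, hw⟩ h2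
  · rintro (rfl | hW)
    · exact ⟨Or.inl rfl, fun h => h0 h.1⟩
    · exact ⟨Or.inr (hWM hW), fun h => h.2 hW⟩

lemma sdiff_sub_ins (M W : Finset (Fin (N+1))) :
    (M \ W) \ (insert 0 M) = ∅ := by
  ext x
  simp only [Finset.mem_sdiff, Finset.mem_insert, Finset.notMem_empty, iff_false]
  rintro ⟨⟨h1, _⟩, h2⟩
  exact h2 (Or.inr h1)

lemma erase_union_erase (M : Finset (Fin (N+1))) (i i' : Fin (N+1)) (hne : i ≠ i') :
    (M.erase i) ∪ (M.erase i') = M := by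
  ext x
  simp only [Finset.mem_union, Finset.mem_erase]
  constructor
  · rintro (⟨_, h⟩ | ⟨_, h⟩) <;> exact h
  · intro hx
    by_cases hxi : x = i
    · subst hxi; exact Or.inr ⟨hne, hx⟩
    · exact Or.inl ⟨hxi, hx⟩

lemma erase_inter_erase (M : Finset (Fin (N+1))) (i i' : Fin (N+1)) :
    (M.erase i) ∩ (M.erase i') = (M.erase i).erase i' := by
  ext x
  simp only [Finset.mem_inter, Finset.mem_erase]
  tauto



variable {N : ℕ} (H : Finset (Fin (N+1)) → ℝ)

lemma h_nonneg (hempty : H ∅ = 0)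
    (hwm : ∀ A B : Finset (Fin (N+1)), H (A \ B) + H (B \ A) ≤ H A + H B)
    (A : Finset (Fin (N+1))) : 0 ≤ H A := by
  have := hwm A A
  simp only [Finset.sdiff_self, hempty] at this
  linarith

lemma size_bound (hempty : H ∅ = 0)
    (hsubadd : ∀ A B : Finset (Fin (N+1)), Disjoint A B → H (A ∪ B) ≤ H A + H B)
    (hdim : ∀ i : Fin (N+1), i ≠ 0 → H {i} ≤ 1) :
    ∀ M : Finset (Fin (N+1)), (0:Fin (N+1)) ∉ M → H M ≤ (M.card : ℝ) := by
  intro M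
  induction M using Finset.induction_on with
  | empty => intro _; simp [hempty]
  | @insert a s ha ih =>
    intro h0
    have ha0 : a ≠ 0 := fun h => h0 (by simp [h])
    have hs0 : (0:Fin (N+1)) ∉ s := fun h => h0 (Finset.mem_insert_of_mem h)
    have hins : insert a s = {a} ∪ s := by rw [Finset.insert_eq]
    have hdisj : Disjoint ({a} : Finset (Fin (N+1))) s := by
      simp [Finset.disjoint_singleton_left, ha]
    have h1 := hsubadd {a} s hdisj
    have h2 := hdim a ha0
    have h3 := ih hs0
    rw [Finset.card_insert_of_notMem ha]
    push_cast
    rw [hins]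
    linarith


-- C1 : growing a Q-set increases entropy by at most the number of added elements
lemma chain_up (hempty : H ∅ = 0)
    (hsubadd : ∀ A B : Finset (Fin (N+1)), Disjoint A B → H (A ∪ B) ≤ H A + H B)
    (hdim : ∀ i : Fin (N+1), i ≠ 0 → H {i} ≤ 1)
    (W M : Finset (Fin (N+1))) (hWM : W ⊆ M) (h0 : (0:Fin (N+1)) ∉ M) :
    H M ≤ H W + ((M \ W).card : ℝ) := by
  have hM : M = W ∪ (M \ W) := (Finset.union_sdiff_of_subset hWM).symm
  have hd : Disjoint W (M \ W) := Finset.disjoint_sdiff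
  have h1 := hsubadd W (M \ W) hd
  have h2 : H (M \ W) ≤ ((M \ W).card : ℝ) :=
    size_bound H hempty hsubadd hdim _ (fun h => h0 (Finset.mem_sdiff.mp h).1)
  calc H M = H (W ∪ (M \ W)) := by rw [← hM]
    _ ≤ H W + H (M \ W) := h1
    _ ≤ H W + ((M \ W).card : ℝ) := by linarith

-- C4 : same with 0 inserted
lemma chain_up_R (hempty : H ∅ = 0)
    (hsubadd : ∀ A B : Finset (Fin (N+1)), Disjoint A B → H (A ∪ B) ≤ H A + H B)
    (hdim : ∀ i : Fin (N+1), i ≠ 0 → H {i} ≤ 1)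
    (W M : Finset (Fin (N+1))) (hWM : W ⊆ M) (h0 : (0:Fin (N+1)) ∉ M) :
    H (insert 0 M) ≤ H (insert 0 W) + ((M \ W).card : ℝ) := by
  have hM : insert 0 M = (insert 0 W) ∪ (M \ W) := by
    ext x
    simp only [Finset.mem_insert, Finset.mem_union, Finset.mem_sdiff]
    constructor
    · rintro (rfl | hx)
      · exact Or.inl (Or.inl rfl)
      · by_cases hw : x ∈ W
        · exact Or.inl (Or.inr hw)
        · exact Or.inr ⟨hx, hw⟩
    · rintro ((rfl | hw) | ⟨hx, _⟩)
      · exact Or.inl rfl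
      · exact Or.inr (hWM hw)
      · exact Or.inr hx
  have hd : Disjoint (insert 0 W) (M \ W) := by
    rw [Finset.disjoint_left]
    intro x hx hx2
    rw [Finset.mem_sdiff] at hx2
    rcases Finset.mem_insert.mp hx with rfl | hw
    · exact h0 hx2.1
    · exact hx2.2 hw
  have h1 := hsubadd (insert 0 W) (M \ W) hd
  have h2 : H (M \ W) ≤ ((M \ W).card : ℝ) :=
    size_bound H hempty hsubadd hdim _ (fun h => h0 (Finset.mem_sdiff.mp h).1)
  rw [hM]; linarith

-- C2 : shrinking with R loses at most the number of removed elements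
lemma chain_down_R (hempty : H ∅ = 0)
    (hsubadd : ∀ A B : Finset (Fin (N+1)), Disjoint A B → H (A ∪ B) ≤ H A + H B)
    (hwm : ∀ A B : Finset (Fin (N+1)), H (A \ B) + H (B \ A) ≤ H A + H B)
    (hdim : ∀ i : Fin (N+1), i ≠ 0 → H {i} ≤ 1)
    (W M : Finset (Fin (N+1))) (hWM : W ⊆ M) (h0 : (0:Fin (N+1)) ∉ M) :
    H (insert 0 W) ≤ H (insert 0 M) + ((M \ W).card : ℝ) := by
  have h1 := hwm (insert 0 M) (M \ W)
  rw [ins_sdiff_sdiff M W hWM h0, sdiff_sub_ins M W, hempty] at h1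
  have h2 : H (M \ W) ≤ ((M \ W).card : ℝ) :=
    size_bound H hempty hsubadd hdim _ (fun h => h0 (Finset.mem_sdiff.mp h).1)
  linarith

end Stmt8Aux

open Stmt8Aux

/-- for d − 1 < |J| ≤ k + d − 1, H(R ∪ Q_J) = k + 2(d−1) − |J|. -/
theorem stmt_8 (k d n : ℕ) (hk : 1 ≤ k) (hd : 2 ≤ d) (hn : n = k + 2 * (d - 1))
    (H : Finset (Fin (n + 1)) → ℝ)
    (hempty : H ∅ = 0)
    (hsubadd : ∀ A B : Finset (Fin (n + 1)), Disjoint A B → H (A ∪ B) ≤ H A + H B)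
    (hssa : ∀ A B : Finset (Fin (n + 1)), H (A ∪ B) + H (A ∩ B) ≤ H A + H B)
    (hwm : ∀ A B : Finset (Fin (n + 1)), H (A \ B) + H (B \ A) ≤ H A + H B)
    (hdim : ∀ i : Fin (n + 1), i ≠ 0 → H {i} ≤ 1)
    (hR : H {0} = (k : ℝ))
    (hdec : ∀ I : Finset (Fin (n + 1)), (0 : Fin (n + 1)) ∉ I → I.card = n - (d - 1) →
      H {0} + H I - H (insert 0 I) = 2 * (k : ℝ)) :
    ∀ J : Finset (Fin (n + 1)), (0 : Fin (n + 1)) ∉ J → d - 1 < J.card → J.card ≤ k + d - 1 →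
      H (insert 0 J) = (k : ℝ) + 2 * ((d : ℝ) - 1) - (J.card : ℝ) := by
  intro J h0J hJlo hJhi
  have hdcast : ((d - 1 : ℕ) : ℝ) = (d : ℝ) - 1 := by
    rw [Nat.cast_sub (by omega : 1 ≤ d)]; norm_num
  set Ω : Finset (Fin (n + 1)) := Finset.univ.erase 0 with hΩdef
  have hΩcard : Ω.card = n := by
    rw [hΩdef, Finset.card_erase_of_mem (Finset.mem_univ 0), Finset.card_univ]
    simp
  have hmemΩ : ∀ M : Finset (Fin (n + 1)), (0 : Fin (n + 1)) ∉ M → M ⊆ Ω := by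
    intro M h0M x hx
    exact Finset.mem_erase.mpr ⟨fun h => h0M (h ▸ hx), Finset.mem_univ x⟩
  have hcard_le : ∀ M : Finset (Fin (n + 1)), (0 : Fin (n + 1)) ∉ M → M.card ≤ n := by
    intro M hM
    have := Finset.card_le_card (hmemΩ M hM)
    omega
  -- L2 : for |M| ≥ k+d-1 : H(R ∪ M) = H M - k
  have L2 : ∀ M : Finset (Fin (n + 1)), (0 : Fin (n + 1)) ∉ M → k + d - 1 ≤ M.card →
      H (insert 0 M) = H M - k := by
    intro M h0M hMcard
    obtain ⟨I, hIM, hIcard⟩ := Finset.exists_subset_card_eq hMcard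
    have h0I : (0 : Fin (n + 1)) ∉ I := fun h => h0M (hIM h)
    have hdecI := hdec I h0I (by omega)
    rw [hR] at hdecI
    have hssa1 := hssa (insert 0 I) M
    rw [ins_union_of_subset I M hIM, ins_inter_of_subset I M hIM h0M] at hssa1
    have hwm1 := hwm (insert 0 M) {0}
    have h0sd : ({0} : Finset (Fin (n + 1))) \ insert 0 M = ∅ := by
      ext x
      simp only [Finset.mem_sdiff, Finset.mem_singleton, Finset.mem_insert,
        Finset.notMem_empty, iff_false]
      rintro ⟨rfl, h2⟩
      exact h2 (Or.inl rfl)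
    rw [ins_sdiff_zero M h0M, h0sd, hempty, hR] at hwm1
    linarith
  -- L3 : for |L| ≤ d-1 : H(R ∪ L) = k + H L
  have L3 : ∀ L : Finset (Fin (n + 1)), (0 : Fin (n + 1)) ∉ L → L.card ≤ d - 1 →
      H (insert 0 L) = (k : ℝ) + H L := by
    intro L h0L hLcard
    have hup : H (insert 0 L) ≤ (k : ℝ) + H L := by
      have hd1 : Disjoint ({0} : Finset (Fin (n + 1))) L := by
        simp [Finset.disjoint_singleton_left, h0L]
      have := hsubadd {0} L hd1
      rw [← Finset.insert_eq, hR] at this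
      exact this
    have hsd : k + d - 1 ≤ (Ω \ L).card := by
      rw [Finset.card_sdiff_of_subset (hmemΩ L h0L), hΩcard]
      omega
    obtain ⟨I, hIsub, hIcard⟩ := Finset.exists_subset_card_eq hsd
    have h0I : (0 : Fin (n + 1)) ∉ I := by
      intro h
      exact (Finset.mem_erase.mp (Finset.mem_sdiff.mp (hIsub h)).1).1 rfl
    have hdisj : Disjoint L I := by
      rw [Finset.disjoint_right]
      intro x hxI hxL
      exact (Finset.mem_sdiff.mp (hIsub hxI)).2 hxL
    have hLI : L \ I = L := Finset.sdiff_eq_self_of_disjoint hdisj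
    have hIL : I \ L = I := Finset.sdiff_eq_self_of_disjoint hdisj.symm
    have hwm1 := hwm (insert 0 L) (insert 0 I)
    rw [ins_sdiff_ins L I h0L, ins_sdiff_ins I L h0I, hLI, hIL] at hwm1
    have hRI := L2 I h0I (le_of_eq hIcard.symm)
    linarith
  -- L4 : window values relative to a (d-1)-subset
  have L4 : ∀ L M I : Finset (Fin (n + 1)), L ⊆ M → M ⊆ I → (0 : Fin (n + 1)) ∉ I →
      L.card = d - 1 → I.card = k + d - 1 →
      H M = H L + ((M.card : ℝ) - (L.card : ℝ)) ∧
      H (insert 0 M) = (k : ℝ) + H L - ((M.card : ℝ) - (L.card : ℝ)) := by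
    intro L M I hLM hMI h0I hLc hIc
    have h0M : (0 : Fin (n + 1)) ∉ M := fun h => h0I (hMI h)
    have h0L : (0 : Fin (n + 1)) ∉ L := fun h => h0M (hLM h)
    have c1 := chain_up H hempty hsubadd hdim L M hLM h0M
    have c2 := chain_up H hempty hsubadd hdim M I hMI h0I
    have c3 := chain_down_R H hempty hsubadd hwm hdim L M hLM h0M
    have c4 := chain_down_R H hempty hsubadd hwm hdim M I hMI h0I
    have c5 := chain_down_R H hempty hsubadd hwm hdim L I (hLM.trans hMI) h0I
    have eI := L2 I h0I (le_of_eq hIc.symm)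
    have eL := L3 L h0L (le_of_eq hLc)
    have hcLM : ((M \ L).card : ℝ) = (M.card : ℝ) - (L.card : ℝ) := by
      rw [Finset.card_sdiff_of_subset hLM, Nat.cast_sub (Finset.card_le_card hLM)]
    have hcMI : ((I \ M).card : ℝ) = (I.card : ℝ) - (M.card : ℝ) := by
      rw [Finset.card_sdiff_of_subset hMI, Nat.cast_sub (Finset.card_le_card hMI)]
    have hcLI : ((I \ L).card : ℝ) = (I.card : ℝ) - (L.card : ℝ) := by
      rw [Finset.card_sdiff_of_subset (hLM.trans hMI), Nat.cast_sub (Finset.card_le_card (hLM.trans hMI))]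
    have hkval : (I.card : ℝ) - (L.card : ℝ) = (k : ℝ) := by
      have hIL' : I.card = L.card + k := by omega
      rw [hIL']; push_cast; ring
    rw [hcLM] at c1 c3
    rw [hcMI] at c2 c4
    rw [hcLI] at c5
    constructor <;> linarith
  -- fixed reference (d-1)-set
  obtain ⟨L0, hL0sub, hL0card⟩ := Finset.exists_subset_card_eq
    (show d - 1 ≤ Ω.card by rw [hΩcard]; omega)
  have h0L0 : (0 : Fin (n + 1)) ∉ L0 := fun h => (Finset.mem_erase.mp (hL0sub h)).1 rfl
  set h : ℝ := H L0 with hhdef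
  -- L5 : all (d-1)-sets have the same entropy
  have L5 : ∀ m : ℕ, ∀ L L' : Finset (Fin (n + 1)), (0 : Fin (n + 1)) ∉ L →
      (0 : Fin (n + 1)) ∉ L' → L.card = d - 1 → L'.card = d - 1 → (L' \ L).card = m →
      H L = H L' := by
    intro m
    induction m with
    | zero =>
      intro L L' h0L h0L' hLc hL'c hm
      have hsub : L' ⊆ L := by
        rw [← Finset.sdiff_eq_empty_iff_subset]
        exact Finset.card_eq_zero.mp hm
      rw [Finset.eq_of_subset_of_card_le hsub (by omega)]
    | succ m ih =>
      intro L L' h0L h0L' hLc hL'c hm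
      obtain ⟨x, hx⟩ : (L' \ L).Nonempty := by rw [← Finset.card_pos, hm]; omega
      have hxL' : x ∈ L' := (Finset.mem_sdiff.mp hx).1
      have hxL : x ∉ L := (Finset.mem_sdiff.mp hx).2
      obtain ⟨y, hy⟩ : (L \ L').Nonempty := by
        rw [← Finset.card_pos]
        have h1 := Finset.card_sdiff_add_card_inter L L'
        have h2 := Finset.card_sdiff_add_card_inter L' L
        rw [Finset.inter_comm] at h2
        omega
      have hyL : y ∈ L := (Finset.mem_sdiff.mp hy).1
      have hyL' : y ∉ L' := (Finset.mem_sdiff.mp hy).2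
      have hxney : x ≠ y := fun hxy => hxL (hxy ▸ hyL)
      set L'' := insert x (L.erase y) with hL''def
      have h0L'' : (0 : Fin (n + 1)) ∉ L'' := by
        intro hmem
        rcases Finset.mem_insert.mp hmem with hh | hh
        · exact h0L' (hh ▸ hxL')
        · exact h0L (Finset.mem_of_mem_erase hh)
      have hxnerase : x ∉ L.erase y := fun hh => hxL (Finset.mem_of_mem_erase hh)
      have hL''c : L''.card = d - 1 := by
        rw [hL''def, Finset.card_insert_of_notMem hxnerase, Finset.card_erase_of_mem hyL]
        omega
      set M := insert x L with hMdef
      have h0M : (0 : Fin (n + 1)) ∉ M := by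
        intro hmem
        rcases Finset.mem_insert.mp hmem with hh | hh
        · exact h0L' (hh ▸ hxL')
        · exact h0L hh
      have hMc : M.card = d - 1 + 1 := by
        rw [hMdef, Finset.card_insert_of_notMem hxL, hLc]
      obtain ⟨I, hMI, hIΩ, hIc⟩ := Finset.exists_subsuperset_card_eq (hmemΩ M h0M)
        (show M.card ≤ k + d - 1 by omega) (show k + d - 1 ≤ Ω.card by rw [hΩcard]; omega)
      have h0I : (0 : Fin (n + 1)) ∉ I := fun hh => (Finset.mem_erase.mp (hIΩ hh)).1 rfl
      have hLM : L ⊆ M := Finset.subset_insert x L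
      have hL''M : L'' ⊆ M := by
        intro z hz
        rcases Finset.mem_insert.mp hz with rfl | hz'
        · exact Finset.mem_insert_self z L
        · exact Finset.mem_insert_of_mem (Finset.mem_of_mem_erase hz')
      have e1 := (L4 L M I hLM hMI h0I hLc hIc).1
      have e2 := (L4 L'' M I hL''M hMI h0I hL''c hIc).1
      have hHL : H L = H L'' := by
        rw [hLc] at e1
        rw [hL''c] at e2
        linarith
      have hmeas : (L' \ L'').card = m := by
        have hset : L' \ L'' = (L' \ L).erase x := by
          ext z
          simp only [hL''def, Finset.mem_sdiff, Finset.mem_insert, Finset.mem_erase]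
          constructor
          · rintro ⟨hz1, hz2⟩
            refine ⟨fun hzx => hz2 (Or.inl hzx), hz1, fun hzL => ?_⟩
            have hzy : z ≠ y := fun hzy => hyL' (hzy ▸ hz1)
            exact hz2 (Or.inr ⟨hzy, hzL⟩)
          · rintro ⟨hzx, hz1, hzL⟩
            refine ⟨hz1, ?_⟩
            rintro (rfl | hze)
            · exact hzx rfl
            · exact hzL hze.2
        rw [hset, Finset.card_erase_of_mem hx, hm]
        omega
      rw [hHL]
      exact ih L'' L' h0L'' h0L' hL''c hL'c hmeas
  -- L4' : absolute window values
  have L4' : ∀ M : Finset (Fin (n + 1)), (0 : Fin (n + 1)) ∉ M → d - 1 ≤ M.card →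
      M.card ≤ k + d - 1 →
      H M = h + ((M.card : ℝ) - ((d : ℝ) - 1)) ∧
      H (insert 0 M) = (k : ℝ) + h - ((M.card : ℝ) - ((d : ℝ) - 1)) := by
    intro M h0M hlo hhi
    obtain ⟨L, hLM, hLc⟩ := Finset.exists_subset_card_eq hlo
    obtain ⟨I, hMI, hIΩ, hIc⟩ := Finset.exists_subsuperset_card_eq (hmemΩ M h0M) hhi
      (show k + d - 1 ≤ Ω.card by rw [hΩcard]; omega)
    have h0I : (0 : Fin (n + 1)) ∉ I := fun hh => (Finset.mem_erase.mp (hIΩ hh)).1 rfl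
    have h0L : (0 : Fin (n + 1)) ∉ L := fun hh => h0M (hLM hh)
    have e := L4 L M I hLM hMI h0I hLc hIc
    have hHL : H L = h := L5 (L0 \ L).card L L0 h0L h0L0 hLc hL0card rfl
    have hcast : (L.card : ℝ) = (d : ℝ) - 1 := by rw [hLc, hdcast]
    rw [hHL, hcast] at e
    exact e
  -- L6 : descent above the window
  have L6 : ∀ j : ℕ, ∀ M : Finset (Fin (n + 1)), (0 : Fin (n + 1)) ∉ M →
      M.card = k + d - 1 + j → H (insert 0 M) ≤ h - (j : ℝ) := by
    intro j
    induction j using Nat.strong_induction_on with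
    | _ j IH =>
      intro M h0M hMc
      rcases Nat.eq_zero_or_pos j with rfl | hj
      · have e2 := L2 M h0M (by omega)
        have e1 := (L4' M h0M (by omega) (by omega)).1
        have hMcast : (M.card : ℝ) = (k : ℝ) + ((d : ℝ) - 1) := by
          have : M.card = k + (d - 1) := by omega
          rw [this]
          push_cast [Nat.cast_sub (by omega : 1 ≤ d)]
          ring
        rw [e2, e1, hMcast]
        push_cast
        linarith
      · have h2card : 1 < M.card := by omega
        obtain ⟨i, hi, i', hi', hne⟩ := Finset.one_lt_card.mp h2card
        have key := hssa (insert 0 (M.erase i)) (insert 0 (M.erase i'))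
        rw [ins_union_ins, ins_inter_ins, erase_union_erase M i i' hne,
          erase_inter_erase M i i'] at key
        have h0M1 : (0 : Fin (n + 1)) ∉ M.erase i := fun hh => h0M (Finset.mem_of_mem_erase hh)
        have h0M2 : (0 : Fin (n + 1)) ∉ M.erase i' := fun hh => h0M (Finset.mem_of_mem_erase hh)
        have h0M'' : (0 : Fin (n + 1)) ∉ (M.erase i).erase i' :=
          fun hh => h0M1 (Finset.mem_of_mem_erase hh)
        have hM1c : (M.erase i).card = k + d - 1 + (j - 1) := by
          rw [Finset.card_erase_of_mem hi]; omega
        have hM2c : (M.erase i').card = k + d - 1 + (j - 1) := by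
          rw [Finset.card_erase_of_mem hi']; omega
        have hi'' : i' ∈ M.erase i := Finset.mem_erase.mpr ⟨hne.symm, hi'⟩
        have hM''c : ((M.erase i).erase i').card = k + d - 1 + j - 2 := by
          rw [Finset.card_erase_of_mem hi'', Finset.card_erase_of_mem hi]; omega
        have b1 := IH (j - 1) (by omega) (M.erase i) h0M1 hM1c
        have b2 := IH (j - 1) (by omega) (M.erase i') h0M2 hM2c
        have hjcast : ((j - 1 : ℕ) : ℝ) = (j : ℝ) - 1 := by
          rw [Nat.cast_sub hj]; norm_num
        rw [hjcast] at b1 b2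
        have b3 : h - ((j : ℝ) - 2) ≤ H (insert 0 ((M.erase i).erase i')) := by
          rcases Nat.lt_or_ge ((M.erase i).erase i').card (k + d - 1) with hlt | hge
          · have hj1 : j = 1 := by omega
            have e := (L4' ((M.erase i).erase i') h0M'' (by omega) (by omega)).2
            have hcc : (((M.erase i).erase i').card : ℝ) = (k : ℝ) + (d : ℝ) - 2 := by
              have : ((M.erase i).erase i').card = k + d - 2 := by omega
              rw [this, Nat.cast_sub (by omega : 2 ≤ k + d)]
              push_cast; ring
            rw [e, hcc, hj1]
            push_cast
            linarith
          · obtain ⟨W, hWsub, hWc⟩ := Finset.exists_subset_card_eq hge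
            have h0W : (0 : Fin (n + 1)) ∉ W := fun hh => h0M'' (hWsub hh)
            have c2 := chain_down_R H hempty hsubadd hwm hdim W _ hWsub h0M''
            have eW2 := L2 W h0W (le_of_eq hWc.symm)
            have eW1 := (L4' W h0W (by omega) (by omega)).1
            have hWcast : (W.card : ℝ) = (k : ℝ) + ((d : ℝ) - 1) := by
              have : W.card = k + (d - 1) := by omega
              rw [this]
              push_cast [Nat.cast_sub (by omega : 1 ≤ d)]
              ring
            have hsd : ((((M.erase i).erase i') \ W).card : ℝ) = (j : ℝ) - 2 := by
              have hnat : (((M.erase i).erase i') \ W).card = j - 2 := by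
                rw [Finset.card_sdiff_of_subset hWsub]; omega
              rw [hnat, Nat.cast_sub (by omega : 2 ≤ j)]
              push_cast; ring
            rw [hsd] at c2
            rw [hWcast] at eW1
            linarith
        linarith
  -- conclude h = d - 1
  have hΩ0 : (0 : Fin (n + 1)) ∉ Ω := Finset.notMem_erase 0 _
  have hfull := L6 (d - 1) Ω hΩ0 (by omega)
  have hpos := h_nonneg H hempty hwm (insert 0 Ω)
  have hub : h ≤ (d : ℝ) - 1 := by
    have := size_bound H hempty hsubadd hdim L0 h0L0
    rw [hL0card, hdcast] at this
    exact this
  have hlb : (d : ℝ) - 1 ≤ h := by rw [← hdcast]; linarith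
  have hval : h = (d : ℝ) - 1 := le_antisymm hub hlb
  have e := (L4' J h0J (by omega) (by omega)).2
  rw [e, hval]
  ring
end

section
/- Induction step for large subsets: suppose the entropy formula H({R} ∪ Q_J) = k + 2(d−1) − |J| holds for all J ⊆ {1,…,n} of sizes m−1 and m, where k + d − 1 ≤ m ≤ n − 1. Then using strong subadditivity, the Araki–Lieb inequality, and H({Q_i}) = 1 for all i, the same formula holds for all I ⊆ {1,…,n} with |I| = m + 1: H({R} ∪ Q_I) = k + 2(d−1) − |I|. -/
/-- induction step for large subsets: if the formula
`H({R} ∪ Q_J) = k + 2(d−1) − |J|` holds for all coded subsets `J` of sizes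
`m−1` and `m` (with `k+d−1 ≤ m ≤ n−1`), then it holds for all `I` of size `m+1`,
using strong subadditivity, Araki–Lieb, and `H({Q_i}) = 1`. -/
theorem stmt_9 (k d n : ℕ) (hk : 1 ≤ k) (hd : 2 ≤ d) (hn : n = k + 2 * (d - 1))
    (H : Finset (Fin (n + 1)) → ℝ)
    (hssa : ∀ A B : Finset (Fin (n + 1)), H (A ∪ B) + H (A ∩ B) ≤ H A + H B)
    (hAL : ∀ A B : Finset (Fin (n + 1)), Disjoint A B → H A - H B ≤ H (A ∪ B))
    (hdim : ∀ i : Fin (n + 1), i ≠ 0 → H {i} = 1)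
    (m : ℕ) (hm1 : k + d - 1 ≤ m) (hm2 : m ≤ n - 1)
    (hIH : ∀ J : Finset (Fin (n + 1)), (0 : Fin (n + 1)) ∉ J →
      (J.card = m - 1 ∨ J.card = m) →
      H (insert 0 J) = (k : ℝ) + 2 * ((d : ℝ) - 1) - (J.card : ℝ)) :
    ∀ I : Finset (Fin (n + 1)), (0 : Fin (n + 1)) ∉ I → I.card = m + 1 →
      H (insert 0 I) = (k : ℝ) + 2 * ((d : ℝ) - 1) - (I.card : ℝ) := by
  intro I h0 hcard
  have hm : 2 ≤ m := by omega
  have hne : I.Nonempty := Finset.card_pos.mp (by omega)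
  obtain ⟨i, hi⟩ := hne
  have hcardJ : (I.erase i).card = m := by
    rw [Finset.card_erase_of_mem hi, hcard]; omega
  have hne2 : (I.erase i).Nonempty := Finset.card_pos.mp (by omega)
  obtain ⟨j, hj⟩ := hne2
  have hji : j ≠ i := (Finset.mem_erase.mp hj).1
  have hjI : j ∈ I := (Finset.mem_erase.mp hj).2
  have hi0 : i ≠ 0 := fun h => h0 (h ▸ hi)
  have hj0 : j ≠ 0 := fun h => h0 (h ▸ hjI)
  set J : Finset (Fin (n + 1)) := I.erase i with hJ
  set J' : Finset (Fin (n + 1)) := I.erase j with hJ'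
  set K : Finset (Fin (n + 1)) := J.erase j with hK
  have h0J : (0 : Fin (n + 1)) ∉ J := fun h => h0 (Finset.mem_of_mem_erase h)
  have h0J' : (0 : Fin (n + 1)) ∉ J' := fun h => h0 (Finset.mem_of_mem_erase h)
  have h0K : (0 : Fin (n + 1)) ∉ K := fun h => h0J (Finset.mem_of_mem_erase h)
  have hcardJ' : J'.card = m := by
    rw [hJ', Finset.card_erase_of_mem hjI, hcard]; omega
  have hcardK : K.card = m - 1 := by
    rw [hK, Finset.card_erase_of_mem hj, hcardJ]
  have hHJ : H (insert 0 J) = (k : ℝ) + 2 * ((d : ℝ) - 1) - (m : ℝ) := by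
    have := hIH J h0J (Or.inr hcardJ); rw [hcardJ] at this; exact this
  have hHJ' : H (insert 0 J') = (k : ℝ) + 2 * ((d : ℝ) - 1) - (m : ℝ) := by
    have := hIH J' h0J' (Or.inr hcardJ'); rw [hcardJ'] at this; exact this
  have hHK : H (insert 0 K) = (k : ℝ) + 2 * ((d : ℝ) - 1) - ((m : ℝ) - 1) := by
    have := hIH K h0K (Or.inl hcardK)
    rw [hcardK] at this
    rw [this]
    have : ((m - 1 : ℕ) : ℝ) = (m : ℝ) - 1 := by
      have : (1 : ℕ) ≤ m := by omega
      push_cast [Nat.cast_sub this]; ring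
    rw [this]
  -- union and intersection identities
  have hun : insert 0 J ∪ insert 0 J' = insert 0 I := by
    ext a
    simp only [Finset.mem_union, Finset.mem_insert, hJ, hJ', Finset.mem_erase]
    constructor
    · rintro (⟨h | ⟨_, h⟩⟩ | ⟨h | ⟨_, h⟩⟩) <;> tauto
    · rintro (h | h)
      · tauto
      · by_cases hai : a = i
        · right; right; exact ⟨hai ▸ fun hc => hji hc.symm, h⟩
        · left; right; exact ⟨hai, h⟩
  have hint : insert 0 J ∩ insert 0 J' = insert 0 K := by
    ext a
    simp only [Finset.mem_inter, Finset.mem_insert, hJ, hJ', hK, Finset.mem_erase]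
    tauto
  have hub := hssa (insert 0 J) (insert 0 J')
  rw [hun, hint, hHJ, hHJ', hHK] at hub
  -- lower bound via Araki–Lieb
  have hdisj : Disjoint (insert 0 J) ({i} : Finset (Fin (n + 1))) := by
    simp only [Finset.disjoint_singleton_right, Finset.mem_insert, hJ, Finset.mem_erase]
    push_neg
    exact ⟨hi0, fun h => absurd rfl h⟩
  have hun2 : insert 0 J ∪ {i} = insert 0 I := by
    ext a
    simp only [Finset.mem_union, Finset.mem_insert, hJ, Finset.mem_erase,
      Finset.mem_singleton]
    constructor
    · rintro (⟨h | ⟨_, h⟩⟩ | h) <;> first | tauto | (subst h; tauto)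
    · rintro (h | h)
      · tauto
      · by_cases hai : a = i
        · tauto
        · left; right; exact ⟨hai, h⟩
  have hlb := hAL (insert 0 J) {i} hdisj
  rw [hun2, hHJ, hdim i hi0] at hlb
  rw [hcard]
  push_cast
  linarith
end

section
/- For a quantum MDS code (n = k + 2(d−1)), for every I ⊆ {1,…,n} with |I| > k + d − 1, one has H(Q_I) = 2(k + d − 1) − |I|. -/
open Finset

/-- Bundled hypotheses. -/
structure QC (k d n : ℕ) (H : Finset (Fin (n+1)) → ℝ) : Prop where
  hk : 1 ≤ k
  hd : 2 ≤ d
  hn : n = k + 2*(d-1)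
  hempty : H ∅ = 0
  hsubadd : ∀ A B : Finset (Fin (n+1)), Disjoint A B → H (A ∪ B) ≤ H A + H B
  hssa : ∀ A B : Finset (Fin (n+1)), H (A ∪ B) + H (A ∩ B) ≤ H A + H B
  hwm : ∀ A B : Finset (Fin (n+1)), H (A \ B) + H (B \ A) ≤ H A + H B
  hdim : ∀ i : Fin (n+1), i ≠ 0 → H {i} ≤ 1
  hR : H {0} = (k : ℝ)
  hdec : ∀ I : Finset (Fin (n+1)), (0 : Fin (n+1)) ∉ I → I.card = n - (d-1) →
      H {0} + H I - H (insert 0 I) = 2*(k : ℝ)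

namespace QC

variable {k d n : ℕ} {H : Finset (Fin (n+1)) → ℝ}

lemma sub_omega {A : Finset (Fin (n+1))} (h : (0 : Fin (n+1)) ∉ A) :
    A ⊆ (univ : Finset (Fin (n+1))).erase 0 := fun x hx =>
  mem_erase.2 ⟨fun h0 => h (h0 ▸ hx), mem_univ x⟩

lemma card_omega : ((univ : Finset (Fin (n+1))).erase 0).card = n := by
  rw [card_erase_of_mem (mem_univ _), card_univ, Fintype.card_fin]
  omega

lemma card_le_n {A : Finset (Fin (n+1))} (h : (0 : Fin (n+1)) ∉ A) : A.card ≤ n := by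
  have := card_le_card (sub_omega h)
  rwa [card_omega] at this

lemma nonneg (c : QC k d n H) (A : Finset (Fin (n+1))) : 0 ≤ H A := by
  have h := c.hwm A A
  simp only [sdiff_self, Finset.bot_eq_empty, c.hempty] at h
  linarith

lemma le_card (c : QC k d n H) :
    ∀ A : Finset (Fin (n+1)), (0 : Fin (n+1)) ∉ A → H A ≤ (A.card : ℝ) := by
  intro A
  induction A using Finset.induction_on with
  | empty => intro _; simp [c.hempty]
  | @insert a s ha ih =>
    intro h0
    have ha0 : a ≠ 0 := fun h => h0 (by simp [h])
    have h0s : (0 : Fin (n+1)) ∉ s := fun h => h0 (mem_insert_of_mem h)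
    have hdisj : Disjoint {a} s := by simpa using ha
    have hsum := c.hsubadd {a} s hdisj
    rw [← insert_eq] at hsum
    have h1 := c.hdim a ha0
    have h2 := ih h0s
    rw [card_insert_of_notMem ha]
    push_cast
    linarith

lemma al (c : QC k d n H) (A B : Finset (Fin (n+1))) (hAB : Disjoint A B) :
    H A ≤ H (A ∪ B) + H B := by
  have h := c.hwm (A ∪ B) B
  have hd := Finset.disjoint_left.1 hAB
  have e1 : (A ∪ B) \ B = A := by
    ext x
    simp only [mem_sdiff, mem_union]
    constructor
    · rintro ⟨h | h, hb⟩
      · exact h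
      · exact absurd h hb
    · intro hx; exact ⟨Or.inl hx, hd hx⟩
  have e2 : B \ (A ∪ B) = ∅ := by
    rw [sdiff_eq_empty_iff_subset]
    exact subset_union_right
  rw [e1, e2, c.hempty] at h
  linarith

lemma g_big (c : QC k d n H) (J : Finset (Fin (n+1))) (h0 : (0 : Fin (n+1)) ∉ J)
    (hc : n - (d-1) ≤ J.card) : H (insert 0 J) = H J - k := by
  obtain ⟨J₀, hsub, hcard⟩ := Finset.exists_subset_card_eq (s := J) (n := (n - (d-1))) hc
  have h0J₀ : (0 : Fin (n+1)) ∉ J₀ := fun h => h0 (hsub h)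
  have hde := c.hdec J₀ h0J₀ hcard
  rw [c.hR] at hde
  have hs := c.hssa (insert 0 J₀) J
  have e1 : insert 0 J₀ ∪ J = insert 0 J := by
    ext x
    simp only [mem_union, mem_insert]
    constructor
    · rintro ((rfl | h) | h)
      · exact Or.inl rfl
      · exact Or.inr (hsub h)
      · exact Or.inr h
    · rintro (rfl | h)
      · exact Or.inl (Or.inl rfl)
      · exact Or.inr h
  have e2 : insert 0 J₀ ∩ J = J₀ := by
    ext x
    simp only [mem_inter, mem_insert]
    constructor
    · rintro ⟨rfl | h, hJ⟩
      · exact absurd hJ h0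
      · exact h
    · intro h; exact ⟨Or.inr h, hsub h⟩
  rw [e1, e2] at hs
  have hal := c.al J {0} (by simpa using h0)
  have e3 : J ∪ {0} = insert 0 J := by
    rw [insert_eq, union_comm]
  rw [e3, c.hR] at hal
  linarith

lemma g_small (c : QC k d n H) (S : Finset (Fin (n+1))) (h0 : (0 : Fin (n+1)) ∉ S)
    (hc : S.card ≤ d - 1) : H (insert 0 S) = k + H S := by
  have hup := c.hsubadd {0} S (by simpa using h0)
  rw [← insert_eq, c.hR] at hup
  -- lower bound
  set T := (univ : Finset (Fin (n+1))).erase 0 \ S with hT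
  have hTc : T.card = n - S.card := by
    rw [hT, card_sdiff_of_subset (sub_omega h0), card_omega]
  have hTcard : n - (d-1) ≤ T.card := by
    rw [hTc]; omega
  obtain ⟨J, hJT, hJcard⟩ := Finset.exists_subset_card_eq (s := T) (n := (n - (d-1))) hTcard
  have h0J : (0 : Fin (n+1)) ∉ J := fun h => by
    have := hJT h
    rw [hT, mem_sdiff, mem_erase] at this
    exact this.1.1 rfl
  have hdisj : ∀ x, x ∈ J → x ∉ S := fun x hx => by
    have := hJT hx
    rw [hT, mem_sdiff] at this
    exact this.2
  have hw := c.hwm (insert 0 S) (insert 0 J)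
  have e1 : (insert 0 S) \ (insert 0 J) = S := by
    ext x
    simp only [mem_sdiff, mem_insert, not_or]
    constructor
    · rintro ⟨rfl | h, h1, h2⟩
      · exact absurd rfl h1
      · exact h
    · intro h
      exact ⟨Or.inr h, fun h0' => h0 (h0' ▸ h), fun hJ => hdisj x hJ h⟩
  have e2 : (insert 0 J) \ (insert 0 S) = J := by
    ext x
    simp only [mem_sdiff, mem_insert, not_or]
    constructor
    · rintro ⟨rfl | h, h1, h2⟩
      · exact absurd rfl h1
      · exact h
    · intro h
      exact ⟨Or.inr h, fun h0' => h0J (h0' ▸ h), fun hS => hdisj x h hS⟩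
  rw [e1, e2] at hw
  rw [c.g_big J h0J (le_of_eq hJcard.symm)] at hw
  linarith

lemma g_drop (c : QC k d n H) (S : Finset (Fin (n+1))) (x : Fin (n+1))
    (h0 : (0 : Fin (n+1)) ∉ S) (hc : S.card = d - 1) (hx0 : x ≠ 0) (hxS : x ∉ S) :
    H (insert 0 (insert x S)) ≤ H (insert 0 S) - 1 := by
  have h0ix : (0 : Fin (n+1)) ∉ insert x S := by
    intro hmem
    rcases mem_insert.1 hmem with h | h
    · exact hx0 h.symm
    · exact h0 h
  have hixc : (insert x S).card = d - 1 + 1 := by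
    rw [card_insert_of_notMem hxS, hc]
  have hkey : (n - (d-1)) - (d - 1 + 1) + (insert x S).card ≤
      ((univ : Finset (Fin (n+1))).erase 0).card := by
    rw [hixc, card_omega]
    have := c.hn; have := c.hk; have := c.hd
    omega
  obtain ⟨J, hsubJ, hJΩ, hJcard⟩ :=
    Finset.exists_subsuperset_card_eq (sub_omega h0ix) (Nat.le_add_left _ _) hkey
  have hJm : J.card = n - (d-1) := by
    rw [hJcard, hixc]
    have := c.hn; have := c.hk; have := c.hd
    omega
  have h0J : (0 : Fin (n+1)) ∉ J := fun h => (mem_erase.1 (hJΩ h)).1 rfl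
  have hw := c.hwm (insert 0 J) (J \ insert x S)
  have e1 : (insert 0 J) \ (J \ insert x S) = insert 0 (insert x S) := by
    ext y
    simp only [mem_sdiff, mem_insert, not_and, not_not]
    constructor
    · rintro ⟨rfl | h, h2⟩
      · exact Or.inl rfl
      · exact Or.inr (h2 h)
    · rintro (rfl | h)
      · exact ⟨Or.inl rfl, fun h' => absurd h' h0J⟩
      · exact ⟨Or.inr (hsubJ (mem_insert.2 h)), fun _ => h⟩
  have e2 : (J \ insert x S) \ (insert 0 J) = ∅ := by
    rw [sdiff_eq_empty_iff_subset]
    exact sdiff_subset.trans (subset_insert _ _)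
  rw [e1, e2, c.hempty] at hw
  rw [c.g_big J h0J (le_of_eq hJm.symm)] at hw
  have hSJ : S ⊆ J := (subset_insert x S).trans hsubJ
  have hJsplit : S ∪ J \ S = J := union_sdiff_of_subset hSJ
  have hsum := c.hsubadd S (J \ S) disjoint_sdiff
  rw [hJsplit] at hsum
  have h0JS : (0 : Fin (n+1)) ∉ J \ S := fun h => h0J (mem_sdiff.1 h).1
  have h0Jix : (0 : Fin (n+1)) ∉ J \ insert x S := fun h => h0J (mem_sdiff.1 h).1
  have hcard1 : (J \ S).card = k := by
    rw [card_sdiff_of_subset hSJ, hJm, hc]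
    have := c.hn; have := c.hk; have := c.hd
    omega
  have hcard2 : (J \ insert x S).card = k - 1 := by
    rw [card_sdiff_of_subset hsubJ, hJm, hixc]
    have := c.hn; have := c.hk; have := c.hd
    omega
  have hb1 : H (J \ S) ≤ (k : ℝ) := by
    have := c.le_card (J \ S) h0JS
    rw [hcard1] at this
    exact this
  have hb2 : H (J \ insert x S) ≤ (k : ℝ) - 1 := by
    have := c.le_card (J \ insert x S) h0Jix
    rw [hcard2] at this
    have hcast : ((k - 1 : ℕ) : ℝ) = (k : ℝ) - 1 := by
      rw [Nat.cast_sub c.hk]; norm_num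
    rwa [hcast] at this
  have hgs := c.g_small S h0 (le_of_eq hc)
  linarith

lemma card_le_H (c : QC k d n H) :
    ∀ T : Finset (Fin (n+1)), (0 : Fin (n+1)) ∉ T → T.card ≤ n - (d-1) →
      (T.card : ℝ) ≤ H T := by
  suffices h : ∀ N : ℕ, ∀ T : Finset (Fin (n+1)), (0 : Fin (n+1)) ∉ T → T.card = N →
      N ≤ n - (d-1) → (N : ℝ) ≤ H T by
    intro T h0 hc
    exact h T.card T h0 rfl hc
  intro N
  induction N with
  | zero => intro T _ _ _; simpa using c.nonneg T
  | succ N ih =>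
    intro T h0 hcard hle
    obtain ⟨x, hxT⟩ : T.Nonempty := card_pos.1 (by omega)
    have hx0 : x ≠ 0 := fun h => h0 (h ▸ hxT)
    have hT'c : (T.erase x).card = N := by
      rw [card_erase_of_mem hxT, hcard]; omega
    have h0T' : (0 : Fin (n+1)) ∉ T.erase x := fun h => h0 (mem_of_mem_erase h)
    set W := (univ : Finset (Fin (n+1))).erase 0 \ T with hW
    have hWc : W.card = n - T.card := by
      rw [hW, card_sdiff_of_subset (sub_omega h0), card_omega]
    have hWcard : d - 1 ≤ W.card := by
      rw [hWc, hcard]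
      have := c.hn; have := c.hk; have := c.hd
      omega
    obtain ⟨S, hSW, hScard⟩ := Finset.exists_subset_card_eq (s := W) (n := (d-1)) hWcard
    have h0S : (0 : Fin (n+1)) ∉ S := fun h => by
      have := hSW h
      rw [hW, mem_sdiff, mem_erase] at this
      exact this.1.1 rfl
    have hST : ∀ y, y ∈ S → y ∉ T := fun y hy => by
      have := hSW hy
      rw [hW, mem_sdiff] at this
      exact this.2
    have hxS : x ∉ S := fun h => hST x h hxT
    have hw := c.hwm T (insert 0 (insert x S))
    have e1 : T \ (insert 0 (insert x S)) = T.erase x := by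
      ext y
      simp only [mem_sdiff, mem_insert, not_or, mem_erase]
      constructor
      · rintro ⟨hy, _, hyx, _⟩
        exact ⟨hyx, hy⟩
      · rintro ⟨hyx, hy⟩
        exact ⟨hy, fun h => h0 (h ▸ hy), hyx, fun h => hST y h hy⟩
    have e2 : (insert 0 (insert x S)) \ T = insert 0 S := by
      ext y
      simp only [mem_sdiff, mem_insert]
      constructor
      · rintro ⟨rfl | rfl | h, hyT⟩
        · exact Or.inl rfl
        · exact absurd hxT hyT
        · exact Or.inr h
      · rintro (rfl | h)
        · exact ⟨Or.inl rfl, h0⟩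
        · exact ⟨Or.inr (Or.inr h), hST y h⟩
    rw [e1, e2] at hw
    have h5 := c.g_drop S x h0S hScard hx0 hxS
    have h6 := ih (T.erase x) h0T' hT'c (by omega)
    push_cast
    linarith

lemma H_le (c : QC k d n H) :
    ∀ t : ℕ, ∀ I : Finset (Fin (n+1)), (0 : Fin (n+1)) ∉ I →
      I.card = (n - (d-1)) + t → H I ≤ ((n - (d-1) : ℕ) : ℝ) - t := by
  intro t
  induction t with
  | zero =>
    intro I h0 hc
    have := c.le_card I h0
    rw [hc] at this
    simpa using this
  | succ t ih =>
    intro I h0 hc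
    have harith := c.hn; have := c.hk; have := c.hd
    obtain ⟨x, hxI⟩ : I.Nonempty := card_pos.1 (by omega)
    have hx0 : x ≠ 0 := fun h => h0 (h ▸ hxI)
    set J₁ := I.erase x with hJ₁def
    have hJ₁c : J₁.card = (n - (d-1)) + t := by
      rw [hJ₁def, card_erase_of_mem hxI, hc]; omega
    have h0J₁ : (0 : Fin (n+1)) ∉ J₁ := fun h => h0 (mem_of_mem_erase h)
    obtain ⟨D, hDJ₁, hDc⟩ := Finset.exists_subset_card_eq (s := J₁) (n := ((n - (d-1)) - 1)) (by omega)
    have hxJ₁ : x ∉ J₁ := notMem_erase x I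
    have hxD : x ∉ D := fun h => hxJ₁ (hDJ₁ h)
    have h0D : (0 : Fin (n+1)) ∉ D := fun h => h0J₁ (hDJ₁ h)
    have hJ₂c : (insert x D).card = n - (d-1) := by
      rw [card_insert_of_notMem hxD, hDc]
      omega
    have h0J₂ : (0 : Fin (n+1)) ∉ insert x D := by
      intro hmem
      rcases mem_insert.1 hmem with h | h
      · exact hx0 h.symm
      · exact h0D h
    have hs := c.hssa (insert 0 J₁) (insert 0 (insert x D))
    have e1 : insert 0 J₁ ∪ insert 0 (insert x D) = insert 0 I := by
      ext y
      simp only [mem_union, mem_insert]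
      constructor
      · rintro (h | h)
        · rcases h with rfl | h
          · exact Or.inl rfl
          · exact Or.inr (mem_of_mem_erase h)
        · rcases h with rfl | rfl | h
          · exact Or.inl rfl
          · exact Or.inr hxI
          · exact Or.inr (mem_of_mem_erase (hDJ₁ h))
      · rintro (rfl | h)
        · exact Or.inl (Or.inl rfl)
        · by_cases hyx : y = x
          · exact Or.inr (Or.inr (Or.inl hyx))
          · exact Or.inl (Or.inr (mem_erase.2 ⟨hyx, h⟩))
    have e2 : insert 0 J₁ ∩ insert 0 (insert x D) = insert 0 D := by
      ext y
      simp only [mem_inter, mem_insert]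
      constructor
      · rintro ⟨h1, h2⟩
        rcases h1 with rfl | h1
        · exact Or.inl rfl
        · rcases h2 with rfl | rfl | h2
          · exact Or.inl rfl
          · exact absurd h1 hxJ₁
          · exact Or.inr h2
      · rintro (rfl | h)
        · exact ⟨Or.inl rfl, Or.inl rfl⟩
        · exact ⟨Or.inr (hDJ₁ h), Or.inr (Or.inr h)⟩
    rw [e1, e2] at hs
    rw [c.g_big I h0 (by omega), c.g_big J₁ h0J₁ (by omega),
        c.g_big (insert x D) h0J₂ (le_of_eq hJ₂c.symm)] at hs
    -- lower bound on H (insert 0 D)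
    obtain ⟨D₀, hD₀D, hD₀c⟩ := Finset.exists_subset_card_eq (s := D) (n := (d-1)) (by omega)
    have h0D₀ : (0 : Fin (n+1)) ∉ D₀ := fun h => h0D (hD₀D h)
    have hw := c.hwm (insert 0 D) (D \ D₀)
    have e3 : (insert 0 D) \ (D \ D₀) = insert 0 D₀ := by
      ext y
      simp only [mem_sdiff, mem_insert, not_and, not_not]
      constructor
      · rintro ⟨rfl | h, h2⟩
        · exact Or.inl rfl
        · exact Or.inr (h2 h)
      · rintro (rfl | h)
        · exact ⟨Or.inl rfl, fun h' => absurd h' h0D⟩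
        · exact ⟨Or.inr (hD₀D h), fun _ => h⟩
    have e4 : (D \ D₀) \ (insert 0 D) = ∅ := by
      rw [sdiff_eq_empty_iff_subset]
      exact sdiff_subset.trans (subset_insert _ _)
    rw [e3, e4, c.hempty] at hw
    have hgs := c.g_small D₀ h0D₀ (le_of_eq hD₀c)
    have hD₀H : ((d - 1 : ℕ) : ℝ) ≤ H D₀ := by
      have := c.card_le_H D₀ h0D₀ (by omega)
      rwa [hD₀c] at this
    have h0DD₀ : (0 : Fin (n+1)) ∉ D \ D₀ := fun h => h0D (mem_sdiff.1 h).1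
    have hDD₀c : (D \ D₀).card = k - 1 := by
      rw [card_sdiff_of_subset hD₀D, hDc, hD₀c]
      omega
    have hDD₀H : H (D \ D₀) ≤ (k : ℝ) - 1 := by
      have := c.le_card (D \ D₀) h0DD₀
      rw [hDD₀c] at this
      have hcast : ((k - 1 : ℕ) : ℝ) = (k : ℝ) - 1 := by
        rw [Nat.cast_sub c.hk]; norm_num
      rwa [hcast] at this
    have hih := ih J₁ h0J₁ hJ₁c
    have hJ₂H : H (insert x D) ≤ ((n - (d-1) : ℕ) : ℝ) := by
      have := c.le_card (insert x D) h0J₂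
      rwa [hJ₂c] at this
    have hd1 : ((d - 1 : ℕ) : ℝ) = (d : ℝ) - 1 := by
      rw [Nat.cast_sub (by omega : 1 ≤ d)]; norm_num
    have hm : ((n - (d-1) : ℕ) : ℝ) = (k : ℝ) + (d : ℝ) - 1 := by
      have h1 : n - (d - 1) = k + (d - 1) := by omega
      rw [h1]
      push_cast [Nat.cast_sub (by omega : 1 ≤ d)]
      ring
    push_cast
    rw [hm] at hih hJ₂H ⊢
    rw [hd1] at hD₀H
    linarith

lemma H_ge (c : QC k d n H) (I : Finset (Fin (n+1))) (h0 : (0 : Fin (n+1)) ∉ I)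
    (hc : n - (d-1) ≤ I.card) :
    2*((n - (d-1) : ℕ) : ℝ) - I.card ≤ H I := by
  have harith := c.hn; have := c.hk; have := c.hd
  have hIn : I.card ≤ n := card_le_n h0
  set C := (univ : Finset (Fin (n+1))).erase 0 \ I with hC
  have hCc : C.card = n - I.card := by
    rw [hC, card_sdiff_of_subset (sub_omega h0), card_omega]
  have h0C : (0 : Fin (n+1)) ∉ C := fun h => by
    have := mem_sdiff.1 h
    exact (mem_erase.1 this.1).1 rfl
  have hCI : ∀ y, y ∈ C → y ∉ I := fun y hy => (mem_sdiff.1 hy).2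
  obtain ⟨D, hDI, hDc⟩ := Finset.exists_subset_card_eq (s := I) (n := (I.card - (d-1))) (by omega)
  have h0D : (0 : Fin (n+1)) ∉ D := fun h => h0 (hDI h)
  have hdisjCD : Disjoint C D := Finset.disjoint_left.2 (fun {y} hy hyD => hCI y hy (hDI hyD))
  have hJ'c : (C ∪ D).card = n - (d-1) := by
    rw [card_union_of_disjoint hdisjCD, hCc, hDc]
    omega
  have h0J' : (0 : Fin (n+1)) ∉ C ∪ D := by
    rw [mem_union]; rintro (h | h)
    · exact h0C h
    · exact h0D h
  have hw := c.hwm (insert 0 (C ∪ D)) I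
  have e1 : (insert 0 (C ∪ D)) \ I = insert 0 C := by
    ext y
    simp only [mem_sdiff, mem_insert, mem_union]
    constructor
    · rintro ⟨rfl | h | h, hyI⟩
      · exact Or.inl rfl
      · exact Or.inr h
      · exact absurd (hDI h) hyI
    · rintro (rfl | h)
      · exact ⟨Or.inl rfl, h0⟩
      · exact ⟨Or.inr (Or.inl h), hCI y h⟩
  have e2 : I \ (insert 0 (C ∪ D)) = I \ D := by
    ext y
    simp only [mem_sdiff, mem_insert, mem_union, not_or]
    constructor
    · rintro ⟨hyI, _, _, hyD⟩
      exact ⟨hyI, hyD⟩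
    · rintro ⟨hyI, hyD⟩
      exact ⟨hyI, fun h => h0 (h ▸ hyI), fun h => hCI y h hyI, hyD⟩
  rw [e1, e2] at hw
  rw [c.g_big (C ∪ D) h0J' (le_of_eq hJ'c.symm)] at hw
  have hgs := c.g_small C h0C (by omega)
  have hCH : (C.card : ℝ) ≤ H C := c.card_le_H C h0C (by omega)
  have h0ID : (0 : Fin (n+1)) ∉ I \ D := fun h => h0 (mem_sdiff.1 h).1
  have hIDc : (I \ D).card = d - 1 := by
    rw [card_sdiff_of_subset hDI, hDc]
    omega
  have hIDH : ((d-1 : ℕ) : ℝ) ≤ H (I \ D) := by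
    have := c.card_le_H (I \ D) h0ID (by omega)
    rwa [hIDc] at this
  have hJ'H : H (C ∪ D) ≤ ((n - (d-1) : ℕ) : ℝ) := by
    have := c.le_card (C ∪ D) h0J'
    rwa [hJ'c] at this
  have hd1 : ((d - 1 : ℕ) : ℝ) = (d : ℝ) - 1 := by
    rw [Nat.cast_sub (by omega : 1 ≤ d)]; norm_num
  have hm : ((n - (d-1) : ℕ) : ℝ) = (k : ℝ) + (d : ℝ) - 1 := by
    have h1 : n - (d - 1) = k + (d - 1) := by omega
    rw [h1]
    push_cast [Nat.cast_sub (by omega : 1 ≤ d)]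
    ring
  have hCcast : (C.card : ℝ) = (n : ℝ) - I.card := by
    rw [hCc, Nat.cast_sub hIn]
  have hncast : (n : ℝ) = (k : ℝ) + 2*((d : ℝ) - 1) := by
    rw [harith]
    push_cast [Nat.cast_sub (by omega : 1 ≤ d)]
    ring
  rw [hm] at hJ'H ⊢
  rw [hd1] at hIDH
  linarith

end QC

/-- for |I| > k + d − 1, H(Q_I) = 2(k + d − 1) − |I|. -/
theorem stmt_11 (k d n : ℕ) (hk : 1 ≤ k) (hd : 2 ≤ d) (hn : n = k + 2 * (d - 1))
    (H : Finset (Fin (n + 1)) → ℝ)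
    (hempty : H ∅ = 0)
    (hsubadd : ∀ A B : Finset (Fin (n + 1)), Disjoint A B → H (A ∪ B) ≤ H A + H B)
    (hssa : ∀ A B : Finset (Fin (n + 1)), H (A ∪ B) + H (A ∩ B) ≤ H A + H B)
    (hwm : ∀ A B : Finset (Fin (n + 1)), H (A \ B) + H (B \ A) ≤ H A + H B)
    (hdim : ∀ i : Fin (n + 1), i ≠ 0 → H {i} ≤ 1)
    (hR : H {0} = (k : ℝ))
    (hdec : ∀ I : Finset (Fin (n + 1)), (0 : Fin (n + 1)) ∉ I → I.card = n - (d - 1) →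
      H {0} + H I - H (insert 0 I) = 2 * (k : ℝ)) :
    ∀ I : Finset (Fin (n + 1)), (0 : Fin (n + 1)) ∉ I → k + d - 1 < I.card →
      H I = 2 * ((k : ℝ) + (d : ℝ) - 1) - (I.card : ℝ) := by
  intro I h0 hlt
  have c : QC k d n H := ⟨hk, hd, hn, hempty, hsubadd, hssa, hwm, hdim, hR, hdec⟩
  have hIn : I.card ≤ n := QC.card_le_n h0
  have hmle : n - (d-1) ≤ I.card := by omega
  have hup := c.H_le (I.card - (n - (d-1))) I h0 (by omega)
  have hlow := c.H_ge I h0 hmle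
  have hm : ((n - (d-1) : ℕ) : ℝ) = (k : ℝ) + (d : ℝ) - 1 := by
    have h1 : n - (d - 1) = k + (d - 1) := by omega
    rw [h1]
    push_cast [Nat.cast_sub (by omega : 1 ≤ d)]
    ring
  have htcast : ((I.card - (n - (d-1)) : ℕ) : ℝ) = (I.card : ℝ) - ((n - (d-1) : ℕ) : ℝ) := by
    rw [Nat.cast_sub hmle]
  rw [htcast, hm] at hup
  rw [hm] at hlow
  linarith
end

section
/- Full entropy characterization of quantum MDS codes: for every subset 𝒬 of the ground set {R, Q_1, …, Q_n} with weight w(𝒬) (where w({R}) = k and w({Q_i}) = 1), one has H(𝒬) = min(w(𝒬), 2(k + d − 1) − w(𝒬)). -/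
namespace Stmt12

open Finset

section SetLemmas
variable {α : Type*} [DecidableEq α]

theorem ins_inter_ins (a : α) (s t : Finset α) :
    insert a s ∩ insert a t = insert a (s ∩ t) := by
  ext x
  simp only [mem_inter, mem_insert]
  tauto

theorem ins_sdiff_ins (a : α) {s t : Finset α} (has : a ∉ s) :
    insert a s \ insert a t = s \ t := by
  ext x
  simp only [mem_sdiff, mem_insert, not_or]
  constructor
  · rintro ⟨rfl | hx, h2, h3⟩
    · exact absurd rfl h2
    · exact ⟨hx, h3⟩
  · rintro ⟨hx, ht⟩
    exact ⟨Or.inr hx, fun h => has (h ▸ hx), ht⟩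

theorem ins_inter_ins' {a : α} {s t : Finset α} (hij : a ∉ t) (hji : ∀ x ∈ s, x ≠ a) :
    insert a t ∩ s = t ∩ s := insert_inter_of_notMem (fun h => (hji a h) rfl)

end SetLemmas

/-- Bundled context for the MDS entropy argument.  Here `m = d - 1`. -/
structure Ctx (k m n : ℕ) (H : Finset (Fin (n + 1)) → ℝ) : Prop where
  hk : 1 ≤ k
  hm : 1 ≤ m
  hn : n = k + 2 * m
  hempty : H ∅ = 0
  hssa : ∀ A B, H (A ∪ B) + H (A ∩ B) ≤ H A + H B
  hwm : ∀ A B, H (A \ B) + H (B \ A) ≤ H A + H B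
  hdim : ∀ i : Fin (n + 1), i ≠ 0 → H {i} ≤ 1
  hR : H {0} = (k : ℝ)
  hdec : ∀ I, (0 : Fin (n + 1)) ∉ I → I.card = k + m → H (insert 0 I) = H I - (k : ℝ)

namespace Ctx

variable {k m n : ℕ} {H : Finset (Fin (n + 1)) → ℝ} (hc : Ctx k m n H)

include hc

theorem nonneg (A : Finset (Fin (n + 1))) : 0 ≤ H A := by
  have h := hc.hwm A A
  rw [sdiff_self, bot_eq_empty, hc.hempty] at h
  linarith

theorem subadd (A B : Finset (Fin (n + 1))) (hAB : Disjoint A B) :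
    H (A ∪ B) ≤ H A + H B := by
  have h := hc.hssa A B
  rw [disjoint_iff_inter_eq_empty.mp hAB, hc.hempty] at h
  linarith

theorem card_le : ∀ U : Finset (Fin (n + 1)), (0 : Fin (n + 1)) ∉ U → H U ≤ U.card := by
  intro U
  induction U using Finset.induction_on with
  | empty => intro _; simp [hc.hempty]
  | @insert a s ha ih =>
    intro h0
    have ha0 : a ≠ 0 := fun h => h0 (by simp [h])
    have hs0 : (0 : Fin (n + 1)) ∉ s := fun h => h0 (mem_insert_of_mem h)
    have h1 : H (insert a s) ≤ H {a} + H s := by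
      have := hc.subadd {a} s (by simpa using ha)
      rwa [← insert_eq] at this
    have h2 := hc.hdim a ha0
    have h3 := ih hs0
    rw [card_insert_of_notMem ha]
    push_cast
    linarith

/-- Araki–Lieb style: `H (A \ B) ≤ H (A ∪ B) + H B`. -/
theorem al (A B : Finset (Fin (n + 1))) : H (A \ B) ≤ H (A ∪ B) + H B := by
  have h := hc.hwm (A ∪ B) B
  rw [union_sdiff_right, sdiff_eq_empty_iff_subset.mpr subset_union_right, hc.hempty] at h
  linarith

theorem al2 (A B : Finset (Fin (n + 1))) (hAB : Disjoint A B) :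
    H A ≤ H (A ∪ B) + H B := by
  have h := hc.al A B
  rwa [hAB.sdiff_eq_left] at h

theorem card_le_n (U : Finset (Fin (n + 1))) (h0 : (0 : Fin (n + 1)) ∉ U) : U.card ≤ n := by
  have hsub : U ⊆ (univ : Finset (Fin (n + 1))).erase 0 :=
    subset_erase.mpr ⟨subset_univ U, h0⟩
  have := card_le_card hsub
  rwa [card_erase_of_mem (mem_univ 0), card_univ, Fintype.card_fin, Nat.add_sub_cancel] at this

theorem qcard : ((univ : Finset (Fin (n + 1))).erase 0).card = n := by
  rw [card_erase_of_mem (mem_univ 0), card_univ, Fintype.card_fin, Nat.add_sub_cancel]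

/-- Existence of a qudit superset of prescribed cardinality. -/
theorem exists_sup (U : Finset (Fin (n + 1))) (h0 : (0 : Fin (n + 1)) ∉ U) (t : ℕ)
    (h1 : U.card ≤ t) (h2 : t ≤ n) :
    ∃ V, U ⊆ V ∧ (0 : Fin (n + 1)) ∉ V ∧ V.card = t := by
  have hsub : U ⊆ (univ : Finset (Fin (n + 1))).erase 0 :=
    subset_erase.mpr ⟨subset_univ U, h0⟩
  obtain ⟨V, hUV, hVsub, hV⟩ :=
    exists_subsuperset_card_eq hsub h1 (by rw [hc.qcard]; exact h2)
  exact ⟨V, hUV, fun h => (mem_erase.mp (hVsub h)).1 rfl, hV⟩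

theorem mix_le (U : Finset (Fin (n + 1))) (h0 : (0 : Fin (n + 1)) ∉ U) :
    H (insert 0 U) ≤ H U + k := by
  have h := hc.subadd {0} U (by simpa using h0)
  rw [hc.hR] at h
  have : ({0} : Finset (Fin (n + 1))) ∪ U = insert 0 U := by rw [insert_eq]
  rw [this] at h
  linarith

theorem al0 (U : Finset (Fin (n + 1))) (h0 : (0 : Fin (n + 1)) ∉ U) :
    H U ≤ H (insert 0 U) + k := by
  have h := hc.al2 U {0} (by simpa using h0)
  have : U ∪ {0} = insert 0 U := by rw [union_comm, ← insert_eq]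
  rw [this, hc.hR] at h
  exact h

theorem dec_ge (U : Finset (Fin (n + 1))) (h0 : (0 : Fin (n + 1)) ∉ U)
    (hcard : k + m ≤ U.card) : H (insert 0 U) = H U - k := by
  obtain ⟨I, hIU, hI⟩ := exists_subset_card_eq (s := U) (n := k + m) hcard
  have h0I : (0 : Fin (n + 1)) ∉ I := fun h => h0 (hIU h)
  have hdecI := hc.hdec I h0I hI
  -- upper bound via SSA
  have hun : insert 0 I ∪ U = insert 0 U := by
    rw [insert_union, union_eq_right.mpr hIU]
  have hin : insert 0 I ∩ U = I := by
    rw [insert_inter_of_notMem h0, inter_eq_left.mpr hIU]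
  have hssa := hc.hssa (insert 0 I) U
  rw [hun, hin, hdecI] at hssa
  have hlow := hc.al0 U h0
  linarith

theorem sec_eq_aux (C : Finset (Fin (n + 1))) (h0 : (0 : Fin (n + 1)) ∉ C)
    (hcard : C.card = m) : H C + k ≤ H (insert 0 C) := by
  set I := (univ : Finset (Fin (n + 1))).erase 0 \ C with hIdef
  have hCsub : C ⊆ (univ : Finset (Fin (n + 1))).erase 0 :=
    subset_erase.mpr ⟨subset_univ C, h0⟩
  have h0I : (0 : Fin (n + 1)) ∉ I := by
    intro h; exact (mem_erase.mp (mem_sdiff.mp h).1).1 rfl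
  have hIcard : I.card = k + m := by
    rw [hIdef, card_sdiff_of_subset hCsub, hc.qcard, hcard, hc.hn]; omega
  have hdecI := hc.hdec I h0I hIcard
  have hdisj : Disjoint I C := by
    rw [hIdef]; exact sdiff_disjoint
  have hwm := hc.hwm (insert 0 I) (insert 0 C)
  rw [ins_sdiff_ins 0 h0I, ins_sdiff_ins 0 h0, hdisj.sdiff_eq_left,
    (hdisj.symm).sdiff_eq_left, hdecI] at hwm
  linarith

theorem sec_eq (C : Finset (Fin (n + 1))) (h0 : (0 : Fin (n + 1)) ∉ C)
    (hcard : C.card ≤ m) : H (insert 0 C) = H C + k := by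
  have hmn : m ≤ n := by rw [hc.hn]; omega
  obtain ⟨C0, hCC0, h0C0, hC0⟩ := hc.exists_sup C h0 m hcard hmn
  have haux := hc.sec_eq_aux C0 h0C0 hC0
  have hun : insert 0 C ∪ C0 = insert 0 C0 := by
    rw [insert_union, union_eq_right.mpr hCC0]
  have hin : insert 0 C ∩ C0 = C := by
    rw [insert_inter_of_notMem h0C0, inter_eq_left.mpr hCC0]
  have hssa := hc.hssa (insert 0 C) C0
  rw [hun, hin] at hssa
  have hle := hc.mix_le C h0
  linarith

/-- Growth upper bound: `H Y ≤ H X + (|Y| - |X|)` for qudit sets `X ⊆ Y`. -/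
theorem grow_le (X Y : Finset (Fin (n + 1))) (hXY : X ⊆ Y) (h0 : (0 : Fin (n + 1)) ∉ Y) :
    H Y ≤ H X + ((Y.card : ℝ) - X.card) := by
  have hsub := hc.subadd X (Y \ X) disjoint_sdiff
  rw [union_sdiff_of_subset hXY] at hsub
  have h0d : (0 : Fin (n + 1)) ∉ Y \ X := fun h => h0 (mem_sdiff.mp h).1
  have hcle := hc.card_le (Y \ X) h0d
  have hcs : (Y \ X).card = Y.card - X.card := card_sdiff_of_subset hXY
  have hxy : X.card ≤ Y.card := card_le_card hXY
  have : ((Y \ X).card : ℝ) = (Y.card : ℝ) - X.card := by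
    rw [hcs]; push_cast [Nat.cast_sub hxy]; ring
  linarith [this ▸ hcle]

theorem grow0_le (X Y : Finset (Fin (n + 1))) (hXY : X ⊆ Y) (h0 : (0 : Fin (n + 1)) ∉ Y) :
    H (insert 0 X) ≤ H (insert 0 Y) + ((Y.card : ℝ) - X.card) := by
  have hdisj : Disjoint (insert 0 X) (Y \ X) := by
    rw [disjoint_insert_left]
    exact ⟨fun h => h0 (mem_sdiff.mp h).1, disjoint_sdiff⟩
  have h := hc.al2 (insert 0 X) (Y \ X) hdisj
  have hun : insert 0 X ∪ (Y \ X) = insert 0 Y := by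
    rw [insert_union, union_sdiff_of_subset hXY]
  rw [hun] at h
  have h0d : (0 : Fin (n + 1)) ∉ Y \ X := fun hh => h0 (mem_sdiff.mp hh).1
  have hcle := hc.card_le (Y \ X) h0d
  have hxy : X.card ≤ Y.card := card_le_card hXY
  have hcs : ((Y \ X).card : ℝ) = (Y.card : ℝ) - X.card := by
    rw [card_sdiff_of_subset hXY]; push_cast [Nat.cast_sub hxy]; ring
  linarith [hcs ▸ hcle]

/-- Chain tightness in the band `m ≤ |U| ≤ |V| ≤ k+m`. -/
theorem band (U V : Finset (Fin (n + 1))) (h0V : (0 : Fin (n + 1)) ∉ V) (hUV : U ⊆ V)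
    (hU : m ≤ U.card) (hV : V.card ≤ k + m) :
    H V = H U + ((V.card : ℝ) - U.card) ∧
      H (insert 0 V) = H (insert 0 U) - ((V.card : ℝ) - U.card) := by
  have h0U : (0 : Fin (n + 1)) ∉ U := fun h => h0V (hUV h)
  obtain ⟨C, hCU, hC⟩ := exists_subset_card_eq (s := U) (n := m) hU
  have h0C : (0 : Fin (n + 1)) ∉ C := fun h => h0U (hCU h)
  obtain ⟨I, hVI, h0I, hI⟩ := hc.exists_sup V h0V (k + m) hV (by rw [hc.hn]; omega)
  have ha := hc.grow_le U V hUV h0V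
  have hb := hc.grow_le C U hCU h0U
  have hcc := hc.grow_le V I hVI h0I
  have ha' := hc.grow0_le U V hUV h0V
  have hb' := hc.grow0_le C U hCU h0U
  have hc' := hc.grow0_le V I hVI h0I
  have hsecC : H (insert 0 C) = H C + k := hc.sec_eq C h0C (le_of_eq hC)
  have hdecI : H (insert 0 I) = H I - k := hc.hdec I h0I hI
  rw [hC] at hb hb'
  rw [hI] at hcc hc'
  constructor <;> push_cast at * <;> linarith

theorem step : ∀ t : ℕ, ∀ (U : Finset (Fin (n + 1))) (i : Fin (n + 1)),
    (0 : Fin (n + 1)) ∉ U → i ∉ U → i ≠ 0 → U.card + t = m → 1 ≤ t →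
    H U + 1 ≤ H (insert i U) := by
  intro t
  induction t with
  | zero => intro U i _ _ _ _ h; omega
  | succ t ih =>
    intro U i h0U hiU hi0 hcard _
    -- find a fresh qudit j
    have hcardlt : (insert i U).card ≤ m := by
      rw [card_insert_of_notMem hiU]; omega
    have hsub : insert i U ⊆ (univ : Finset (Fin (n + 1))).erase 0 := by
      refine subset_erase.mpr ⟨subset_univ _, ?_⟩
      simp only [mem_insert, not_or]
      exact ⟨fun h => hi0 h.symm, h0U⟩
    obtain ⟨j, hj⟩ : ∃ j, j ∈ (univ : Finset (Fin (n + 1))).erase 0 \ insert i U := by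
      apply card_pos.mp
      rw [card_sdiff_of_subset hsub, hc.qcard]
      have := hc.hn; omega
    rw [mem_sdiff, mem_erase, mem_insert, not_or] at hj
    obtain ⟨⟨hj0, _⟩, hji, hjU⟩ := hj
    have h0jU : (0 : Fin (n + 1)) ∉ insert j U := by
      simp only [mem_insert, not_or]; exact ⟨fun h => hj0 h.symm, h0U⟩
    have hijU : i ∉ insert j U := by
      simp only [mem_insert, not_or]; exact ⟨fun h => hji h.symm, hiU⟩
    have hkey : H (insert j U) + 1 ≤ H (insert i (insert j U)) := by
      rcases Nat.eq_zero_or_pos t with ht0 | htpos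
      · -- t = 0 : |insert j U| = m, use the band
        subst ht0
        have hjcard : (insert j U).card = m := by
          rw [card_insert_of_notMem hjU]; omega
        have hicard : (insert i (insert j U)).card = m + 1 := by
          rw [card_insert_of_notMem hijU, hjcard]
        have h0i : (0 : Fin (n + 1)) ∉ insert i (insert j U) := by
          simp only [mem_insert, not_or]
          exact ⟨fun h => hi0 h.symm, fun h => hj0 h.symm, h0U⟩
        have hband := (hc.band (insert j U) (insert i (insert j U)) h0i
          (subset_insert _ _) (ge_of_eq hjcard) (by rw [hicard]; have := hc.hk; omega)).1
        rw [hjcard, hicard] at hband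
        push_cast at hband
        linarith
      · -- t ≥ 1 : use the induction hypothesis
        have := ih (insert j U) i h0jU hijU hi0
          (by rw [card_insert_of_notMem hjU]; omega) (by omega)
        exact this
    have hssa := hc.hssa (insert i U) (insert j U)
    have hun : insert i U ∪ insert j U = insert i (insert j U) := by
      rw [insert_union, union_insert, union_self]
    have hin : insert i U ∩ insert j U = U := by
      ext a
      simp only [mem_inter, mem_insert]
      constructor
      · rintro ⟨rfl | ha, h⟩
        · rcases h with h' | h'
          · exact absurd h'.symm hji
          · exact h'
        · exact ha
      · intro ha; exact ⟨Or.inr ha, Or.inr ha⟩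
    rw [hun, hin] at hssa
    linarith


theorem small_ge : ∀ C : Finset (Fin (n + 1)), (0 : Fin (n + 1)) ∉ C → C.card ≤ m →
    (C.card : ℝ) ≤ H C := by
  intro C
  induction C using Finset.induction_on with
  | empty => intro _ _; simp [hc.hempty]
  | @insert a s ha ih =>
    intro h0 hcard
    have ha0 : a ≠ 0 := fun h => h0 (by simp [h])
    have hs0 : (0 : Fin (n + 1)) ∉ s := fun h => h0 (mem_insert_of_mem h)
    rw [card_insert_of_notMem ha] at hcard ⊢
    have hstep := hc.step (m - s.card) s a hs0 ha ha0 (by omega) (by omega)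
    have hih := ih hs0 (by omega)
    push_cast
    linarith

theorem small_eq (C : Finset (Fin (n + 1))) (h0 : (0 : Fin (n + 1)) ∉ C)
    (hcard : C.card ≤ m) : H C = C.card :=
  le_antisymm (hc.card_le C h0) (hc.small_ge C h0 hcard)

theorem mid (U : Finset (Fin (n + 1))) (h0 : (0 : Fin (n + 1)) ∉ U)
    (hU1 : m ≤ U.card) (hU2 : U.card ≤ k + m) :
    H U = U.card ∧ H (insert 0 U) = (k : ℝ) + 2 * m - U.card := by
  obtain ⟨C, hCU, hC⟩ := exists_subset_card_eq (s := U) (n := m) hU1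
  have h0C : (0 : Fin (n + 1)) ∉ C := fun h => h0 (hCU h)
  obtain ⟨hb1, hb2⟩ := hc.band C U h0 hCU (ge_of_eq hC) hU2
  have hCval : H C = m := by rw [hc.small_eq C h0C (le_of_eq hC), hC]
  have hsecC : H (insert 0 C) = H C + k := hc.sec_eq C h0C (le_of_eq hC)
  rw [hC] at hb1 hb2
  constructor <;> push_cast at * <;> linarith

theorem top_mix_aux : ∀ s : ℕ, ∀ U : Finset (Fin (n + 1)), (0 : Fin (n + 1)) ∉ U →
    U.card = k + m + s → H (insert 0 U) ≤ (k : ℝ) + 2 * m - U.card := by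
  intro s
  induction s with
  | zero =>
    intro U h0 hcard
    exact le_of_eq (hc.mid U h0 (by omega) (by omega)).2
  | succ s ih =>
    intro U h0 hcard
    have hk1 := hc.hk
    obtain ⟨q, hq⟩ : U.Nonempty := card_pos.mp (by omega)
    set U0 := U.erase q with hU0def
    have hU0card : U0.card = k + m + s := by
      rw [hU0def, card_erase_of_mem hq]; omega
    have h0U0 : (0 : Fin (n + 1)) ∉ U0 := fun h => h0 (erase_subset _ _ h)
    have hqU0 : q ∉ U0 := notMem_erase _ _
    have hq0 : q ≠ 0 := fun h => h0 (h ▸ hq)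
    obtain ⟨V, hVU0, hV⟩ := exists_subset_card_eq (s := U0) (n := k + m - 1)
      (by have := hc.hk; omega)
    have h0V : (0 : Fin (n + 1)) ∉ V := fun h => h0U0 (hVU0 h)
    have hqV : q ∉ V := fun h => hqU0 (hVU0 h)
    have hqVcard : (insert q V).card = k + m := by
      rw [card_insert_of_notMem hqV, hV]; have := hc.hk; omega
    have h0qV : (0 : Fin (n + 1)) ∉ insert q V := by
      simp only [mem_insert, not_or]; exact ⟨fun h => hq0 h.symm, h0V⟩
    -- SSA : A = insert 0 U0, B = insert 0 (insert q V)
    have hssa := hc.hssa (insert 0 U0) (insert 0 (insert q V))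
    have hun : insert 0 U0 ∪ insert 0 (insert q V) = insert 0 U := by
      rw [← insert_union_distrib]
      congr 1
      rw [union_insert, union_eq_left.mpr hVU0, hU0def, insert_erase hq]
    have hin : insert 0 U0 ∩ insert 0 (insert q V) = insert 0 V := by
      rw [ins_inter_ins]
      congr 1
      rw [inter_comm, insert_inter_of_notMem hqU0, inter_eq_left.mpr hVU0]
    rw [hun, hin] at hssa
    have hVval : H (insert 0 V) = (k : ℝ) + 2 * m - (k + m - 1 : ℕ) := by
      rw [← hV]
      exact (hc.mid V h0V (by omega) (by omega)).2
    have hqVval : H (insert 0 (insert q V)) = (k : ℝ) + 2 * m - (k + m : ℕ) := by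
      rw [← hqVcard]
      exact (hc.mid (insert q V) h0qV (by omega) (by omega)).2
    have hih := ih U0 h0U0 hU0card
    rw [hVval, hqVval] at hssa
    rw [hU0card] at hih
    rw [hcard]
    have hk1 := hc.hk
    push_cast [Nat.cast_sub (by omega : 1 ≤ k + m)] at *
    linarith

theorem top (U : Finset (Fin (n + 1))) (h0 : (0 : Fin (n + 1)) ∉ U)
    (hU : k + m ≤ U.card) :
    H U = 2 * (k : ℝ) + 2 * m - U.card ∧ H (insert 0 U) = (k : ℝ) + 2 * m - U.card := by
  have hdg := hc.dec_ge U h0 hU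
  have hupper := hc.top_mix_aux (U.card - (k + m)) U h0 (by omega)
  -- lower bound
  obtain ⟨I, hIU, hI⟩ := exists_subset_card_eq (s := U) (n := k + m) hU
  have h0I : (0 : Fin (n + 1)) ∉ I := fun h => h0 (hIU h)
  set Z := U \ I with hZdef
  have hUn : U.card ≤ n := hc.card_le_n U h0
  have hZcard : Z.card = U.card - (k + m) := by rw [hZdef, card_sdiff_of_subset hIU, hI]
  have hZm : Z.card ≤ m := by have := hc.hn; omega
  have h0Z : (0 : Fin (n + 1)) ∉ Z := fun h => h0 (mem_sdiff.mp h).1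
  have hwm := hc.hwm U (insert 0 Z)
  have hd1 : U \ insert 0 Z = I := by
    have h1 : U \ insert 0 Z = U \ Z := by
      ext a
      simp only [mem_sdiff, mem_insert, not_or]
      constructor
      · rintro ⟨h1, _, h3⟩; exact ⟨h1, h3⟩
      · rintro ⟨h1, h2⟩; exact ⟨h1, fun h => h0 (h ▸ h1), h2⟩
    rw [h1, hZdef, sdiff_sdiff_self_left, inter_eq_right.mpr hIU]
  have hd2 : insert 0 Z \ U = {0} := by
    rw [insert_sdiff_of_notMem _ h0,
      sdiff_eq_empty_iff_subset.mpr (hZdef ▸ sdiff_subset)]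
    rfl
  rw [hd1, hd2, hc.hR] at hwm
  have hZval : H Z = Z.card := hc.small_eq Z h0Z hZm
  have hsecZ : H (insert 0 Z) = H Z + k := hc.sec_eq Z h0Z hZm
  have hIval : H I = I.card := (hc.mid I h0I (by omega) (le_of_eq hI)).1
  have hZc : Z.card + (k + m) = U.card := by omega
  have hZcR : (Z.card : ℝ) + (k + m) = U.card := by exact_mod_cast hZc
  rw [hI] at hIval
  push_cast at *
  constructor <;> linarith


end Ctx

end Stmt12

open Finset in
/-- full entropy characterization of quantum MDS codes: H(𝒬) = min(w(𝒬), 2(k+d−1) − w(𝒬)) where w is the qudit-count weight (R counts k, each Q_i counts 1). -/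
theorem stmt_12 (k d n : ℕ) (hk : 1 ≤ k) (hd : 2 ≤ d) (hn : n = k + 2 * (d - 1))
    (H : Finset (Fin (n + 1)) → ℝ)
    (hempty : H ∅ = 0)
    (hsubadd : ∀ A B : Finset (Fin (n + 1)), Disjoint A B → H (A ∪ B) ≤ H A + H B)
    (hssa : ∀ A B : Finset (Fin (n + 1)), H (A ∪ B) + H (A ∩ B) ≤ H A + H B)
    (hwm : ∀ A B : Finset (Fin (n + 1)), H (A \ B) + H (B \ A) ≤ H A + H B)
    (hdim : ∀ i : Fin (n + 1), i ≠ 0 → H {i} ≤ 1)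
    (hR : H {0} = (k : ℝ))
    (hdec : ∀ I : Finset (Fin (n + 1)), (0 : Fin (n + 1)) ∉ I → I.card = n - (d - 1) →
      H {0} + H I - H (insert 0 I) = 2 * (k : ℝ)) :
    ∀ Q : Finset (Fin (n + 1)),
      H Q = min ((if (0 : Fin (n + 1)) ∈ Q then (k : ℝ) else 0) + ((Q \ {0}).card : ℝ))
        (2 * ((k : ℝ) + (d : ℝ) - 1) -
          ((if (0 : Fin (n + 1)) ∈ Q then (k : ℝ) else 0) + ((Q \ {0}).card : ℝ))) := by
  intro Q
  set m := d - 1 with hmdef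
  have hm1 : 1 ≤ m := by omega
  have hc : Stmt12.Ctx k m n H := by
    refine ⟨hk, hm1, by omega, hempty, hssa, hwm, hdim, hR, ?_⟩
    intro I h0I hcard
    have h := hdec I h0I (by omega)
    rw [hR] at h
    linarith
  have hdR : (d : ℝ) = (m : ℝ) + 1 := by
    have : m + 1 = d := by omega
    exact_mod_cast this.symm
  set U := Q \ {0} with hUdef
  have h0U : (0 : Fin (n + 1)) ∉ U := by simp [hUdef]
  by_cases h0 : (0 : Fin (n + 1)) ∈ Q
  · have hQ : Q = insert 0 U := by
      ext a
      simp only [hUdef, mem_insert, mem_sdiff, mem_singleton]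
      constructor
      · intro ha
        by_cases h : a = 0
        · exact Or.inl h
        · exact Or.inr ⟨ha, h⟩
      · rintro (rfl | ⟨ha, _⟩)
        · exact h0
        · exact ha
    rw [if_pos h0, hQ]
    rcases le_or_gt U.card m with hcase | hcase
    · have h1 : H (insert 0 U) = (U.card : ℝ) + k := by
        rw [hc.sec_eq U h0U hcase, hc.small_eq U h0U hcase]
      have hcR : (U.card : ℝ) ≤ m := by exact_mod_cast hcase
      rw [min_eq_left (by rw [hdR]; linarith)]
      linarith
    · have h1 : H (insert 0 U) = (k : ℝ) + 2 * m - U.card := by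
        rcases le_or_gt U.card (k + m) with hc2 | hc2
        · exact (hc.mid U h0U (le_of_lt hcase) hc2).2
        · exact (hc.top U h0U (by omega)).2
      have hcR : (m : ℝ) ≤ U.card := by exact_mod_cast le_of_lt hcase
      rw [min_eq_right (by rw [hdR]; linarith)]
      rw [hdR]
      linarith
  · have hQ : Q = U := by
      ext a
      simp only [hUdef, mem_sdiff, mem_singleton]
      constructor
      · intro ha
        exact ⟨ha, fun h => h0 (h ▸ ha)⟩
      · rintro ⟨ha, _⟩
        exact ha
    rw [if_neg h0, hQ]
    rcases le_or_gt U.card (k + m) with hcase | hcase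
    · have h1 : H U = (U.card : ℝ) := by
        rcases le_or_gt U.card m with hc2 | hc2
        · exact hc.small_eq U h0U hc2
        · exact (hc.mid U h0U (le_of_lt hc2) hcase).1
      have hcR : (U.card : ℝ) ≤ k + m := by exact_mod_cast hcase
      rw [min_eq_left (by rw [hdR]; linarith)]
      linarith
    · have h1 : H U = 2 * (k : ℝ) + 2 * m - U.card := (hc.top U h0U (le_of_lt hcase)).1
      have hcR : (k + m : ℝ) ≤ U.card := by exact_mod_cast le_of_lt hcase
      rw [min_eq_right (by rw [hdR]; linarith)]
      rw [hdR]
      linarith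
end

section
/- Under the MDS hypothesis on the generator matrix, the bipartition entropy of the induced pure uniform superposition state satisfies the MDS entropy formula: for the augmented matrix H = (E, G) where E is the m' × m' identity block placed on the first m' = k rows (representing the reference system R) and G is the (k+d−1) × n MDS matrix, for every I ⊆ {1,…,n} with |I| ≤ k + d − 1, dim(span of the columns of (E,G) indexed by I ∩ span of the remaining columns) = |I|. -/
set_option maxHeartbeats 1000000 in
/-- for the augmented matrix `(E, G)` where `E` has the first `k`
standard basis vectors of `F^{k+d-1}` as columns (the reference system) and `G`
is a `(k+d−1) × n` MDS matrix whose last `d−1` rows also have all square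
submatrices invertible, every coded column subset `I` with `|I| ≤ k + d − 1`
satisfies: the span of the columns of `(E,G)` indexed by `I` intersected with
the span of the remaining columns has dimension `|I|`. -/
theorem stmt_17 (F : Type*) [Field F] (k d n : ℕ) (hk : 1 ≤ k) (hd : 2 ≤ d)
    (hn : n = k + 2 * (d - 1))
    (G : Matrix (Fin (k + d - 1)) (Fin n) F)
    (hMDS : ∀ f : Fin (k + d - 1) → Fin n, Function.Injective f →
      IsUnit (G.submatrix id f))
    (hB : ∀ f : Fin (d - 1) → Fin n, Function.Injective f →
      IsUnit (G.submatrix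
        (fun i : Fin (d - 1) => (⟨k + (i : ℕ), by omega⟩ : Fin (k + d - 1))) f))
    (E : Matrix (Fin (k + d - 1)) (Fin k) F)
    (hE : ∀ (i : Fin (k + d - 1)) (j : Fin k), E i j = if (i : ℕ) = (j : ℕ) then 1 else 0) :
    ∀ I : Finset (Fin n), I.card ≤ k + d - 1 →
      Module.finrank F
        ↥(Submodule.span F
            ((fun (j : Fin k ⊕ Fin n) (i : Fin (k + d - 1)) => Matrix.fromCols E G i j) ''
              ↑(I.image (Sum.inr : Fin n → Fin k ⊕ Fin n))) ⊓
          Submodule.span F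
            ((fun (j : Fin k ⊕ Fin n) (i : Fin (k + d - 1)) => Matrix.fromCols E G i j) ''
              ↑((I.image (Sum.inr : Fin n → Fin k ⊕ Fin n))ᶜ))) =
        I.card := by
  classical
  intro I hI
  set col : Fin k ⊕ Fin n → Fin (k + d - 1) → F :=
    fun j i => Matrix.fromCols E G i j with hcol
  have hcol_inr : ∀ (x : Fin n) (i : Fin (k + d - 1)), col (Sum.inr x) i = G i x := by
    intro x i; simp [hcol, Matrix.fromCols]
  have hcol_inl : ∀ (x : Fin k) (i : Fin (k + d - 1)), col (Sum.inl x) i = E i x := by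
    intro x i; simp [hcol, Matrix.fromCols]
  -- ℕ-indexed standard basis vectors
  set e : ℕ → (Fin (k + d - 1) → F) :=
    fun a j => if (j : ℕ) = a then (1 : F) else 0 with he
  set S : Submodule F (Fin (k + d - 1) → F) :=
    Submodule.span F (col '' ↑((I.image (Sum.inr : Fin n → Fin k ⊕ Fin n))ᶜ)) with hS
  -- Step 1: the complement spans everything.
  have htop : ∀ j : Fin k, e (j : ℕ) ∈ S := by
    intro j
    have hmem : col (Sum.inl j) ∈
        (col '' ↑((I.image (Sum.inr : Fin n → Fin k ⊕ Fin n))ᶜ)) :=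
      ⟨Sum.inl j, by simp, rfl⟩
    have hveq : col (Sum.inl j) = e (j : ℕ) := by
      funext i
      rw [hcol_inl, hE]
    exact hveq ▸ Submodule.subset_span hmem
  have hcardc : d - 1 ≤ (Iᶜ : Finset (Fin n)).card := by
    rw [Finset.card_compl, Fintype.card_fin]
    omega
  obtain ⟨J, hJsub, hJcard⟩ := Finset.exists_subset_card_eq hcardc
  set f : Fin (d - 1) → Fin n := fun t => J.orderEmbOfFin hJcard t with hf
  have hfinj : Function.Injective f := fun a b hab =>
    (J.orderEmbOfFin hJcard).injective hab
  have hfmem : ∀ t, f t ∉ I := by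
    intro t
    have : f t ∈ Iᶜ := hJsub (J.orderEmbOfFin_mem hJcard t)
    simpa using this
  set M : Matrix (Fin (d - 1)) (Fin (d - 1)) F :=
    G.submatrix (fun i : Fin (d - 1) => (⟨k + (i : ℕ), by omega⟩ : Fin (k + d - 1))) f with hM
  have hMunit : IsUnit M := hB f hfinj
  have hdet : IsUnit M.det := (Matrix.isUnit_iff_isUnit_det M).mp hMunit
  have hMM : M * M⁻¹ = 1 := Matrix.mul_nonsing_inv M hdet
  have hbot : ∀ s : Fin (d - 1), e (k + (s : ℕ)) ∈ S := by
    intro s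
    set w : Fin (k + d - 1) → F := ∑ t : Fin (d - 1), M⁻¹ t s • col (Sum.inr (f t)) with hw
    have hwS : w ∈ S := by
      refine Submodule.sum_mem _ fun t _ => Submodule.smul_mem _ _ ?_
      exact Submodule.subset_span ⟨Sum.inr (f t), by simp [hfmem t], rfl⟩
    have hw_apply : ∀ i, w i = ∑ t : Fin (d - 1), M⁻¹ t s * G i (f t) := by
      intro i
      rw [hw, Finset.sum_apply]
      exact Finset.sum_congr rfl fun t _ => by rw [Pi.smul_apply, smul_eq_mul, hcol_inr]
    have hw_bot : ∀ i : Fin (k + d - 1), k ≤ (i : ℕ) →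
        w i = if (i : ℕ) = k + (s : ℕ) then (1 : F) else 0 := by
      intro i hki
      set u : Fin (d - 1) := ⟨(i : ℕ) - k, by omega⟩ with hu
      have hGi : ∀ t, G i (f t) = M u t := by
        intro t
        rw [hM]
        have : i = (⟨k + (u : ℕ), by omega⟩ : Fin (k + d - 1)) := by
          ext; simp [hu]; omega
        rw [this]
        rfl
      have h1 : w i = (M * M⁻¹) u s := by
        rw [hw_apply, Matrix.mul_apply]
        exact Finset.sum_congr rfl fun t _ => by rw [hGi t, mul_comm]
      rw [h1, hMM, Matrix.one_apply]
      have : (u = s) ↔ ((i : ℕ) = k + (s : ℕ)) := by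
        rw [Fin.ext_iff]
        simp only [hu]
        omega
      simp only [this]
    have key : e (k + (s : ℕ)) =
        w - ∑ j : Fin k, w ⟨(j : ℕ), by omega⟩ • e (j : ℕ) := by
      funext i
      rw [Pi.sub_apply, Finset.sum_apply]
      simp only [Pi.smul_apply, smul_eq_mul, he]
      by_cases hik : (i : ℕ) < k
      · have hsum : (∑ j : Fin k, w ⟨(j : ℕ), by omega⟩ *
            (if (i : ℕ) = (j : ℕ) then (1 : F) else 0)) = w i := by
          rw [Finset.sum_eq_single (⟨(i : ℕ), hik⟩ : Fin k)]
          · rw [if_pos rfl, mul_one]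
          · intro b _ hb
            have hbne : (i : ℕ) ≠ (b : ℕ) := fun h => hb (by ext; exact h.symm)
            rw [if_neg hbne, mul_zero]
          · simp
        rw [hsum, sub_self, if_neg (by omega)]
      · have hsum : (∑ j : Fin k, w ⟨(j : ℕ), by omega⟩ *
            (if (i : ℕ) = (j : ℕ) then (1 : F) else 0)) = 0 := by
          refine Finset.sum_eq_zero fun b _ => ?_
          have hbne : (i : ℕ) ≠ (b : ℕ) := by omega
          rw [if_neg hbne, mul_zero]
        rw [hsum, sub_zero, hw_bot i (by omega)]
    rw [key]
    exact Submodule.sub_mem _ hwS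
      (Submodule.sum_mem _ fun j _ => Submodule.smul_mem _ _ (htop j))
  have hall : ∀ i : Fin (k + d - 1), e (i : ℕ) ∈ S := by
    intro i
    by_cases hik : (i : ℕ) < k
    · exact htop ⟨(i : ℕ), hik⟩
    · have h := hbot ⟨(i : ℕ) - k, by omega⟩
      have : k + ((⟨(i : ℕ) - k, by omega⟩ : Fin (d - 1)) : ℕ) = (i : ℕ) := by
        simp; omega
      rwa [this] at h
  have hStop : S = ⊤ := by
    rw [eq_top_iff]
    intro x _
    rw [pi_eq_sum_univ x]
    refine Submodule.sum_mem _ fun i _ => Submodule.smul_mem _ _ ?_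
    have hee : (fun j : Fin (k + d - 1) => if i = j then (1 : F) else 0) = e (i : ℕ) := by
      funext j
      by_cases hij : i = j
      · subst hij; simp [he]
      · have hne : (j : ℕ) ≠ (i : ℕ) := fun h => hij (by ext; exact h.symm)
        simp [he, hij, hne]
    rw [hee]
    exact hall i
  -- Step 2: the I-columns are linearly independent
  obtain ⟨J2, hJ2sub, hJ2card⟩ := Finset.exists_superset_card_eq hI
    (by rw [Fintype.card_fin]; omega)
  set g : Fin (k + d - 1) → Fin n := fun t => J2.orderEmbOfFin hJ2card t with hg
  have hginj : Function.Injective g := fun a b hab =>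
    (J2.orderEmbOfFin hJ2card).injective hab
  have hGunit := hMDS g hginj
  have hli : LinearIndependent F (fun t : Fin (k + d - 1) => col (Sum.inr (g t))) := by
    have h := (Matrix.linearIndependent_cols_iff_isUnit (A := G.submatrix id g)).mpr hGunit
    exact h
  have hrange : Set.range g = ↑J2 := J2.range_orderEmbOfFin hJ2card
  have hinjOn : Set.InjOn (fun x : Fin n => col (Sum.inr x)) ↑I := by
    intro a ha b hb hab
    have haJ : a ∈ Set.range g := by rw [hrange]; exact_mod_cast hJ2sub ha
    have hbJ : b ∈ Set.range g := by rw [hrange]; exact_mod_cast hJ2sub hb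
    obtain ⟨ta, rfl⟩ := haJ
    obtain ⟨tb, rfl⟩ := hbJ
    exact congrArg g (hli.injective hab)
  have hsetli : LinearIndependent F
      ((↑) : ↑((fun x : Fin n => col (Sum.inr x)) '' ↑J2) → (Fin (k + d - 1) → F)) := by
    have h : LinearIndepOn F id _ := (linearIndepOn_id_range_iff hli.injective).mpr hli
    have hr : Set.range (fun t : Fin (k + d - 1) => col (Sum.inr (g t)))
        = (fun x : Fin n => col (Sum.inr x)) '' ↑J2 := by
      rw [show (fun t : Fin (k + d - 1) => col (Sum.inr (g t)))
          = (fun x : Fin n => col (Sum.inr x)) ∘ g from rfl, Set.range_comp, hrange]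
    rwa [hr] at h
  have hIli : LinearIndependent F
      ((↑) : ↑((fun x : Fin n => col (Sum.inr x)) '' ↑I) → (Fin (k + d - 1) → F)) :=
    LinearIndepOn.mono (v := id) hsetli (Set.image_mono (by exact_mod_cast hJ2sub))
  have hAset : col '' ↑(I.image (Sum.inr : Fin n → Fin k ⊕ Fin n))
      = ↑(I.image fun x : Fin n => col (Sum.inr x)) := by
    rw [Finset.coe_image, Finset.coe_image, ← Set.image_comp]
    rfl
  rw [hStop, inf_top_eq, hAset]
  have hfli : LinearIndependent F
      ((↑) : ↑((I.image fun x : Fin n => col (Sum.inr x)) : Set (Fin (k + d - 1) → F))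
        → (Fin (k + d - 1) → F)) := by
    rw [Finset.coe_image]; exact hIli
  rw [finrank_span_finset_eq_card hfli]
  exact Finset.card_image_of_injOn hinjOn
end

section
/- Entropy splitting for MDS codes: for a quantum MDS code (n = k + 2(d−1)) and any I ⊆ {1,…,n} with |I| ≤ k + d − 1, writing I as a disjoint union of blocks B₁, …, B_t each of size at most k, one has H(Q_I) = Σ_{j=1}^{t} H(Q_{B_j}), provided each block after the first has size at most d − 1. -/
/-- entropy splitting for MDS codes: if I (of size ≤ k+d−1) is a disjoint union of blocks each of size ≤ k, with each block after the first of size ≤ d−1, then H(Q_I) = Σ_j H(Q_{B_j}). -/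
theorem stmt_19 (k d n : ℕ) (hk : 1 ≤ k) (hd : 2 ≤ d) (hn : n = k + 2 * (d - 1))
    (H : Finset (Fin (n + 1)) → ℝ)
    (hempty : H ∅ = 0)
    (hsubadd : ∀ A B : Finset (Fin (n + 1)), Disjoint A B → H (A ∪ B) ≤ H A + H B)
    (hssa : ∀ A B : Finset (Fin (n + 1)), H (A ∪ B) + H (A ∩ B) ≤ H A + H B)
    (hwm : ∀ A B : Finset (Fin (n + 1)), H (A \ B) + H (B \ A) ≤ H A + H B)
    (hdim : ∀ i : Fin (n + 1), i ≠ 0 → H {i} ≤ 1)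
    (hR : H {0} = (k : ℝ))
    (hdec : ∀ I : Finset (Fin (n + 1)), (0 : Fin (n + 1)) ∉ I → I.card = n - (d - 1) →
      H {0} + H I - H (insert 0 I) = 2 * (k : ℝ)) :
    ∀ (t : ℕ) (B : Fin t → Finset (Fin (n + 1))),
      (∀ j, (0 : Fin (n + 1)) ∉ B j) →
      (∀ j, (B j).card ≤ k) →
      (∀ j : Fin t, 0 < (j : ℕ) → (B j).card ≤ d - 1) →
      (∀ j₁ j₂, j₁ ≠ j₂ → Disjoint (B j₁) (B j₂)) →
      ∀ I : Finset (Fin (n + 1)), I = Finset.univ.biUnion B → I.card ≤ k + d - 1 →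
      H I = ∑ j, H (B j) := by
  -- abbreviations
  set e := d - 1 with he_def
  have he : 1 ≤ e := by omega
  have hne : n = k + 2 * e := hn
  -- the ambient set of "coded qudits"
  set Q : Finset (Fin (n+1)) := Finset.univ.erase 0 with hQ_def
  have hQcard : Q.card = n := by
    simp [hQ_def, Finset.card_erase_of_mem, Finset.card_univ]
  have memQ : ∀ (E : Finset (Fin (n+1))), (0:Fin (n+1)) ∉ E → E ⊆ Q := by
    intro E h0
    intro a ha
    simp [hQ_def, Finset.mem_erase]
    rintro rfl; exact h0 ha
  have notmemQ : ∀ (E : Finset (Fin (n+1))), E ⊆ Q → (0:Fin (n+1)) ∉ E := by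
    intro E hEQ h0
    have := hEQ h0
    simp [hQ_def] at this
  -- L0 : upper bound by cardinality
  have L0 : ∀ E : Finset (Fin (n+1)), (0:Fin (n+1)) ∉ E → H E ≤ E.card := by
    intro E
    induction E using Finset.induction_on with
    | empty => intro _; simp [hempty]
    | insert _ _ hxE ih =>
      rename_i x E'
      intro h0
      have hx0 : x ≠ 0 := by rintro rfl; exact h0 (Finset.mem_insert_self _ _)
      have h0E : (0:Fin (n+1)) ∉ E' := fun h => h0 (Finset.mem_insert_of_mem h)
      have hdis : Disjoint ({x} : Finset (Fin (n+1))) E' := by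
        simp [Finset.disjoint_singleton_left, hxE]
      have h1 := hsubadd {x} E' hdis
      have h2 : ({x} : Finset (Fin (n+1))) ∪ E' = insert x E' := by
        rw [Finset.insert_eq]
      rw [h2] at h1
      have h3 := hdim x hx0
      have h4 := ih h0E
      have h5 : ((insert x E').card : ℝ) = E'.card + 1 := by
        rw [Finset.card_insert_of_notMem hxE]; push_cast; ring
      rw [h5]; linarith
  -- Araki-Lieb type bound from weak monotonicity
  have AL : ∀ A B : Finset (Fin (n+1)), Disjoint A B → H A ≤ H (A ∪ B) + H B := by
    intro A B hAB
    have h1 := hwm (A ∪ B) B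
    have h2 : (A ∪ B) \ B = A := by
      ext a
      simp only [Finset.mem_sdiff, Finset.mem_union]
      constructor
      · rintro ⟨h1 | h1, h2⟩
        · exact h1
        · exact absurd h1 h2
      · intro ha
        exact ⟨Or.inl ha, fun hb => (Finset.disjoint_left.mp hAB) ha hb⟩
    have h3 : B \ (A ∪ B) = ∅ := by
      rw [Finset.sdiff_eq_empty_iff_subset]; exact Finset.subset_union_right
    rw [h2, h3, hempty] at h1
    linarith
  -- decoding rephrased
  have hdec' : ∀ I : Finset (Fin (n+1)), (0:Fin (n+1)) ∉ I → I.card = k + e →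
      H (insert 0 I) = H I - k := by
    intro I h0 hcard
    have := hdec I h0 (by omega)
    rw [hR] at this
    linarith
  -- L3 : H({0} ∪ Y) = H Y - k  for |Y| ≥ k + e
  have L3 : ∀ Y : Finset (Fin (n+1)), (0:Fin (n+1)) ∉ Y → k + e ≤ Y.card →
      H (insert 0 Y) = H Y - k := by
    intro Y h0 hcard
    obtain ⟨I, hIY, hIcard⟩ := Finset.exists_subset_card_eq hcard
    have h0I : (0:Fin (n+1)) ∉ I := fun h => h0 (hIY h)
    have hI := hdec' I h0I hIcard
    -- SSA with A = Y, B = insert 0 I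
    have h1 := hssa Y (insert 0 I)
    have h2 : Y ∪ insert 0 I = insert 0 Y := by
      ext a
      simp only [Finset.mem_union, Finset.mem_insert]
      constructor
      · rintro (h | h | h)
        · exact Or.inr h
        · exact Or.inl h
        · exact Or.inr (hIY h)
      · rintro (h | h)
        · exact Or.inr (Or.inl h)
        · exact Or.inl h
    have h3 : Y ∩ insert 0 I = I := by
      ext a
      simp only [Finset.mem_inter, Finset.mem_insert]
      constructor
      · rintro ⟨ha, rfl | ha'⟩
        · exact absurd ha h0
        · exact ha'
      · intro ha; exact ⟨hIY ha, Or.inr ha⟩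
    rw [h2, h3, hI] at h1
    -- AL : H Y ≤ H (insert 0 Y) + k
    have h4 := AL Y {0} (by simp [Finset.disjoint_singleton_right, h0])
    have h5 : Y ∪ {0} = insert 0 Y := by
      ext a; simp [Finset.mem_insert, or_comm]
    rw [h5, hR] at h4
    linarith
  -- L4 : H({0} ∪ B) = H B + k for |B| ≤ e
  have L4 : ∀ B : Finset (Fin (n+1)), (0:Fin (n+1)) ∉ B → B.card ≤ e →
      H (insert 0 B) = H B + k := by
    intro B h0 hcard
    -- pick a decodable set disjoint from B
    have hsub : Q \ B ⊆ Q := Finset.sdiff_subset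
    have hcard2 : k + e ≤ (Q \ B).card := by
      have : (Q \ B).card = Q.card - B.card := Finset.card_sdiff_of_subset (memQ B h0)
      omega
    obtain ⟨I, hIsub, hIcard⟩ := Finset.exists_subset_card_eq hcard2
    have h0I : (0:Fin (n+1)) ∉ I := notmemQ I (hIsub.trans hsub)
    have hIB : Disjoint I B := by
      refine Finset.disjoint_left.mpr ?_
      intro a haI haB
      have := hIsub haI
      rw [Finset.mem_sdiff] at this
      exact this.2 haB
    have hI := hdec' I h0I hIcard
    -- weak monotonicity with X = insert 0 B, Y = insert 0 I
    have h1 := hwm (insert 0 B) (insert 0 I)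
    have h2 : (insert 0 B) \ (insert 0 I) = B := by
      ext a
      simp only [Finset.mem_sdiff, Finset.mem_insert, not_or]
      constructor
      · rintro ⟨rfl | ha, h2, h3⟩
        · exact absurd rfl h2
        · exact ha
      · intro ha
        refine ⟨Or.inr ha, ?_, ?_⟩
        · rintro rfl; exact h0 ha
        · intro haI; exact (Finset.disjoint_right.mp hIB) ha haI
    have h3 : (insert 0 I) \ (insert 0 B) = I := by
      ext a
      simp only [Finset.mem_sdiff, Finset.mem_insert, not_or]
      constructor
      · rintro ⟨rfl | ha, h2, h3⟩
        · exact absurd rfl h2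
        · exact ha
      · intro ha
        refine ⟨Or.inr ha, ?_, ?_⟩
        · rintro rfl; exact h0I ha
        · intro haB; exact (Finset.disjoint_left.mp hIB) ha haB
    rw [h2, h3, hI] at h1
    -- subadditivity upper bound
    have h4 := hsubadd {0} B (by simp [Finset.disjoint_singleton_left, h0])
    have h5 : ({0} : Finset (Fin (n+1))) ∪ B = insert 0 B := by
      rw [Finset.insert_eq]
    rw [h5, hR] at h4
    linarith
  -- fval : the conditional value is pinned in the mid range
  have fval : ∀ A : Finset (Fin (n+1)), (0:Fin (n+1)) ∉ A → e ≤ A.card → A.card ≤ k + e →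
      H (insert 0 A) = H A + k + 2*(e:ℝ) - 2*(A.card:ℝ) := by
    intro A h0 hcard1 hcard2
    -- lower bound: via subset S of size e
    obtain ⟨S, hSA, hScard⟩ := Finset.exists_subset_card_eq hcard1
    have h0S : (0:Fin (n+1)) ∉ S := fun h => h0 (hSA h)
    have hS := L4 S h0S (le_of_eq hScard)
    have h0AS : (0:Fin (n+1)) ∉ A \ S := fun h => h0 (Finset.mem_sdiff.mp h).1
    have hAScard : ((A \ S).card : ℝ) = (A.card:ℝ) - e := by
      have h := Finset.card_sdiff_of_subset hSA
      rw [hScard] at h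
      rw [h, Nat.cast_sub hcard1]
    have hAunion : insert 0 S ∪ (A \ S) = insert 0 A := by
      ext a
      simp only [Finset.mem_union, Finset.mem_insert, Finset.mem_sdiff]
      constructor
      · rintro ((rfl | ha) | ⟨ha, _⟩)
        · exact Or.inl rfl
        · exact Or.inr (hSA ha)
        · exact Or.inr ha
      · rintro (rfl | ha)
        · exact Or.inl (Or.inl rfl)
        · by_cases hs : a ∈ S
          · exact Or.inl (Or.inr hs)
          · exact Or.inr ⟨ha, hs⟩
    have hAunion2 : S ∪ (A \ S) = A := by
      ext a
      simp only [Finset.mem_union, Finset.mem_sdiff]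
      constructor
      · rintro (ha | ⟨ha, _⟩)
        · exact hSA ha
        · exact ha
      · intro ha
        by_cases hs : a ∈ S
        · exact Or.inl hs
        · exact Or.inr ⟨ha, hs⟩
    have hdis1 : Disjoint (insert 0 S) (A \ S) := by
      refine Finset.disjoint_left.mpr ?_
      intro a ha haAS
      rw [Finset.mem_sdiff] at haAS
      rcases Finset.mem_insert.mp ha with rfl | haS
      · exact h0AS (Finset.mem_sdiff.mpr haAS)
      · exact haAS.2 haS
    have hdis2 : Disjoint S (A \ S) := by
      refine Finset.disjoint_left.mpr ?_
      intro a haS haAS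
      exact (Finset.mem_sdiff.mp haAS).2 haS
    -- lower bound on f(A)
    have hAL1 := AL (insert 0 S) (A \ S) hdis1
    rw [hAunion] at hAL1
    have hSA1 := hsubadd S (A \ S) hdis2
    rw [hAunion2] at hSA1
    have hASub : H (A \ S) ≤ ((A\S).card : ℝ) := L0 _ h0AS
    -- upper bound on f(A): extend A to a set J of size k+e inside Q
    obtain ⟨J, hAJ, hJQ, hJcard⟩ := Finset.exists_subsuperset_card_eq (n := k + e - A.card + A.card)
      (memQ A h0) (by omega) (by rw [hQcard]; omega)
    have hJcard' : J.card = k + e := by omega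
    have h0J : (0:Fin (n+1)) ∉ J := notmemQ J hJQ
    have hJ := L3 J h0J (le_of_eq hJcard'.symm)
    have h0JA : (0:Fin (n+1)) ∉ J \ A := fun h => h0J (Finset.mem_sdiff.mp h).1
    have hJAcard : ((J \ A).card : ℝ) = (k:ℝ) + e - A.card := by
      have h := Finset.card_sdiff_of_subset hAJ
      rw [hJcard'] at h
      rw [h, Nat.cast_sub hcard2]
      push_cast; ring
    have hJunion : insert 0 A ∪ (J \ A) = insert 0 J := by
      ext a
      simp only [Finset.mem_union, Finset.mem_insert, Finset.mem_sdiff]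
      constructor
      · rintro ((rfl | ha) | ⟨ha, _⟩)
        · exact Or.inl rfl
        · exact Or.inr (hAJ ha)
        · exact Or.inr ha
      · rintro (rfl | ha)
        · exact Or.inl (Or.inl rfl)
        · by_cases hs : a ∈ A
          · exact Or.inl (Or.inr hs)
          · exact Or.inr ⟨ha, hs⟩
    have hJunion2 : A ∪ (J \ A) = J := by
      ext a
      simp only [Finset.mem_union, Finset.mem_sdiff]
      constructor
      · rintro (ha | ⟨ha, _⟩)
        · exact hAJ ha
        · exact ha
      · intro ha
        by_cases hs : a ∈ A
        · exact Or.inl hs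
        · exact Or.inr ⟨ha, hs⟩
    have hdis3 : Disjoint (insert 0 A) (J \ A) := by
      refine Finset.disjoint_left.mpr ?_
      intro a ha haJA
      rw [Finset.mem_sdiff] at haJA
      rcases Finset.mem_insert.mp ha with rfl | haA
      · exact h0JA (Finset.mem_sdiff.mpr haJA)
      · exact haJA.2 haA
    have hdis4 : Disjoint A (J \ A) := by
      refine Finset.disjoint_left.mpr ?_
      intro a haA haJA
      exact (Finset.mem_sdiff.mp haJA).2 haA
    have hAL2 := AL (insert 0 A) (J \ A) hdis3
    rw [hJunion] at hAL2
    have hSA2 := hsubadd A (J \ A) hdis4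
    rw [hJunion2] at hSA2
    have hJAub : H (J \ A) ≤ ((J\A).card : ℝ) := L0 _ h0JA
    rw [hJAcard] at hJAub
    rw [hAScard] at hASub
    linarith
  -- L5 : increments in the mid range, and singletons have entropy 1
  have L5 : ∀ (A : Finset (Fin (n+1))) (x : Fin (n+1)), (0:Fin (n+1)) ∉ A → x ∉ A → x ≠ 0 →
      e ≤ A.card → A.card < k + e → H {x} = 1 ∧ H (insert x A) = H A + 1 := by
    intro A x h0A hxA hx0 hc1 hc2
    have h0Ax : (0:Fin (n+1)) ∉ insert x A := by
      simp only [Finset.mem_insert, not_or]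
      exact ⟨fun h => hx0 h.symm, h0A⟩
    have hcx : (insert x A).card = A.card + 1 := Finset.card_insert_of_notMem hxA
    have f1 := fval A h0A hc1 (le_of_lt hc2)
    have f2 := fval (insert x A) h0Ax (by omega) (by omega)
    -- AL : H (insert 0 A) ≤ H (insert 0 (insert x A)) + H {x}
    have hdis : Disjoint (insert 0 A) ({x} : Finset (Fin (n+1))) := by
      simp only [Finset.disjoint_singleton_right, Finset.mem_insert, not_or]
      exact ⟨hx0, hxA⟩
    have hAL := AL (insert 0 A) {x} hdis
    have hun : insert 0 A ∪ {x} = insert 0 (insert x A) := by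
      ext a
      simp only [Finset.mem_union, Finset.mem_insert, Finset.mem_singleton]
      tauto
    rw [hun] at hAL
    -- subadditivity
    have hdis2 : Disjoint ({x} : Finset (Fin (n+1))) A := by
      simp [Finset.disjoint_singleton_left, hxA]
    have hSA := hsubadd {x} A hdis2
    have hun2 : ({x} : Finset (Fin (n+1))) ∪ A = insert x A := by
      rw [Finset.insert_eq]
    rw [hun2] at hSA
    have hd1 := hdim x hx0
    have hcxR : ((insert x A).card : ℝ) = (A.card : ℝ) + 1 := by rw [hcx]; push_cast; ring
    rw [hcxR] at f2
    constructor
    · linarith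
    · linarith
  have Hx1 : ∀ x : Fin (n+1), x ≠ 0 → H {x} = 1 := by
    intro x hx0
    have hsub : (Q.erase x) ⊆ Q := Finset.erase_subset _ _
    have hcard : e ≤ (Q.erase x).card := by
      have hxQ : x ∈ Q := by
        simp [hQ_def, Finset.mem_erase, hx0]
      rw [Finset.card_erase_of_mem hxQ, hQcard]
      omega
    obtain ⟨A, hAsub, hAcard⟩ := Finset.exists_subset_card_eq hcard
    have h0A : (0:Fin (n+1)) ∉ A := notmemQ A (hAsub.trans hsub)
    have hxA : x ∉ A := by
      intro h
      exact (Finset.mem_erase.mp (hAsub h)).1 rfl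
    exact (L5 A x h0A hxA hx0 (le_of_eq hAcard.symm) (by omega)).1
  -- chain : entropy in the mid range determined by a (d-1)-subset
  have chain : ∀ j : ℕ, ∀ E S : Finset (Fin (n+1)), (0:Fin (n+1)) ∉ E → S ⊆ E →
      S.card = e → E.card = e + j → e + j ≤ k + e → H E = H S + j := by
    intro j
    induction j with
    | zero =>
      intro E S h0 hSE hSc hEc _
      have : E = S := (Finset.eq_of_subset_of_card_le hSE (by omega)).symm
      rw [this]; simp
    | succ j ih =>
      intro E S h0 hSE hSc hEc hle
      have hlt : S.card < E.card := by omega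
      have : (E \ S).Nonempty := by
        rw [← Finset.card_pos, Finset.card_sdiff_of_subset hSE]
        omega
      obtain ⟨x, hx⟩ := this
      rw [Finset.mem_sdiff] at hx
      have hx0 : x ≠ 0 := by rintro rfl; exact h0 hx.1
      have hSsub : S ⊆ E.erase x := by
        intro a ha
        rw [Finset.mem_erase]
        exact ⟨fun h => hx.2 (h ▸ ha), hSE ha⟩
      have h0e : (0:Fin (n+1)) ∉ E.erase x := fun h => h0 (Finset.mem_of_mem_erase h)
      have hec : (E.erase x).card = e + j := by
        rw [Finset.card_erase_of_mem hx.1]; omega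
      have hIH := ih (E.erase x) S h0e hSsub hSc hec (by omega)
      have hxe : x ∉ E.erase x := Finset.notMem_erase _ _
      have hL5 := (L5 (E.erase x) x h0e hxe hx0 (by omega) (by omega)).2
      rw [Finset.insert_erase hx.1] at hL5
      rw [hL5, hIH]
      push_cast; ring
  -- all (d-1)-sets have the same entropy
  have Heq : ∀ c : ℕ, ∀ S S' : Finset (Fin (n+1)), (0:Fin (n+1)) ∉ S → (0:Fin (n+1)) ∉ S' →
      S.card = e → S'.card = e → (S' \ S).card = c → H S = H S' := by
    intro c
    induction c using Nat.strong_induction_on with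
    | _ c ihc =>
      intro S S' h0S h0S' hSc hS'c hdiff
      rcases Nat.eq_zero_or_pos c with rfl | hcpos
      · have hsub : S' ⊆ S := by
          rw [← Finset.sdiff_eq_empty_iff_subset, ← Finset.card_eq_zero]
          exact hdiff
        have : S' = S := Finset.eq_of_subset_of_card_le hsub (by omega)
        rw [this]
      · -- pick s' in S' \ S and s in S \ S'
        have hne1 : (S' \ S).Nonempty := by rw [← Finset.card_pos]; omega
        obtain ⟨s', hs'⟩ := hne1
        rw [Finset.mem_sdiff] at hs'
        have hcs : (S \ S').card = c := by
          rw [Finset.card_sdiff_comm (by omega), hdiff]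
        have hne2 : (S \ S').Nonempty := by rw [← Finset.card_pos]; omega
        obtain ⟨s, hs⟩ := hne2
        rw [Finset.mem_sdiff] at hs
        have hs'0 : s' ≠ 0 := by rintro rfl; exact h0S' hs'.1
        -- S'' = insert s' (S.erase s)
        set S'' : Finset (Fin (n+1)) := insert s' (S.erase s) with hS''def
        have hs'notin : s' ∉ S.erase s := by
          intro h
          exact hs'.2 (Finset.mem_of_mem_erase h)
        have hS''c : S''.card = e := by
          rw [hS''def, Finset.card_insert_of_notMem hs'notin,
            Finset.card_erase_of_mem hs.1]
          omega
        have h0S'' : (0:Fin (n+1)) ∉ S'' := by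
          rw [hS''def]
          simp only [Finset.mem_insert, not_or]
          exact ⟨fun h => hs'0 h.symm, fun h => h0S (Finset.mem_of_mem_erase h)⟩
        -- common superset E = insert s' S
        have hs'S : s' ∉ S := hs'.2
        have hEc : (insert s' S).card = e + 1 := by
          rw [Finset.card_insert_of_notMem hs'S]; omega
        have h0E : (0:Fin (n+1)) ∉ insert s' S := by
          simp only [Finset.mem_insert, not_or]
          exact ⟨fun h => hs'0 h.symm, h0S⟩
        have hch1 := chain 1 (insert s' S) S h0E (Finset.subset_insert _ _) hSc hEc (by omega)
        have hS''sub : S'' ⊆ insert s' S := by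
          rw [hS''def]
          intro a ha
          rcases Finset.mem_insert.mp ha with rfl | ha
          · exact Finset.mem_insert_self _ _
          · exact Finset.mem_insert_of_mem (Finset.mem_of_mem_erase ha)
        have hch2 := chain 1 (insert s' S) S'' h0E hS''sub hS''c hEc (by omega)
        have hHS : H S = H S'' := by linarith
        -- now S'' is closer to S'
        have hsub2 : S' \ S'' ⊆ (S' \ S).erase s' := by
          intro a ha
          rw [Finset.mem_sdiff] at ha
          rw [Finset.mem_erase, Finset.mem_sdiff]
          have has' : a ≠ s' := by
            rintro rfl
            exact ha.2 (Finset.mem_insert_self _ _)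
          have haS : a ∉ S := by
            intro h
            have : a ∈ S'' := by
              rw [hS''def]
              refine Finset.mem_insert_of_mem ?_
              rw [Finset.mem_erase]
              exact ⟨fun h' => hs.2 (h' ▸ ha.1), h⟩
            exact ha.2 this
          exact ⟨has', ha.1, haS⟩
        have hclt : (S' \ S'').card < c := by
          have h1 : ((S' \ S).erase s').card = c - 1 := by
            rw [Finset.card_erase_of_mem (Finset.mem_sdiff.mpr hs'), hdiff]
          have h2 := Finset.card_le_card hsub2
          omega
        have := ihc _ hclt S'' S' h0S'' h0S' hS''c hS'c rfl
        linarith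
  -- fix a reference (d-1)-set
  obtain ⟨S₀, hS₀Q, hS₀c⟩ := Finset.exists_subset_card_eq (show e ≤ Q.card by omega)
  have h0S₀ : (0:Fin (n+1)) ∉ S₀ := notmemQ S₀ hS₀Q
  -- entropy of any (d-1)-set equals H S₀
  have HeqS₀ : ∀ S : Finset (Fin (n+1)), (0:Fin (n+1)) ∉ S → S.card = e → H S = H S₀ := by
    intro S h0S hSc
    exact Heq (S₀ \ S).card S S₀ h0S h0S₀ hSc hS₀c rfl
  -- mid-range value via chain
  have midval : ∀ E : Finset (Fin (n+1)), (0:Fin (n+1)) ∉ E → e ≤ E.card → E.card ≤ k + e →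
      H E = H S₀ + ((E.card : ℝ) - e) := by
    intro E h0 hc1 hc2
    obtain ⟨S, hSE, hSc⟩ := Finset.exists_subset_card_eq hc1
    have h0S : (0:Fin (n+1)) ∉ S := fun h => h0 (hSE h)
    have hch := chain (E.card - e) E S h0 hSE hSc (by omega) (by omega)
    rw [hch, HeqS₀ S h0S hSc, Nat.cast_sub hc1]
  -- L7 : levels above k+e
  have L7 : ∀ j : ℕ, j ≤ e → ∀ Y : Finset (Fin (n+1)), (0:Fin (n+1)) ∉ Y →
      Y.card = (k + e) + j → H Y = H S₀ + k - j := by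
    intro j
    induction j using Nat.strong_induction_on with
    | _ j ihj =>
      intro hje Y h0Y hYc
      rcases Nat.eq_zero_or_pos j with rfl | hjpos
      · rw [midval Y h0Y (by omega) (by omega)]
        push_cast; ring_nf
        rw [hYc]; push_cast; ring
      · obtain ⟨jj, rfl⟩ := Nat.exists_eq_succ_of_ne_zero (by omega : j ≠ 0)
        -- two distinct elements of Y
        have h2 : 1 < Y.card := by omega
        rw [Finset.one_lt_card] at h2
        obtain ⟨x, hxY, y, hyY, hxy⟩ := h2
        have hx0 : x ≠ 0 := by rintro rfl; exact h0Y hxY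
        set Yx := Y.erase x with hYx_def
        set Zy := Y.erase y with hZy_def
        set W := Yx.erase y with hW_def
        have hYxc : Yx.card = (k + e) + jj := by
          rw [hYx_def, Finset.card_erase_of_mem hxY]; omega
        have hZyc : Zy.card = (k + e) + jj := by
          rw [hZy_def, Finset.card_erase_of_mem hyY]; omega
        have hyYx : y ∈ Yx := by
          rw [hYx_def]
          exact Finset.mem_erase.mpr ⟨hxy.symm, hyY⟩
        have hWc : W.card = (k + e) + jj - 1 := by
          rw [hW_def, Finset.card_erase_of_mem hyYx, hYxc]
        have h0Yx : (0:Fin (n+1)) ∉ Yx := fun h => h0Y (Finset.mem_of_mem_erase h)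
        have h0Zy : (0:Fin (n+1)) ∉ Zy := fun h => h0Y (Finset.mem_of_mem_erase h)
        have h0W : (0:Fin (n+1)) ∉ W :=
          fun h => h0Y (Finset.mem_of_mem_erase (Finset.mem_of_mem_erase h))
        -- values at level jj
        have hYxval : H Yx = H S₀ + k - jj := ihj jj (by omega) (by omega) Yx h0Yx hYxc
        have hZyval : H Zy = H S₀ + k - jj := ihj jj (by omega) (by omega) Zy h0Zy hZyc
        have hYx0 : H (insert 0 Yx) = H S₀ - jj := by
          rw [L3 Yx h0Yx (by omega), hYxval]; ring
        have hZy0 : H (insert 0 Zy) = H S₀ - jj := by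
          rw [L3 Zy h0Zy (by omega), hZyval]; ring
        -- value of H (insert 0 W)
        have hW0 : H (insert 0 W) = H S₀ + 1 - jj := by
          rcases Nat.eq_zero_or_pos jj with rfl | hjjpos
          · -- W has card k+e-1 : mid range
            have hWc' : W.card = k + e - 1 := by omega
            have hf := fval W h0W (by omega) (by omega)
            have hm := midval W h0W (by omega) (by omega)
            rw [hf, hm]
            have : (W.card : ℝ) = (k:ℝ) + e - 1 := by
              rw [hWc']
              have : ((k + e - 1 : ℕ) : ℝ) = (k:ℝ) + e - 1 := by
                rw [Nat.cast_sub (by omega)]; push_cast; ring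
              rw [this]
            rw [this]; push_cast; ring
          · obtain ⟨j', rfl⟩ := Nat.exists_eq_succ_of_ne_zero (by omega : jj ≠ 0)
            have hWc' : W.card = (k + e) + j' := by omega
            have hWval : H W = H S₀ + k - j' := ihj j' (by omega) (by omega) W h0W hWc'
            rw [L3 W h0W (by omega), hWval]
            push_cast; ring
        -- SSA
        have hssa1 := hssa (insert 0 Yx) (insert 0 Zy)
        have hun : insert 0 Yx ∪ insert 0 Zy = insert 0 Y := by
          ext a
          simp only [Finset.mem_union, Finset.mem_insert, hYx_def, hZy_def,
            Finset.mem_erase]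
          constructor
          · rintro ((rfl | ⟨_, h⟩) | (rfl | ⟨_, h⟩)) <;> simp [*]
          · rintro (rfl | h)
            · exact Or.inl (Or.inl rfl)
            · by_cases hax : a = x
              · subst hax
                exact Or.inr (Or.inr ⟨hxy, h⟩)
              · exact Or.inl (Or.inr ⟨hax, h⟩)
        have hint : insert 0 Yx ∩ insert 0 Zy = insert 0 W := by
          ext a
          simp only [Finset.mem_inter, Finset.mem_insert, hYx_def, hZy_def, hW_def,
            Finset.mem_erase]
          constructor
          · rintro ⟨rfl | ⟨hax, haY⟩, h2⟩
            · exact Or.inl rfl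
            · rcases h2 with rfl | ⟨hay, _⟩
              · exact Or.inl rfl
              · exact Or.inr ⟨hay, hax, haY⟩
          · rintro (rfl | ⟨hay, hax, haY⟩)
            · exact ⟨Or.inl rfl, Or.inl rfl⟩
            · exact ⟨Or.inr ⟨hax, haY⟩, Or.inr ⟨hay, haY⟩⟩
        rw [hun, hint, hYx0, hZy0, hW0] at hssa1
        -- upper bound for H Y
        have hL3Y := L3 Y h0Y (by omega)
        -- lower bound for H Y via AL
        have hALY := AL Yx {x} (by
          simp only [Finset.disjoint_singleton_right, hYx_def, Finset.mem_erase]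
          tauto)
        have hunx : Yx ∪ {x} = Y := by
          ext a
          simp only [Finset.mem_union, hYx_def, Finset.mem_erase, Finset.mem_singleton]
          constructor
          · rintro (⟨_, h⟩ | rfl)
            · exact h
            · exact hxY
          · intro h
            by_cases hax : a = x
            · exact Or.inr hax
            · exact Or.inl ⟨hax, h⟩
        rw [hunx, Hx1 x hx0, hYxval] at hALY
        push_cast
        linarith
  -- L8 : H S₀ = e
  have hS₀val : H S₀ = (e : ℝ) := by
    have hQfull : Q.card = (k + e) + e := by omega
    have h0Q : (0:Fin (n+1)) ∉ Q := notmemQ Q (le_refl _)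
    have hQval : H Q = H S₀ + k - e := L7 e (le_refl e) Q h0Q hQfull
    have hQ0 : H (insert 0 Q) = H S₀ - e := by
      rw [L3 Q h0Q (by omega), hQval]; ring
    have hALQ := AL {0} Q (by simp [Finset.disjoint_singleton_left, h0Q])
    have hunQ : ({0} : Finset (Fin (n+1))) ∪ Q = insert 0 Q := by
      rw [Finset.insert_eq]
    rw [hunQ, hR, hQ0, hQval] at hALQ
    have hub : H S₀ ≤ (e:ℝ) := by
      have := L0 S₀ h0S₀
      rw [hS₀c] at this
      exact this
    linarith
  -- key : entropy equals cardinality up to k + e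
  have key : ∀ E : Finset (Fin (n+1)), (0:Fin (n+1)) ∉ E → E.card ≤ k + e →
      H E = E.card := by
    intro E h0 hc
    rcases le_or_gt e E.card with hge | hlt
    · rw [midval E h0 hge hc, hS₀val]; ring
    · -- extend E to a (d-1)-set S
      obtain ⟨S, hES, hSQ, hScard⟩ := Finset.exists_subsuperset_card_eq (n := e - E.card + E.card)
        (memQ E h0) (by omega) (by rw [hQcard]; omega)
      have hSc : S.card = e := by omega
      have h0S : (0:Fin (n+1)) ∉ S := notmemQ S hSQ
      have hSval : H S = (e:ℝ) := by rw [HeqS₀ S h0S hSc, hS₀val]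
      have h0SE : (0:Fin (n+1)) ∉ S \ E := fun h => h0S (Finset.mem_sdiff.mp h).1
      have hdisj : Disjoint E (S \ E) := by
        refine Finset.disjoint_left.mpr ?_
        intro a haE haSE
        exact (Finset.mem_sdiff.mp haSE).2 haE
      have hun : E ∪ (S \ E) = S := by
        ext a
        simp only [Finset.mem_union, Finset.mem_sdiff]
        constructor
        · rintro (h | ⟨h, _⟩)
          · exact hES h
          · exact h
        · intro h
          by_cases hE : a ∈ E
          · exact Or.inl hE
          · exact Or.inr ⟨h, hE⟩
      have hsa := hsubadd E (S \ E) hdisj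
      rw [hun, hSval] at hsa
      have hSEcard : ((S \ E).card : ℝ) = (e:ℝ) - E.card := by
        have h := Finset.card_sdiff_of_subset hES
        rw [hSc] at h
        rw [h, Nat.cast_sub (by omega)]
      have hub1 := L0 (S \ E) h0SE
      rw [hSEcard] at hub1
      have hub2 := L0 E h0
      linarith
  -- final assembly
  intro t B hB0 hBk hBd hdisj I hIdef hIcard
  have h0I : (0:Fin (n+1)) ∉ I := by
    rw [hIdef]
    simp only [Finset.mem_biUnion]
    rintro ⟨j, -, hj⟩
    exact hB0 j hj
  have hIm : I.card ≤ k + e := by omega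
  have hHI := key I h0I hIm
  have hBsub : ∀ j, B j ⊆ I := by
    intro j
    rw [hIdef]
    exact Finset.subset_biUnion_of_mem B (Finset.mem_univ j)
  have hHB : ∀ j, H (B j) = (B j).card := by
    intro j
    exact key (B j) (hB0 j) (le_trans (Finset.card_le_card (hBsub j)) hIm)
  have hcardsum : I.card = ∑ j, (B j).card := by
    rw [hIdef]
    exact Finset.card_biUnion (fun i _ j _ hij => hdisj i j hij)
  rw [hHI, hcardsum]
  push_cast
  exact Finset.sum_congr rfl (fun j _ => (hHB j).symm)
end
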